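/- arXiv:1507.06953 — 2 statements merged into one kernel-verified Lean document; each statement's English description precedes it below -/
import Mathlib

section
/- For every permutation X ∈ S_n and every integer k ≥ 2: X avoids every simple permutation of length at least k+1 if and only if X avoids every simple permutation of length exactly k+1 and every simple permutation of length exactly k+2. -/
open scoped Classical

/-! ### Geometric BST model: point sets, satisfied sets, OPT -/

/-- `r` lies in the closed axis-parallel rectangle with corners `p` and `q`. -/
def InRect {α β : Type*} [LinearOrder α] [LinearOrder β] (p q r : α × β) : Prop :=
  min p.1 q.1 ≤ r.1 ∧ r.1 ≤ max p.1 q.1 ∧ min p.2 q.2 ≤ r.2 ∧ r.2 ≤ max p.2 q.2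

/-- A finite point set is arborally satisfied. -/
def Satisfied {α β : Type*} [LinearOrder α] [LinearOrder β] (P : Finset (α × β)) : Prop :=
  ∀ p ∈ P, ∀ q ∈ P, p.1 ≠ q.1 → p.2 ≠ q.2 → ∃ r ∈ P, r ≠ p ∧ r ≠ q ∧ InRect p q r

/-- `OPT X` : minimum cardinality of an arborally satisfied superset of `X`. -/
noncomputable def OPT {α β : Type*} [LinearOrder α] [LinearOrder β] (X : Finset (α × β)) : ℕ :=
  sInf { m | ∃ Y : Finset (α × β), X ⊆ Y ∧ Satisfied Y ∧ Y.card = m }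

/-! ### Permutations as functions on `[1..n]`, pattern containment -/

/-- `X` is a permutation of `[n] = {1, …, n}`. -/
def IsPermOn (n : ℕ) (X : ℕ → ℕ) : Prop :=
  Set.BijOn X (Set.Icc 1 n) (Set.Icc 1 n)

/-- `X ∈ S_n` contains the pattern `pat ∈ S_k`. -/
def Contains (n : ℕ) (X : ℕ → ℕ) (k : ℕ) (pat : ℕ → ℕ) : Prop :=
  ∃ f : ℕ → ℕ, Set.MapsTo f (Set.Icc 1 k) (Set.Icc 1 n) ∧
    StrictMonoOn f (Set.Icc 1 k) ∧
    ∀ i ∈ Set.Icc 1 k, ∀ j ∈ Set.Icc 1 k, (pat i < pat j ↔ X (f i) < X (f j))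

/-- `X ∈ S_n` avoids the pattern `pat ∈ S_k`. -/
def Avoids (n : ℕ) (X : ℕ → ℕ) (k : ℕ) (pat : ℕ → ℕ) : Prop := ¬ Contains n X k pat

/-- The pattern (2,3,1). -/
def pat231 : ℕ → ℕ := fun i => if i = 1 then 2 else if i = 2 then 3 else if i = 3 then 1 else i

/-- The decreasing pattern (k, k-1, …, 1). -/
def patDec (k : ℕ) : ℕ → ℕ := fun i => k + 1 - i

/-- The increasing pattern (1, 2, …, k). -/
def patInc : ℕ → ℕ := id

/-- The point set `{(X t, t) : t ∈ [n]}` of a permutation of `[n]`. -/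
def permPoints (n : ℕ) (X : ℕ → ℕ) : Finset (ℤ × ℤ) :=
  (Finset.Icc 1 n).image fun t => ((X t : ℤ), (t : ℤ))

/-! ### Binary search trees on `[n]` -/

/-- Binary trees with natural-number keys. -/
inductive BTree where
  | leaf : BTree
  | node : BTree → ℕ → BTree → BTree

def BTree.keys : BTree → Finset ℕ
  | .leaf => ∅
  | .node l k r => insert k (l.keys ∪ r.keys)

def BTree.isSearch : BTree → Prop
  | .leaf => True
  | .node l k r => (∀ y ∈ l.keys, y < k) ∧ (∀ y ∈ r.keys, k < y) ∧ l.isSearch ∧ r.isSearch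

/-- `T` is a binary search tree on `[n] = {1, …, n}`. -/
def IsBSTOn (T : BTree) (n : ℕ) : Prop := T.keys = Finset.Icc 1 n ∧ T.isSearch

/-- Depth of the node labeled `x` (root has depth 1; `0` if `x` is absent). -/
def BTree.depthOf : BTree → ℕ → ℕ
  | .leaf, _ => 0
  | .node l k r, x =>
      if x = k then 1
      else max (if l.depthOf x = 0 then 0 else l.depthOf x + 1)
               (if r.depthOf x = 0 then 0 else r.depthOf x + 1)

/-- Maximum depth of a key of `[n]` in `T`. -/
def BTree.maxDepth (T : BTree) (n : ℕ) : ℕ := (Finset.Icc 1 n).sup T.depthOf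

/-- The geometric encoding of the initial tree `T`:
the stack of points `(x, s)` for `-(d - d_T(x)) ≤ s ≤ 0`. -/
noncomputable def initialSet (T : BTree) (n : ℕ) : Finset (ℕ × ℤ) :=
  (Finset.Icc 1 n).biUnion fun x =>
    (Finset.Icc (-((T.maxDepth n : ℤ) - (T.depthOf x : ℤ))) 0).image fun s => (x, s)

/-! ### Greedy (and its one-sided variants) -/

/-- `tau S b` : last time at which element `b` is touched in the point set `S`
(defaults to `0` if `b` never occurs in `S`). -/
noncomputable def tau (S : Finset (ℕ × ℤ)) (b : ℕ) : ℤ :=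
  WithBot.unbotD 0 ((S.filter (fun p => p.1 = b)).image Prod.snd).max

/-- `tauAt G b t` : last time `≤ t` at which element `b` is touched in the point set `G`. -/
noncomputable def tauAt (G : Finset (ℕ × ℤ)) (b : ℕ) (t : ℤ) : ℤ :=
  WithBot.unbotD 0 ((G.filter (fun p => p.1 = b ∧ p.2 ≤ t)).image Prod.snd).max

/-- The closed rectangle with corners `p` and `q` contains no point of `S`
other than (possibly) `p` and `q`. -/
def RectEmpty (S : Finset (ℕ × ℤ)) (p q : ℕ × ℤ) : Prop :=
  ∀ r ∈ S, InRect p q r → r = p ∨ r = q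

/-- One step of (one-sided) Greedy: access element `a` at time `t`, starting from point set `S`.
`side a b` restricts which elements may be touched (`fun _ _ => True` for plain Greedy,
`fun a b => a < b` for GreedyRight, `fun a b => b < a` for GreedyLeft). -/
noncomputable def greedyStep (n : ℕ) (side : ℕ → ℕ → Prop) (S : Finset (ℕ × ℤ))
    (a : ℕ) (t : ℤ) : Finset (ℕ × ℤ) :=
  insert (a, t) (S ∪
    ((Finset.Icc 1 n).filter (fun b => side a b ∧
        (S.filter (fun p => p.1 = b)).Nonempty ∧
        RectEmpty S (a, t) (b, tau S b))).image (fun b => (b, t)))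

/-- The full output of (one-sided) Greedy on `X` at times `1, …, n`,
starting from the point set `init`. -/
noncomputable def greedyRun (n : ℕ) (side : ℕ → ℕ → Prop) (X : ℕ → ℕ)
    (init : Finset (ℕ × ℤ)) : Finset (ℕ × ℤ) :=
  (List.range n).foldl (fun S t => greedyStep n side S (X (t + 1)) ((t : ℤ) + 1)) init

/-- Cost of Greedy on permutation `X` of `[n]` with initial tree `T`:
the number of points of the output at times `≥ 1`. -/
noncomputable def greedyCostT (T : BTree) (n : ℕ) (X : ℕ → ℕ) : ℕ :=
  ((greedyRun n (fun _ _ => True) X (initialSet T n)).filter (fun p => 1 ≤ p.2)).card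

/-- Cost of Greedy on permutation `X` of `[n]` run without initial tree. -/
noncomputable def greedyCost (n : ℕ) (X : ℕ → ℕ) : ℕ :=
  (greedyRun n (fun _ _ => True) X ∅).card

/-- Cost of Signed Greedy on permutation `X` of `[n]` with initial tree `T`:
cardinality of the union of the GreedyLeft and GreedyRight outputs at times `≥ 1`. -/
noncomputable def sgreedyCostT (T : BTree) (n : ℕ) (X : ℕ → ℕ) : ℕ :=
  ((greedyRun n (fun a b => b < a) X (initialSet T n) ∪
      greedyRun n (fun a b => a < b) X (initialSet T n)).filter (fun p => 1 ≤ p.2)).card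

/-! ### Inverse Ackermann -/

/-- The inverse Ackermann function `α(n) = min {m : A(m,m) ≥ n}`. -/
noncomputable def invAck (n : ℕ) : ℕ := sInf { m | n ≤ ack m m }

/-! ### Blocks, simple permutations, `k`-decomposability -/

/-- `[a,b]` is a block of the permutation `X` of `[n]`:
a contiguous interval of positions mapped onto a contiguous interval of values. -/
def IsBlockOf (n : ℕ) (X : ℕ → ℕ) (a b : ℕ) : Prop :=
  1 ≤ a ∧ a ≤ b ∧ b ≤ n ∧ ∃ c : ℕ, X '' Set.Icc a b = Set.Icc c (c + (b - a))

/-- A permutation of `[l]` is simple (non-decomposable): it has no block of size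
strictly between `1` and `l`. -/
def IsSimplePerm (l : ℕ) (σ : ℕ → ℕ) : Prop :=
  ∀ a b : ℕ, IsBlockOf l σ a b → a = b ∨ (a = 1 ∧ b = l)

/-- The permutation of `[b - a + 1]` order-isomorphic to the restriction of `X`
to the block `[a, b]`. -/
noncomputable def blockRestrict (X : ℕ → ℕ) (a b : ℕ) : ℕ → ℕ :=
  fun j => X (a + j - 1) + 1 - sInf (X '' Set.Icc a b)

/-- `X ∈ S_n` is `k`-decomposable: `n = 1`, or `[n]` can be partitioned into at least 2
and at most `k` consecutive intervals, each a block of `X`, such that the permutation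
order-isomorphic to the restriction of `X` to each block is again `k`-decomposable. -/
inductive KDecomposable (k : ℕ) : ℕ → (ℕ → ℕ) → Prop where
  | base : ∀ X : ℕ → ℕ, KDecomposable k 1 X
  | step : ∀ (n : ℕ) (X : ℕ → ℕ) (m : ℕ) (c : ℕ → ℕ),
      2 ≤ m → m ≤ k → c 0 = 1 → c m = n + 1 →
      (∀ i < m, c i < c (i + 1)) →
      (∀ i < m, IsBlockOf n X (c i) (c (i + 1) - 1)) →
      (∀ i < m, KDecomposable k (c (i + 1) - c i) (blockRestrict X (c i) (c (i + 1) - 1))) →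
      KDecomposable k n X

namespace STCore

abbrev Pt := ℤ × ℤ

/-- Strictly between (symmetric in the outer arguments). -/
def Btw (x m y : ℤ) : Prop := (x < m ∧ m < y) ∨ (y < m ∧ m < x)

lemma btw_symm {x m y : ℤ} (h : Btw x m y) : Btw y m x := by
  rcases h with h | h
  · exact Or.inr h
  · exact Or.inl h

/-- `q` is strictly inside the `f`-span of `B`. -/
def Straddles (f : Pt → ℤ) (B : Finset Pt) (q : Pt) : Prop :=
  ∃ p ∈ B, ∃ p' ∈ B, f p < f q ∧ f q < f p'

/-- `B` is a (common-interval) block of the point set `P`. -/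
def CBlock (P B : Finset Pt) : Prop :=
  B ⊆ P ∧ ∀ q ∈ P, q ∉ B →
    ¬ Straddles Prod.fst B q ∧ ¬ Straddles Prod.snd B q

/-- simple point set: no proper block of size ≥ 2. -/
def CSimple (P : Finset Pt) : Prop :=
  ∀ B : Finset Pt, CBlock P B → B.card ≤ 1 ∨ B = P

/-- generic: all first coordinates distinct, all second coordinates distinct. -/
def CGen (P : Finset Pt) : Prop :=
  ∀ p ∈ P, ∀ q ∈ P, p ≠ q → p.1 ≠ q.1 ∧ p.2 ≠ q.2

lemma CGen.mono {P S : Finset Pt} (h : CGen P) (hs : S ⊆ P) : CGen S :=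
  fun p hp q hq hpq => h p (hs hp) q (hs hq) hpq

lemma CBlock.inter {A B C : Finset Pt} (h : CBlock A B) (hC : C ⊆ A) :
    CBlock C (B ∩ C) := by
  refine ⟨Finset.inter_subset_right, ?_⟩
  intro q hq hqn
  have hqB : q ∉ B := fun hqB => hqn (Finset.mem_inter.2 ⟨hqB, hq⟩)
  have := h.2 q (hC hq) hqB
  constructor
  · rintro ⟨p, hp, p', hp', h1, h2⟩
    exact this.1 ⟨p, (Finset.mem_inter.1 hp).1, p', (Finset.mem_inter.1 hp').1, h1, h2⟩
  · rintro ⟨p, hp, p', hp', h1, h2⟩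
    exact this.2 ⟨p, (Finset.mem_inter.1 hp).1, p', (Finset.mem_inter.1 hp').1, h1, h2⟩

/-- For a pair set, straddling is `Btw`. -/
lemma straddles_pair {f : Pt → ℤ} {x y q : Pt} :
    Straddles f {x, y} q ↔ Btw (f x) (f q) (f y) := by
  constructor
  · rintro ⟨p, hp, p', hp', h1, h2⟩
    simp only [Finset.mem_insert, Finset.mem_singleton] at hp hp'
    rcases hp with rfl | rfl <;> rcases hp' with rfl | rfl <;>
      first
        | exact absurd (lt_trans h1 h2) (lt_irrefl _)
        | exact Or.inl ⟨h1, h2⟩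
        | exact Or.inr ⟨h1, h2⟩
  · rintro (⟨h1, h2⟩ | ⟨h1, h2⟩)
    · exact ⟨x, by simp, y, by simp, h1, h2⟩
    · exact ⟨y, by simp, x, by simp, h1, h2⟩

/-- If `q` does not straddle a nonempty `B` in coordinate `f`,
then `q` is on one side of all of `B` (given the coordinates differ). -/
lemma not_straddles_cases {f : Pt → ℤ} {B : Finset Pt} {q : Pt}
    (hne : B.Nonempty) (hdist : ∀ b ∈ B, f b ≠ f q)
    (h : ¬ Straddles f B q) :
    (∀ b ∈ B, f q < f b) ∨ (∀ b ∈ B, f b < f q) := by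
  by_contra hc
  push_neg at hc
  obtain ⟨⟨b1, hb1, hb1'⟩, ⟨b2, hb2, hb2'⟩⟩ := hc
  have h1 : f b1 < f q := lt_of_le_of_ne hb1' (hdist b1 hb1)
  have h2 : f q < f b2 := lt_of_le_of_ne (hb2') (Ne.symm (hdist b2 hb2))
  exact h ⟨b1, hb1, b2, hb2, h1, h2⟩

/-- No point of a simple set with ≥ 3 points is extreme in both coordinates. -/
lemma corner_free {S : Finset Pt} (hS : CSimple S) (h3 : 3 ≤ S.card) {p : Pt}
    (hp : p ∈ S)
    (hx : (∀ s ∈ S, s ≠ p → p.1 < s.1) ∨ (∀ s ∈ S, s ≠ p → s.1 < p.1))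
    (hy : (∀ s ∈ S, s ≠ p → p.2 < s.2) ∨ (∀ s ∈ S, s ≠ p → s.2 < p.2)) :
    False := by
  have hblock : CBlock S (S.erase p) := by
    refine ⟨Finset.erase_subset _ _, ?_⟩
    intro q hq hqn
    have hqp : q = p := by
      by_contra hne
      exact hqn (Finset.mem_erase.2 ⟨hne, hq⟩)
    subst hqp
    constructor
    · rintro ⟨r, hr, r', hr', h1, h2⟩
      have hr1 := Finset.mem_erase.1 hr
      have hr2 := Finset.mem_erase.1 hr'
      rcases hx with hx | hx
      · exact absurd (hx r hr1.2 hr1.1) (by omega)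
      · exact absurd (hx r' hr2.2 hr2.1) (by omega)
    · rintro ⟨r, hr, r', hr', h1, h2⟩
      have hr1 := Finset.mem_erase.1 hr
      have hr2 := Finset.mem_erase.1 hr'
      rcases hy with hy | hy
      · exact absurd (hy r hr1.2 hr1.1) (by omega)
      · exact absurd (hy r' hr2.2 hr2.1) (by omega)
  rcases hS _ hblock with h | h
  · have := Finset.card_erase_of_mem hp
    omega
  · have : p ∉ S.erase p := Finset.notMem_erase _ _
    rw [h] at this
    exact this hp

/-- abstract-coordinate pair assumption -/
def ABPair (a b : Pt → ℤ) : Prop :=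
  (a = Prod.fst ∧ b = Prod.snd) ∨ (a = Prod.snd ∧ b = Prod.fst)

lemma free_ab {a b : Pt → ℤ} (hab : ABPair a b) {P B : Finset Pt} {q : Pt}
    (hB : CBlock P B) (hq : q ∈ P) (hqn : q ∉ B) :
    ¬ Straddles a B q ∧ ¬ Straddles b B q := by
  rcases hab with ⟨rfl, rfl⟩ | ⟨rfl, rfl⟩
  · exact hB.2 q hq hqn
  · exact (hB.2 q hq hqn).symm

lemma cblock_of_ab {a b : Pt → ℤ} (hab : ABPair a b) {P B : Finset Pt}
    (hsub : B ⊆ P)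
    (h : ∀ q ∈ P, q ∉ B → ¬ Straddles a B q ∧ ¬ Straddles b B q) :
    CBlock P B := by
  rcases hab with ⟨rfl, rfl⟩ | ⟨rfl, rfl⟩
  · exact ⟨hsub, h⟩
  · exact ⟨hsub, fun q hq hqn => (h q hq hqn).symm⟩

lemma gen_ab {a b : Pt → ℤ} (hab : ABPair a b) {P : Finset Pt} (h : CGen P)
    {p q : Pt} (hp : p ∈ P) (hq : q ∈ P) (hpq : p ≠ q) : a p ≠ a q ∧ b p ≠ b q := by
  rcases hab with ⟨rfl, rfl⟩ | ⟨rfl, rfl⟩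
  · exact h p hp q hq hpq
  · exact (h p hp q hq hpq).symm

lemma straddles_of_btw {f : Pt → ℤ} {B : Finset Pt} {x y q : Pt}
    (hx : x ∈ B) (hy : y ∈ B) (h : Btw (f x) (f q) (f y)) : Straddles f B q := by
  rcases h with ⟨h1, h2⟩ | ⟨h1, h2⟩
  · exact ⟨x, hx, y, hy, h1, h2⟩
  · exact ⟨y, hy, x, hx, h1, h2⟩

lemma not_btw_of_not_straddles {f : Pt → ℤ} {B : Finset Pt} {x y q : Pt}
    (hx : x ∈ B) (hy : y ∈ B) (h : ¬ Straddles f B q) : ¬ Btw (f x) (f q) (f y) :=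
  fun hb => h (straddles_of_btw hx hy hb)


lemma arith1 {aw ay au av : ℤ} (F1 : ¬ Btw aw ay av) (F2 : ¬ Btw aw au av)
    (F3 : ¬ Btw ay aw au) (H2 : Btw ay av au)
    (hd2 : aw ≠ ay) (hd3 : aw ≠ au) (hd4 : aw ≠ av) : False := by
  unfold Btw at F1 F2 F3 H2; omega

lemma arith2 {aw as ay au : ℤ} (F : ¬ Btw aw as au) (G : ¬ Btw ay as au)
    (hd : as ≠ au) : ¬ Btw aw as ay := by
  unfold Btw at F G ⊢; omega

/-- The key two-point extension lemma. -/
lemma c2sym {a b : Pt → ℤ} (hab : ABPair a b)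
    {S : Finset Pt} {u v y : Pt}
    (hgen : CGen (insert u (insert v S)))
    (hS : CSimple S) (hS3 : 3 ≤ S.card)
    (hu : u ∉ S) (hv : v ∉ S) (huv : u ≠ v) (hy : y ∈ S)
    (h1a : ∀ s ∈ S, ¬ Btw (a y) (a s) (a u))
    (h1b : ∀ s ∈ S, ¬ Btw (b y) (b s) (b u))
    (h2 : Btw (a y) (a v) (a u))
    (h3 : ∃ s ∈ S, Btw (b v) (b s) (b u) ∧ Btw (b v) (b s) (b y))
    (h4 : (∃ s ∈ S, ∃ t ∈ S, a s < a u ∧ a u < a t) ∨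
          (∃ s ∈ S, ∃ t ∈ S, b s < b u ∧ b u < b t)) :
    CSimple (insert u (insert v S)) := by
  set S' : Finset Pt := insert u (insert v S) with hS'def
  have hsub : S ⊆ S' := fun x hx => by simp [hS'def, hx]
  have huS' : u ∈ S' := by simp [hS'def]
  have hvS' : v ∈ S' := by simp [hS'def]
  have hyS' : y ∈ S' := hsub hy
  intro B hB
  by_contra hcon
  push_neg at hcon
  obtain ⟨hcard2, hBne⟩ := hcon
  have hcard2 : 2 ≤ B.card := by omega
  have hBsub : B ⊆ S' := hB.1
  -- the intersection with S is a block of S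
  have hBS : CBlock S (B ∩ S) := by
    have : CBlock S' B := hB
    exact ⟨Finset.inter_subset_right, fun q hq hqn => by
      have hqB : q ∉ B := fun hqB => hqn (Finset.mem_inter.2 ⟨hqB, hq⟩)
      have := hB.2 q (hsub hq) hqB
      exact ⟨fun ⟨p, hp, p', hp', h1', h2'⟩ =>
          this.1 ⟨p, (Finset.mem_inter.1 hp).1, p', (Finset.mem_inter.1 hp').1, h1', h2'⟩,
        fun ⟨p, hp, p', hp', h1', h2'⟩ =>
          this.2 ⟨p, (Finset.mem_inter.1 hp).1, p', (Finset.mem_inter.1 hp').1, h1', h2'⟩⟩⟩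
  rcases hS _ hBS with hsmall | hfull
  case inr =>
    -- B ⊇ S
    have hSB : S ⊆ B := by
      intro s hs
      have : s ∈ B ∩ S := by rw [hfull]; exact hs
      exact (Finset.mem_inter.1 this).1
    by_cases hu' : u ∈ B
    · by_cases hv' : v ∈ B
      · -- B = S'
        apply hBne
        apply Finset.Subset.antisymm hBsub
        intro x hx
        simp only [hS'def, Finset.mem_insert] at hx
        rcases hx with rfl | rfl | hx
        · exact hu'
        · exact hv'
        · exact hSB hx
      · -- v ∉ B : v straddles via h2
        have hfree := free_ab hab hB hvS' hv'
        exact (not_btw_of_not_straddles (hSB hy) hu' hfree.1) h2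
    · -- u ∉ B : u straddles via h4
      have hfree := free_ab hab hB huS' hu'
      rcases h4 with ⟨s, hs, t, ht, h1', h2'⟩ | ⟨s, hs, t, ht, h1', h2'⟩
      · exact hfree.1 ⟨s, hSB hs, t, hSB ht, h1', h2'⟩
      · exact hfree.2 ⟨s, hSB hs, t, hSB ht, h1', h2'⟩
  case inl =>
    -- |B ∩ S| ≤ 1
    have hBSsub : ∀ s ∈ S, s ∈ B → ∀ t ∈ S, t ∈ B → s = t := by
      intro s hs hsB t ht htB
      have h1' : s ∈ B ∩ S := Finset.mem_inter.2 ⟨hsB, hs⟩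
      have h2' : t ∈ B ∩ S := Finset.mem_inter.2 ⟨htB, ht⟩
      exact Finset.card_le_one.1 hsmall s h1' t h2'
    obtain ⟨sw, hsw⟩ := h3
    obtain ⟨hswS, hsw1, hsw2⟩ := hsw
    have hswy : sw ≠ y := by
      rcases hsw2 with ⟨_, h⟩ | ⟨h, _⟩ <;> exact fun he => by rw [he] at h; omega
    by_cases hu' : u ∈ B
    · -- u ∈ B
      rcases (B ∩ S).eq_empty_or_nonempty with hBSe | ⟨w, hw⟩
      · -- B ∩ S = ∅
        by_cases hv' : v ∈ B
        · -- B = {u, v}; sw straddles in coordinate b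
          have hswB : sw ∉ B := by
            intro hc
            have : sw ∈ B ∩ S := Finset.mem_inter.2 ⟨hc, hswS⟩
            simp [hBSe] at this
          have hfree := free_ab hab hB (hsub hswS) hswB
          exact (not_btw_of_not_straddles hv' hu' hfree.2) hsw1
        · -- B ⊆ {u}, card ≤ 1
          have : B ⊆ {u} := by
            intro x hx
            have hxS' := hBsub hx
            simp only [hS'def, Finset.mem_insert] at hxS'
            rcases hxS' with rfl | rfl | hxS
            · simp
            · exact absurd hx hv'
            · exact absurd (Finset.mem_inter.2 ⟨hx, hxS⟩) (by simp [hBSe])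
          have := Finset.card_le_card this
          simp at this; omega
      · -- B ∩ S = {w}
        have hwB : w ∈ B := (Finset.mem_inter.1 hw).1
        have hwS : w ∈ S := (Finset.mem_inter.1 hw).2
        by_cases hwy : w = y
        · subst hwy
          by_cases hv' : v ∈ B
          · -- sw straddles (b v, b sw, b u)
            have hswB : sw ∉ B := by
              intro hc
              exact hswy (hBSsub sw hswS hc w hwS hwB)
            have hfree := free_ab hab hB (hsub hswS) hswB
            exact (not_btw_of_not_straddles hv' hu' hfree.2) hsw1
          · -- v straddles (a w=y, a v, a u)
            have hfree := free_ab hab hB hvS' hv'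
            exact (not_btw_of_not_straddles hwB hu' hfree.1) h2
        · -- w ≠ y : derive that {w, y} is a block of S, contradiction
          have hblock : CBlock S ({w, y} : Finset Pt) := by
            apply cblock_of_ab hab
            · intro x hx
              simp only [Finset.mem_insert, Finset.mem_singleton] at hx
              rcases hx with rfl | rfl
              exacts [hwS, hy]
            · intro s hs hsn
              simp only [Finset.mem_insert, Finset.mem_singleton] at hsn
              push_neg at hsn
              have hsB : s ∉ B := by
                intro hc
                exact hsn.1 (hBSsub s hs hc w hwS hwB)
              have hfree := free_ab hab hB (hsub hs) hsB
              have fa : ¬ Btw (a w) (a s) (a u) :=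
                not_btw_of_not_straddles hwB hu' hfree.1
              have fb : ¬ Btw (b w) (b s) (b u) :=
                not_btw_of_not_straddles hwB hu' hfree.2
              have ga := h1a s hs
              have gb := h1b s hs
              have hsu : s ≠ u := fun he => hu (he ▸ hs)
              have hda : a s ≠ a u := (gen_ab hab hgen (hsub hs) huS' hsu).1
              have hdb : b s ≠ b u := (gen_ab hab hgen (hsub hs) huS' hsu).2
              constructor
              · rw [straddles_pair]
                exact arith2 fa ga hda
              · rw [straddles_pair]
                exact arith2 fb gb hdb
          rcases hS _ hblock with hc | hc
          · have : ({w, y} : Finset Pt).card = 2 := Finset.card_pair hwy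
            omega
          · have : ({w, y} : Finset Pt).card = 2 := Finset.card_pair hwy
            rw [hc] at this; omega
    · -- u ∉ B
      by_cases hv' : v ∈ B
      · rcases (B ∩ S).eq_empty_or_nonempty with hBSe | ⟨w, hw⟩
        · have : B ⊆ {v} := by
            intro x hx
            have hxS' := hBsub hx
            simp only [hS'def, Finset.mem_insert] at hxS'
            rcases hxS' with rfl | rfl | hxS
            · exact absurd hx hu'
            · simp
            · exact absurd (Finset.mem_inter.2 ⟨hx, hxS⟩) (by simp [hBSe])
          have := Finset.card_le_card this
          simp at this; omega
        · have hwB : w ∈ B := (Finset.mem_inter.1 hw).1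
          have hwS : w ∈ S := (Finset.mem_inter.1 hw).2
          by_cases hwy : w = y
          · subst hwy
            have hswB : sw ∉ B := by
              intro hc
              exact hswy (hBSsub sw hswS hc w hwS hwB)
            have hfree := free_ab hab hB (hsub hswS) hswB
            exact (not_btw_of_not_straddles hv' hwB hfree.2) hsw2
          · -- B ∋ w, v ; u, y ∉ B : arithmetic contradiction in coordinate a
            have hyB : y ∉ B := by
              intro hc
              exact hwy (hBSsub w hwS hwB y hy hc)
            have hfy := free_ab hab hB hyS' hyB
            have hfu := free_ab hab hB huS' hu'
            have F1 : ¬ Btw (a w) (a y) (a v) :=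
              not_btw_of_not_straddles hwB hv' hfy.1
            have F2 : ¬ Btw (a w) (a u) (a v) :=
              not_btw_of_not_straddles hwB hv' hfu.1
            have F3 : ¬ Btw (a y) (a w) (a u) := h1a w hwS
            have hd2 : a w ≠ a y := (gen_ab hab hgen (hsub hwS) hyS' hwy).1
            have hd3 : a w ≠ a u := (gen_ab hab hgen (hsub hwS) huS' (by
              intro he; rw [he] at hwS; exact hu hwS)).1
            have hd4 : a w ≠ a v := (gen_ab hab hgen (hsub hwS) hvS' (by
              intro he; rw [he] at hwS; exact hv hwS)).1
            exact arith1 F1 F2 F3 h2 hd2 hd3 hd4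
      · -- u ∉ B, v ∉ B : B ⊆ B ∩ S, card ≤ 1
        have : B ⊆ B ∩ S := by
          intro x hx
          have hxS' := hBsub hx
          simp only [hS'def, Finset.mem_insert] at hxS'
          rcases hxS' with rfl | rfl | hxS
          · exact absurd hx hu'
          · exact absurd hx hv'
          · exact Finset.mem_inter.2 ⟨hx, hxS⟩
        have := Finset.card_le_card this
        omega

lemma corner_free_ab {a b : Pt → ℤ} (hab : ABPair a b)
    {S : Finset Pt} (hS : CSimple S) (h3 : 3 ≤ S.card) {p : Pt} (hp : p ∈ S)
    (hax : (∀ s ∈ S, s ≠ p → a p < a s) ∨ (∀ s ∈ S, s ≠ p → a s < a p))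
    (hbx : (∀ s ∈ S, s ≠ p → b p < b s) ∨ (∀ s ∈ S, s ≠ p → b s < b p)) :
    False := by
  rcases hab with ⟨rfl, rfl⟩ | ⟨rfl, rfl⟩
  · exact corner_free hS h3 hp hax hbx
  · exact corner_free hS h3 hp hbx hax

/-- If `y₀` is `a`-extreme in a simple `S` with ≥ 3 points, then it is not
`b`-extreme: there are points of `S` on both `b`-sides. -/
lemma bpair_of_aextreme {a b : Pt → ℤ} (hab : ABPair a b)
    {S : Finset Pt} (hS : CSimple S) (h3 : 3 ≤ S.card) (hgenS : CGen S)
    {y₀ : Pt} (hy₀ : y₀ ∈ S)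
    (hext : (∀ s ∈ S, s ≠ y₀ → a y₀ < a s) ∨ (∀ s ∈ S, s ≠ y₀ → a s < a y₀)) :
    (∃ s ∈ S, b s < b y₀) ∧ (∃ s ∈ S, b y₀ < b s) := by
  constructor
  · by_contra hc
    push_neg at hc
    have : ∀ s ∈ S, s ≠ y₀ → b y₀ < b s := by
      intro s hs hsne
      have h1 := hc s hs
      have h2 : b s ≠ b y₀ := (gen_ab hab hgenS hs hy₀ hsne).2
      omega
    exact corner_free_ab hab hS h3 hy₀ hext (Or.inl this)
  · by_contra hc
    push_neg at hc
    have : ∀ s ∈ S, s ≠ y₀ → b s < b y₀ := by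
      intro s hs hsne
      have h1 := hc s hs
      have h2 : b s ≠ b y₀ := (gen_ab hab hgenS hs hy₀ hsne).2
      omega
    exact corner_free_ab hab hS h3 hy₀ hext (Or.inr this)

/-- A "clone" point `m` of `y₀` slices the simple set `S` in some coordinate. -/
lemma slices_of_clone {a b : Pt → ℤ} (hab : ABPair a b)
    {S : Finset Pt} (hS : CSimple S) (h3 : 3 ≤ S.card) (hgenS : CGen S)
    {y₀ m : Pt} (hy₀ : y₀ ∈ S) (hm : m ∉ S)
    (hgenm : CGen (insert m S))
    (hfa : ∀ s ∈ S, ¬ Btw (a y₀) (a s) (a m))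
    (hfb : ∀ s ∈ S, ¬ Btw (b y₀) (b s) (b m)) :
    (∃ s ∈ S, ∃ t ∈ S, a s < a m ∧ a m < a t) ∨
    (∃ s ∈ S, ∃ t ∈ S, b s < b m ∧ b m < b t) := by
  have hSsub : S ⊆ insert m S := Finset.subset_insert _ _
  have hmm : m ∈ insert m S := Finset.mem_insert_self _ _
  have hmy : m ≠ y₀ := fun he => hm (he ▸ hy₀)
  have hdmy : a m ≠ a y₀ ∧ b m ≠ b y₀ :=
    gen_ab hab hgenm hmm (hSsub hy₀) hmy
  -- helper: if y₀ is a-extreme then m slices in b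
  have core : ((∀ s ∈ S, s ≠ y₀ → a y₀ < a s) ∨ (∀ s ∈ S, s ≠ y₀ → a s < a y₀)) →
      ∃ s ∈ S, ∃ t ∈ S, b s < b m ∧ b m < b t := by
    intro hext
    obtain ⟨⟨slo, hslo, hslo'⟩, ⟨shi, hshi, hshi'⟩⟩ :=
      bpair_of_aextreme hab hS h3 hgenS hy₀ hext
    rcases lt_or_gt_of_ne hdmy.2 with hbm | hbm
    · -- b m < b y₀ : then b slo < b m (else Btw) and b m < b y₀ < b shi
      have hds : b slo ≠ b m := by
        have : slo ≠ m := fun he => hm (he ▸ hslo)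
        exact (gen_ab hab hgenm (hSsub hslo) hmm this).2
      have : b slo < b m := by
        have := hfb slo hslo
        unfold Btw at this; omega
      exact ⟨slo, hslo, shi, hshi, this, by omega⟩
    · -- b y₀ < b m
      have hds : b shi ≠ b m := by
        have : shi ≠ m := fun he => hm (he ▸ hshi)
        exact (gen_ab hab hgenm (hSsub hshi) hmm this).2
      have : b m < b shi := by
        have := hfb shi hshi
        unfold Btw at this; omega
      exact ⟨slo, hslo, shi, hshi, by omega, this⟩
  rcases lt_or_gt_of_ne hdmy.1 with ham | ham
  · -- a m < a y₀
    by_cases hex : ∃ t ∈ S, a t < a m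
    · obtain ⟨t, ht, ht'⟩ := hex
      exact Or.inl ⟨t, ht, y₀, hy₀, ht', ham⟩
    · push_neg at hex
      refine Or.inr (core (Or.inl ?_))
      intro s hs hsne
      have h1 := hex s hs
      have h2 := hfa s hs
      have hds : a s ≠ a m := by
        have : s ≠ m := fun he => hm (he ▸ hs)
        exact (gen_ab hab hgenm (hSsub hs) hmm this).1
      have hds2 : a s ≠ a y₀ := (gen_ab hab hgenS hs hy₀ hsne).1
      unfold Btw at h2; omega
  · -- a y₀ < a m
    by_cases hex : ∃ t ∈ S, a m < a t
    · obtain ⟨t, ht, ht'⟩ := hex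
      exact Or.inl ⟨y₀, hy₀, t, ht, ham, ht'⟩
    · push_neg at hex
      refine Or.inr (core (Or.inr ?_))
      intro s hs hsne
      have h1 := hex s hs
      have h2 := hfa s hs
      have hds : a s ≠ a m := by
        have : s ≠ m := fun he => hm (he ▸ hs)
        exact (gen_ab hab hgenm (hSsub hs) hmm this).1
      have hds2 : a s ≠ a y₀ := (gen_ab hab hgenS hs hy₀ hsne).1
      unfold Btw at h2; omega

lemma arith3 {x s z m : ℤ} (h : Btw x s z) (h2 : ¬ Btw x s m) (hd : s ≠ m) :
    Btw z s m := by
  unfold Btw at h h2 ⊢; omega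

/-- From a failed one-point extension, extract a clone pair. -/
lemma clone_step {S : Finset Pt} {u₀ : Pt} (hS : CSimple S) (hu0 : u₀ ∉ S)
    (hslice : Straddles Prod.fst S u₀ ∨ Straddles Prod.snd S u₀)
    (hns : ¬ CSimple (insert u₀ S)) :
    ∃ y₀ ∈ S, ∀ s ∈ S, ¬ Btw y₀.1 s.1 u₀.1 ∧ ¬ Btw y₀.2 s.2 u₀.2 := by
  unfold CSimple at hns
  push_neg at hns
  obtain ⟨B, hB, hBcard, hBne⟩ := hns
  have hBcard : 2 ≤ B.card := by omega
  have hsub : S ⊆ insert u₀ S := Finset.subset_insert _ _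
  have hBS : CBlock S (B ∩ S) := by
    refine ⟨Finset.inter_subset_right, fun q hq hqn => ?_⟩
    have hqB : q ∉ B := fun hqB => hqn (Finset.mem_inter.2 ⟨hqB, hq⟩)
    have := hB.2 q (hsub hq) hqB
    exact ⟨fun ⟨p, hp, p', hp', h1', h2'⟩ =>
        this.1 ⟨p, (Finset.mem_inter.1 hp).1, p', (Finset.mem_inter.1 hp').1, h1', h2'⟩,
      fun ⟨p, hp, p', hp', h1', h2'⟩ =>
        this.2 ⟨p, (Finset.mem_inter.1 hp).1, p', (Finset.mem_inter.1 hp').1, h1', h2'⟩⟩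
  rcases hS _ hBS with hsmall | hfull
  · -- B ∩ S small
    have hu₀B : u₀ ∈ B := by
      by_contra hc
      have : B ⊆ B ∩ S := by
        intro x hx
        have := hB.1 hx
        rcases Finset.mem_insert.1 this with rfl | hxS
        · exact absurd hx hc
        · exact Finset.mem_inter.2 ⟨hx, hxS⟩
      have := Finset.card_le_card this
      omega
    obtain ⟨y₀, hy₀⟩ : (B ∩ S).Nonempty := by
      rcases (B ∩ S).eq_empty_or_nonempty with he | h
      · exfalso
        have : B ⊆ {u₀} := by
          intro x hx
          have := hB.1 hx
          rcases Finset.mem_insert.1 this with rfl | hxS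
          · simp
          · exact absurd (Finset.mem_inter.2 ⟨hx, hxS⟩) (by simp [he])
        have := Finset.card_le_card this
        simp at this; omega
      · exact h
    have hy₀B : y₀ ∈ B := (Finset.mem_inter.1 hy₀).1
    have hy₀S : y₀ ∈ S := (Finset.mem_inter.1 hy₀).2
    refine ⟨y₀, hy₀S, fun s hs => ?_⟩
    by_cases hsy : s = y₀
    · subst hsy
      constructor <;> (intro h; unfold Btw at h; omega)
    · have hsB : s ∉ B := by
        intro hc
        exact hsy (Finset.card_le_one.1 hsmall s (Finset.mem_inter.2 ⟨hc, hs⟩)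
          y₀ hy₀)
      have hfree := hB.2 s (hsub hs) hsB
      exact ⟨not_btw_of_not_straddles hy₀B hu₀B hfree.1,
        not_btw_of_not_straddles hy₀B hu₀B hfree.2⟩
  · -- B ∩ S = S : B = S, contradiction with slicing
    exfalso
    have hSB : S ⊆ B := fun s hs => by
      have : s ∈ B ∩ S := by rw [hfull]; exact hs
      exact (Finset.mem_inter.1 this).1
    have hu₀B : u₀ ∉ B := by
      intro hc
      apply hBne
      apply Finset.Subset.antisymm hB.1
      intro x hx
      rcases Finset.mem_insert.1 hx with rfl | hxS
      · exact hc
      · exact hSB hxS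
    have hfree := hB.2 u₀ (Finset.mem_insert_self _ _) hu₀B
    rcases hslice with ⟨p, hp, p', hp', h1', h2'⟩ | ⟨p, hp, p', hp', h1', h2'⟩
    · exact hfree.1 ⟨p, hSB hp, p', hSB hp', h1', h2'⟩
    · exact hfree.2 ⟨p, hSB hp, p', hSB hp', h1', h2'⟩

/-- Main auxiliary: the rescue construction. -/
lemma growPairAux {a b : Pt → ℤ} (hab : ABPair a b)
    {P S M : Finset Pt} {y₀ z : Pt}
    (hgen : CGen P) (hS : CSimple S) (h3 : 3 ≤ S.card) (hSP : S ⊆ P)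
    (hy₀ : y₀ ∈ S)
    (hMsub : M ⊆ P)
    (hMmem : ∀ m ∈ M, m = y₀ ∨ (m ∉ S ∧ ∀ s ∈ S,
        ¬ Btw (a y₀) (a s) (a m) ∧ ¬ Btw (b y₀) (b s) (b m)))
    (hzP : z ∈ P) (hzy : z ≠ y₀)
    (hzbad : z ∈ S ∨ ∃ s ∈ S, Btw (a y₀) (a s) (a z) ∨ Btw (b y₀) (b s) (b z))
    (hstr : Straddles a M z) :
    ∃ u ∈ P, ∃ v ∈ P, u ∉ S ∧ v ∉ S ∧ u ≠ v ∧
      CSimple (insert u (insert v S)) := by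
  obtain ⟨m1, hm1M, m2, hm2M, hl1, hl2⟩ := hstr
  have hdz : a z ≠ a y₀ := (gen_ab hab hgen hzP (hSP hy₀) hzy).1
  -- a point of M whose a-coordinate is strictly between a y₀ and a x is impossible for x ∈ S ∪ bad witnesses:
  have hMno : ∀ x : Pt, x ∈ S → ¬ Btw (a y₀) (a x) (a z) := by
    intro x hx hbtw
    rcases lt_or_gt_of_ne hdz with hc | hc
    · -- a z < a y₀ : use m1
      have h1 : a z < a x ∧ a x < a y₀ := by unfold Btw at hbtw; omega
      have hm1y : m1 ≠ y₀ := by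
        intro he; rw [he] at hl1; omega
      rcases hMmem m1 hm1M with he | ⟨_, hf⟩
      · exact hm1y he
      · have := (hf x hx).1
        unfold Btw at this; omega
    · -- a y₀ < a z : use m2
      have h1 : a y₀ < a x ∧ a x < a z := by unfold Btw at hbtw; omega
      have hm2y : m2 ≠ y₀ := by
        intro he; rw [he] at hl2; omega
      rcases hMmem m2 hm2M with he | ⟨_, hf⟩
      · exact hm2y he
      · have := (hf x hx).1
        unfold Btw at this; omega
  have hzS : z ∉ S := by
    intro hzS
    -- then z itself would violate membership of m1 / m2
    rcases lt_or_gt_of_ne hdz with hc | hc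
    · have hm1y : m1 ≠ y₀ := by intro he; rw [he] at hl1; omega
      rcases hMmem m1 hm1M with he | ⟨_, hf⟩
      · exact hm1y he
      · have := (hf z hzS).1
        unfold Btw at this; omega
    · have hm2y : m2 ≠ y₀ := by intro he; rw [he] at hl2; omega
      rcases hMmem m2 hm2M with he | ⟨_, hf⟩
      · exact hm2y he
      · have := (hf z hzS).1
        unfold Btw at this; omega
  obtain ⟨sw, hswS, hsww⟩ := hzbad.resolve_left hzS
  have hbs : Btw (b y₀) (b sw) (b z) := by
    rcases hsww with h | h
    · exact absurd h (hMno sw hswS)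
    · exact h
  -- choose m on the far side of z from y₀
  obtain ⟨m, hmM, hmz⟩ : ∃ m ∈ M, Btw (a y₀) (a z) (a m) := by
    rcases lt_or_gt_of_ne hdz with hc | hc
    · exact ⟨m1, hm1M, Or.inr ⟨hl1, hc⟩⟩
    · exact ⟨m2, hm2M, Or.inl ⟨hc, hl2⟩⟩
  have hmy : m ≠ y₀ := by
    intro he; rw [he] at hmz; unfold Btw at hmz; omega
  obtain ⟨hmS, hmf⟩ := (hMmem m hmM).resolve_left hmy
  have hmP : m ∈ P := hMsub hmM
  have hmzne : m ≠ z := by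
    intro he; rw [he] at hmz; unfold Btw at hmz; omega
  have hgenS : CGen S := hgen.mono hSP
  have hgenmz : CGen (insert m (insert z S)) := by
    apply hgen.mono
    intro x hx
    rcases Finset.mem_insert.1 hx with rfl | hx
    · exact hmP
    · rcases Finset.mem_insert.1 hx with rfl | hx
      · exact hzP
      · exact hSP hx
  have hgenm : CGen (insert m S) := by
    apply hgenmz.mono
    intro x hx
    rcases Finset.mem_insert.1 hx with rfl | hx
    · exact Finset.mem_insert_self _ _
    · exact Finset.mem_insert_of_mem (Finset.mem_insert_of_mem hx)
  -- h3 for c2sym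
  have hswm : sw ≠ m := fun he => hmS (he ▸ hswS)
  have hdsm : b sw ≠ b m :=
    (gen_ab hab hgenm (Finset.mem_insert_of_mem hswS)
      (Finset.mem_insert_self _ _) hswm).2
  have hc3 : ∃ s ∈ S, Btw (b z) (b s) (b m) ∧ Btw (b z) (b s) (b y₀) := by
    refine ⟨sw, hswS, ?_, btw_symm hbs⟩
    exact arith3 hbs ((hmf sw hswS).2) hdsm
  have hc4 := slices_of_clone hab hS h3 hgenS hy₀ hmS hgenm
      (fun s hs => (hmf s hs).1) (fun s hs => (hmf s hs).2)
  have := c2sym hab hgenmz hS h3 hmS hzS hmzne hy₀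
      (fun s hs => (hmf s hs).1) (fun s hs => (hmf s hs).2)
      hmz hc3 hc4
  exact ⟨m, hmP, z, hzP, hmS, hzS, hmzne, this⟩


lemma growPair {P S : Finset Pt} (hgen : CGen P) (hP : CSimple P) (hSP : S ⊆ P)
    (hS : CSimple S) (h3 : 3 ≤ S.card) (hlt : S.card < P.card)
    (hnoext : ∀ u ∈ P, u ∉ S → ¬ CSimple (insert u S)) :
    ∃ u ∈ P, ∃ v ∈ P, u ∉ S ∧ v ∉ S ∧ u ≠ v ∧
      CSimple (insert u (insert v S)) := by
  have hSne : S ≠ P := fun h => by rw [h] at hlt; omega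
  have hnb : ¬ CBlock P S := by
    intro hb
    rcases hP _ hb with h | h
    · omega
    · exact hSne h
  have hex : ∃ q ∈ P, q ∉ S ∧ (Straddles Prod.fst S q ∨ Straddles Prod.snd S q) := by
    by_contra hc
    push_neg at hc
    exact hnb ⟨hSP, fun q hq hqn => hc q hq hqn⟩
  obtain ⟨u₀, hu₀P, hu₀S, hslice⟩ := hex
  obtain ⟨y₀, hy₀S, hclone⟩ :=
    clone_step hS hu₀S hslice (hnoext u₀ hu₀P hu₀S)
  set M : Finset Pt := insert y₀ (P.filter (fun p => p ∉ S ∧ ∀ s ∈ S,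
      ¬ Btw y₀.1 s.1 p.1 ∧ ¬ Btw y₀.2 s.2 p.2)) with hMdef
  have hy₀P : y₀ ∈ P := hSP hy₀S
  have hMsub : M ⊆ P := by
    rw [hMdef]
    exact Finset.insert_subset hy₀P (Finset.filter_subset _ _)
  have hy₀M : y₀ ∈ M := by rw [hMdef]; exact Finset.mem_insert_self _ _
  have hu₀M : u₀ ∈ M := by
    rw [hMdef]
    exact Finset.mem_insert_of_mem (Finset.mem_filter.2 ⟨hu₀P, hu₀S, hclone⟩)
  have hu₀y₀ : u₀ ≠ y₀ := fun he => hu₀S (he ▸ hy₀S)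
  have hMmem : ∀ m ∈ M, m = y₀ ∨ (m ∉ S ∧ ∀ s ∈ S,
      ¬ Btw y₀.1 s.1 m.1 ∧ ¬ Btw y₀.2 s.2 m.2) := by
    intro m hm
    rw [hMdef] at hm
    rcases Finset.mem_insert.1 hm with he | hm
    · exact Or.inl he
    · exact Or.inr (Finset.mem_filter.1 hm).2
  have hMne : M ≠ P := by
    have h2 : 2 ≤ S.card := by omega
    obtain ⟨s1, hs1⟩ : (S.erase y₀).Nonempty := by
      rw [← Finset.card_pos, Finset.card_erase_of_mem hy₀S]; omega
    have hs1S : s1 ∈ S := Finset.mem_of_mem_erase hs1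
    have hs1y : s1 ≠ y₀ := Finset.ne_of_mem_erase hs1
    intro hMP
    have : s1 ∈ M := by rw [hMP]; exact hSP hs1S
    rcases hMmem s1 this with he | ⟨hns, _⟩
    · exact hs1y he
    · exact hns hs1S
  have hnbM : ¬ CBlock P M := by
    intro hb
    rcases hP _ hb with h | h
    · have : 2 ≤ M.card := Finset.one_lt_card_iff.2 ⟨u₀, y₀, hu₀M, hy₀M, hu₀y₀⟩
      omega
    · exact hMne h
  have hexz : ∃ z ∈ P, z ∉ M ∧ (Straddles Prod.fst M z ∨ Straddles Prod.snd M z) := by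
    by_contra hc
    push_neg at hc
    exact hnbM ⟨hMsub, fun q hq hqn => hc q hq hqn⟩
  obtain ⟨z, hzP, hzM, hzstr⟩ := hexz
  have hzy : z ≠ y₀ := fun he => hzM (he ▸ hy₀M)
  have hzbad : z ∈ S ∨ ∃ s ∈ S, Btw y₀.1 s.1 z.1 ∨ Btw y₀.2 s.2 z.2 := by
    by_cases hzS : z ∈ S
    · exact Or.inl hzS
    · right
      have : z ∉ P.filter (fun p => p ∉ S ∧ ∀ s ∈ S,
          ¬ Btw y₀.1 s.1 p.1 ∧ ¬ Btw y₀.2 s.2 p.2) := by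
        intro hc
        exact hzM (by rw [hMdef]; exact Finset.mem_insert_of_mem hc)
      rw [Finset.mem_filter] at this
      push_neg at this
      have := this hzP hzS
      obtain ⟨s, hs, h⟩ := this
      by_cases h1 : Btw y₀.1 s.1 z.1
      · exact ⟨s, hs, Or.inl h1⟩
      · exact ⟨s, hs, Or.inr (h h1)⟩
  rcases hzstr with hstr | hstr
  · exact growPairAux (Or.inl ⟨rfl, rfl⟩) hgen hS h3 hSP hy₀S hMsub hMmem
      hzP hzy hzbad hstr
  · refine growPairAux (Or.inr ⟨rfl, rfl⟩) hgen hS h3 hSP hy₀S hMsub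
      (fun m hm => (hMmem m hm).imp id
        (fun h => ⟨h.1, fun s hs => ((h.2 s hs).symm : _ ∧ _)⟩))
      hzP hzy
      (hzbad.imp id (fun ⟨s, hs, h⟩ => ⟨s, hs, h.symm⟩))
      hstr

lemma grow {P S : Finset Pt} (hgen : CGen P) (hP : CSimple P) (hSP : S ⊆ P)
    (hS : CSimple S) (h3 : 3 ≤ S.card) (hlt : S.card < P.card) :
    ∃ S', S ⊆ S' ∧ S' ⊆ P ∧ CSimple S' ∧
      (S'.card = S.card + 1 ∨ S'.card = S.card + 2) := by
  by_cases hex : ∃ u ∈ P, u ∉ S ∧ CSimple (insert u S)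
  · obtain ⟨u, huP, huS, hsimp⟩ := hex
    exact ⟨insert u S, Finset.subset_insert _ _, Finset.insert_subset huP hSP,
      hsimp, Or.inl (by rw [Finset.card_insert_of_notMem huS])⟩
  · push_neg at hex
    obtain ⟨u, huP, v, hvP, huS, hvS, huv, hsimp⟩ :=
      growPair hgen hP hSP hS h3 hlt (fun u hu hus => hex u hu hus)
    refine ⟨insert u (insert v S), ?_, ?_, hsimp, Or.inr ?_⟩
    · exact (Finset.subset_insert _ _).trans (Finset.subset_insert _ _)
    · exact Finset.insert_subset huP (Finset.insert_subset hvP hSP)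
    · rw [Finset.card_insert_of_notMem (by
        intro hc
        rcases Finset.mem_insert.1 hc with he | hc
        · exact huv he
        · exact huS hc),
        Finset.card_insert_of_notMem hvS]

/-- `P` contains a 2413 or 3142 pattern. -/
def HasQuad (P : Finset Pt) : Prop :=
  ∃ p1 ∈ P, ∃ p2 ∈ P, ∃ p3 ∈ P, ∃ p4 ∈ P,
    p1.1 < p2.1 ∧ p2.1 < p3.1 ∧ p3.1 < p4.1 ∧
    ((p3.2 < p1.2 ∧ p1.2 < p4.2 ∧ p4.2 < p2.2) ∨
     (p2.2 < p4.2 ∧ p4.2 < p1.2 ∧ p1.2 < p3.2))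

lemma lsep : ∀ (n : ℕ) (P : Finset Pt), P.card ≤ n → CGen P → 3 ≤ P.card →
    ¬ HasQuad P → ∃ B, CBlock P B ∧ 2 ≤ B.card ∧ B ≠ P := by
  intro n
  induction n with
  | zero => intro P hle _ h3 _; omega
  | succ n IH =>
    intro P hle hgen h3 hq
    -- the maximal point in x
    have hPne : P.Nonempty := Finset.card_pos.1 (by omega)
    obtain ⟨r, hrP, hrmax⟩ := P.exists_max_image Prod.fst hPne
    have hxmax : ∀ p ∈ P, p ≠ r → p.1 < r.1 := by
      intro p hp hpr
      have h1 := hrmax p hp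
      have h2 := (hgen p hp r hrP hpr).1
      omega
    by_cases hbase : P.card = 3
    · -- base case: three points
      obtain ⟨l, hlP, hlmin⟩ := P.exists_min_image Prod.fst hPne
      have hxmin : ∀ p ∈ P, p ≠ l → l.1 < p.1 := by
        intro p hp hpl
        have h1 := hlmin p hp
        have h2 := (hgen p hp l hlP hpl).1
        omega
      have hlr : l ≠ r := by
        intro he
        -- then |P| = 1 would follow; easier: all points equal contra card
        have : ∀ p ∈ P, p = l := by
          intro p hp
          by_contra hple
          have h5 := hxmin p hp hple
          have h6 := hxmax p hp (he ▸ hple)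
          have h7 : l.1 = r.1 := by rw [he]
          omega
        have : P ⊆ {l} := fun p hp => by simp [this p hp]
        have := Finset.card_le_card this
        simp at this; omega
      obtain ⟨m, hm⟩ : ((P.erase r).erase l).Nonempty := by
        rw [← Finset.card_pos, Finset.card_erase_of_mem
          (Finset.mem_erase.2 ⟨hlr, hlP⟩), Finset.card_erase_of_mem hrP]
        omega
      have hml : m ≠ l := (Finset.mem_erase.1 hm).1
      have hmr : m ≠ r := (Finset.mem_erase.1 (Finset.mem_of_mem_erase hm)).1
      have hmP : m ∈ P := Finset.mem_of_mem_erase (Finset.mem_of_mem_erase hm)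
      have hx1 : l.1 < m.1 := hxmin m hmP hml
      have hx2 : m.1 < r.1 := hxmax m hmP hmr
      have hsub1 : ({l, m} : Finset Pt) ⊆ P := by
        intro x hx
        rcases Finset.mem_insert.1 hx with rfl | hx
        · exact hlP
        · rw [Finset.mem_singleton.1 hx]; exact hmP
      have hsub2 : ({m, r} : Finset Pt) ⊆ P := by
        intro x hx
        rcases Finset.mem_insert.1 hx with rfl | hx
        · exact hmP
        · rw [Finset.mem_singleton.1 hx]; exact hrP
      have hqmem : ∀ q ∈ P, q = l ∨ q = m ∨ q = r := by
        intro q hqP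
        by_contra hc
        push_neg at hc
        have h4 : ({l, m, r} : Finset Pt).card = 3 := by
          rw [Finset.card_insert_of_notMem (by
              simp only [Finset.mem_insert, Finset.mem_singleton]
              push_neg
              exact ⟨Ne.symm hml, hlr⟩),
            Finset.card_insert_of_notMem (by simp [hmr]),
            Finset.card_singleton]
        have hsub : insert q ({l, m, r} : Finset Pt) ⊆ P := by
          intro x hx
          rcases Finset.mem_insert.1 hx with rfl | hx
          · exact hqP
          · rcases Finset.mem_insert.1 hx with rfl | hx
            · exact hlP
            · rcases Finset.mem_insert.1 hx with rfl | hx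
              · exact hmP
              · rw [Finset.mem_singleton.1 hx]; exact hrP
        have hqn : q ∉ ({l, m, r} : Finset Pt) := by
          simp only [Finset.mem_insert, Finset.mem_singleton]
          push_neg
          exact ⟨hc.1, hc.2.1, hc.2.2⟩
        have := Finset.card_le_card hsub
        rw [Finset.card_insert_of_notMem hqn] at this
        omega
      by_cases hB1 : Btw l.2 r.2 m.2
      · -- {m, r} is a block
        by_cases hB2 : Btw m.2 l.2 r.2
        · exfalso; unfold Btw at hB1 hB2; omega
        · refine ⟨{m, r}, ⟨hsub2, ?_⟩, by
            rw [Finset.card_pair hmr], by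
              intro he
              have : l ∈ ({m, r} : Finset Pt) := by rw [he]; exact hlP
              simp only [Finset.mem_insert, Finset.mem_singleton] at this
              rcases this with he' | he' <;> simp_all⟩
          intro q hqP hqn
          have hql : q = l := by
            rcases hqmem q hqP with h | h | h
            · exact h
            · exact absurd (by simp [h]) hqn
            · exact absurd (by simp [h]) hqn
          subst hql
          constructor
          · rintro ⟨p, hp, p', hp', h1', h2'⟩
            simp only [Finset.mem_insert, Finset.mem_singleton] at hp hp'
            rcases hp with rfl | rfl <;> rcases hp' with rfl | rfl <;> omega
          · rintro ⟨p, hp, p', hp', h1', h2'⟩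
            simp only [Finset.mem_insert, Finset.mem_singleton] at hp hp'
            unfold Btw at hB2
            rcases hp with rfl | rfl <;> rcases hp' with rfl | rfl <;> omega
      · -- {l, m} is a block
        refine ⟨{l, m}, ⟨hsub1, ?_⟩, by
          rw [Finset.card_pair (Ne.symm hml)], by
            intro he
            have : r ∈ ({l, m} : Finset Pt) := by rw [he]; exact hrP
            simp only [Finset.mem_insert, Finset.mem_singleton] at this
            rcases this with he' | he' <;> simp_all⟩
        intro q hqP hqn
        have hqr : q = r := by
          rcases hqmem q hqP with h | h | h
          · exact absurd (by simp [h]) hqn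
          · exact absurd (by simp [h]) hqn
          · exact h
        subst hqr
        constructor
        · rintro ⟨p, hp, p', hp', h1', h2'⟩
          simp only [Finset.mem_insert, Finset.mem_singleton] at hp hp'
          rcases hp with rfl | rfl <;> rcases hp' with rfl | rfl <;> omega
        · rintro ⟨p, hp, p', hp', h1', h2'⟩
          simp only [Finset.mem_insert, Finset.mem_singleton] at hp hp'
          unfold Btw at hB1
          rcases hp with rfl | rfl <;> rcases hp' with rfl | rfl <;> omega
    · -- step case: |P| ≥ 4
      have h4 : 4 ≤ P.card := by omega
      set P' := P.erase r with hP'def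
      have hP'card : P'.card = P.card - 1 := Finset.card_erase_of_mem hrP
      have hP'sub : P' ⊆ P := Finset.erase_subset _ _
      have hquad' : ¬ HasQuad P' := by
        intro ⟨p1, h1, p2, h2, p3, h3', p4, h4', hrest⟩
        exact hq ⟨p1, hP'sub h1, p2, hP'sub h2, p3, hP'sub h3', p4, hP'sub h4', hrest⟩
      obtain ⟨B, hB, hBcard, hBne⟩ := IH P' (by omega) (hgen.mono hP'sub)
        (by omega) hquad'
      have hBP' : B ⊆ P' := hB.1
      have hBP : B ⊆ P := hBP'.trans hP'sub
      have hrB : r ∉ B := fun hc => (Finset.mem_erase.1 (hBP' hc)).1 rfl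
      have hBxr : ∀ x ∈ B, x.1 < r.1 := fun x hx =>
        hxmax x (hBP hx) (fun he => hrB (he ▸ hx))
      have hBssub : B ⊂ P' := Finset.ssubset_iff_subset_ne.2 ⟨hBP', hBne⟩
      have hBcardlt : B.card < P'.card := Finset.card_lt_card hBssub
      by_cases hsplit : ∃ bm ∈ B, ∃ bp ∈ B, bm.2 < r.2 ∧ r.2 < bp.2
      case neg =>
        -- B is a block of P
        refine ⟨B, ⟨hBP, ?_⟩, hBcard, fun he => hrB (he ▸ hrP)⟩
        intro q hqP hqB
        by_cases hqr : q = r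
        · subst hqr
          constructor
          · rintro ⟨p, hp, p', hp', h1', h2'⟩
            exact absurd (hBxr p' hp') (by omega)
          · rintro ⟨p, hp, p', hp', h1', h2'⟩
            exact hsplit ⟨p, hp, p', hp', h1', h2'⟩
        · exact hB.2 q (Finset.mem_erase.2 ⟨hqr, hqP⟩) hqB
      case pos =>
      obtain ⟨bm0, hbm0, bp0, hbp0, hbm0y, hbp0y⟩ := hsplit
      set Bp := B.filter (fun p => r.2 < p.2) with hBpdef
      set Bm := B.filter (fun p => p.2 < r.2) with hBmdef
      have hbm0m : bm0 ∈ Bm := Finset.mem_filter.2 ⟨hbm0, hbm0y⟩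
      have hbp0p : bp0 ∈ Bp := Finset.mem_filter.2 ⟨hbp0, hbp0y⟩
      have hBcover : ∀ x ∈ B, x ∈ Bp ∨ x ∈ Bm := by
        intro x hx
        have hxr : x ≠ r := fun he => hrB (he ▸ hx)
        have := (hgen x (hBP hx) r hrP hxr).2
        by_cases hc : r.2 < x.2
        · exact Or.inl (Finset.mem_filter.2 ⟨hx, hc⟩)
        · exact Or.inr (Finset.mem_filter.2 ⟨hx, by omega⟩)
      set Rt := P'.filter (fun q => q ∉ B ∧ ∀ x ∈ B, x.1 < q.1) with hRtdef
      have hRtfact : ∀ q ∈ Rt, q ∈ P' ∧ q ∉ B ∧ ∀ x ∈ B, x.1 < q.1 := by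
        intro q hq
        have := Finset.mem_filter.1 hq
        exact ⟨this.1, this.2.1, this.2.2⟩
      rcases Finset.eq_empty_or_nonempty Rt with hRte | hRtne
      · -- no points to the right of B : insert r B is a block of P
        have hBne' : B.Nonempty := Finset.card_pos.1 (by omega)
        refine ⟨insert r B, ⟨Finset.insert_subset hrP hBP, ?_⟩,
            le_trans hBcard (Finset.card_le_card (Finset.subset_insert _ _)), ?_⟩
        · intro q hqP hqF
          have hqr : q ≠ r := fun he => hqF (he ▸ Finset.mem_insert_self _ _)
          have hqB : q ∉ B := fun hc => hqF (Finset.mem_insert_of_mem hc)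
          have hqP' : q ∈ P' := Finset.mem_erase.2 ⟨hqr, hqP⟩
          have hfree := hB.2 q hqP' hqB
          constructor
          · rintro ⟨p, hp, p', hp', h1', h2'⟩
            rcases Finset.mem_insert.1 hp' with rfl | hp'B
            · -- p' = r
              rcases Finset.mem_insert.1 hp with rfl | hpB
              · omega
              · -- p ∈ B and p.1 < q.1 < r.1
                by_cases hex2 : ∃ x ∈ B, q.1 < x.1
                · obtain ⟨x, hx, hx'⟩ := hex2
                  exact hfree.1 ⟨p, hpB, x, hx, h1', hx'⟩
                · push_neg at hex2
                  have : q ∈ Rt := by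
                    rw [hRtdef]
                    refine Finset.mem_filter.2 ⟨hqP', hqB, ?_⟩
                    intro x hx
                    have h5 := hex2 x hx
                    have h6 : x ≠ q := fun he => hqB (he ▸ hx)
                    have := (hgen x (hBP hx) q hqP h6).1
                    omega
                  rw [hRte] at this
                  simp at this
            · rcases Finset.mem_insert.1 hp with rfl | hpB
              · exact absurd (hBxr p' hp'B) (by omega)
              · exact hfree.1 ⟨p, hpB, p', hp'B, h1', h2'⟩
          · rintro ⟨p, hp, p', hp', h1', h2'⟩
            have hrepl : ∀ x, x ∈ insert r B → (x.2 < q.2 → ∃ y ∈ B, y.2 < q.2) ∧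
                (q.2 < x.2 → ∃ y ∈ B, q.2 < y.2) := by
              intro x hx
              rcases Finset.mem_insert.1 hx with rfl | hxB
              · constructor
                · intro h'
                  exact ⟨bm0, hbm0, by omega⟩
                · intro h'
                  exact ⟨bp0, hbp0, by omega⟩
              · exact ⟨fun h' => ⟨x, hxB, h'⟩, fun h' => ⟨x, hxB, h'⟩⟩
            obtain ⟨y1, hy1, hy1'⟩ := (hrepl p hp).1 h1'
            obtain ⟨y2, hy2, hy2'⟩ := (hrepl p' hp').2 h2'
            exact hfree.2 ⟨y1, hy1, y2, hy2, hy1', hy2'⟩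
        · intro he
          -- insert r B = P : but then B = P' contradiction
          apply hBne
          apply Finset.Subset.antisymm hBP'
          intro x hx
          have hxP : x ∈ P := hP'sub hx
          have hxr : x ≠ r := (Finset.mem_erase.1 hx).1
          have : x ∈ insert r B := by rw [he]; exact hxP
          rcases Finset.mem_insert.1 this with he' | hxB
          · exact absurd he' hxr
          · exact hxB
      · -- Rt nonempty
        obtain ⟨q0, hq0⟩ := hRtne
        have hBne' : B.Nonempty := ⟨bm0, hbm0⟩
        -- each member of Rt is entirely below or entirely above B
        have hRside : ∀ q ∈ Rt, (∀ x ∈ B, q.2 < x.2) ∨ (∀ x ∈ B, x.2 < q.2) := by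
          intro q hq
          obtain ⟨hqP', hqB, _⟩ := hRtfact q hq
          apply not_straddles_cases hBne'
          · intro x hx
            have hxq : x ≠ q := fun he => hqB (he ▸ hx)
            exact (hgen x (hBP hx) q (hP'sub hqP') hxq).2
          · exact (hB.2 q hqP' hqB).2
        -- each q in Rt is below all of B, or above all of B; show all same side
        have hbm0B : bm0 ∈ B := hbm0
        have hbp0B : bp0 ∈ B := hbp0
        have hbmbp : bm0 ≠ bp0 := fun he => by rw [he] at hbm0y; omega
        have hRtP : ∀ q ∈ Rt, q ∈ P := fun q hq => hP'sub (hRtfact q hq).1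
        have hRtr : ∀ q ∈ Rt, q.1 < r.1 := by
          intro q hq
          exact hxmax q (hRtP q hq) (Finset.mem_erase.1 (hRtfact q hq).1).1
        have hmix : (∀ q ∈ Rt, ∀ x ∈ B, q.2 < x.2) ∨
            (∀ q ∈ Rt, ∀ x ∈ B, x.2 < q.2) := by
          by_contra hc
          push_neg at hc
          obtain ⟨⟨q1, hq1, x1, hx1, hx1'⟩, ⟨q2, hq2, x2, hx2, hx2'⟩⟩ := hc
          have hq1high : ∀ x ∈ B, x.2 < q1.2 := by
            rcases hRside q1 hq1 with h | h
            · exact absurd (h x1 hx1) (by omega)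
            · exact h
          have hq2low : ∀ x ∈ B, q2.2 < x.2 := by
            rcases hRside q2 hq2 with h | h
            · exact h
            · exact absurd (h x2 hx2) (by omega)
          have hne01 : bm0.1 ≠ bp0.1 := (hgen bm0 (hBP hbm0B) bp0 (hBP hbp0B) hbmbp).1
          have hord : bp0.1 < bm0.1 := by
            by_contra hcc
            have h1 : bm0.1 < bp0.1 := by omega
            exact hq ⟨bm0, hBP hbm0B, bp0, hBP hbp0B, q2, hRtP q2 hq2, r, hrP,
              h1, (hRtfact q2 hq2).2.2 bp0 hbp0B, hRtr q2 hq2,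
              Or.inl ⟨hq2low bm0 hbm0B, hbm0y, hbp0y⟩⟩
          exact hq ⟨bp0, hBP hbp0B, bm0, hBP hbm0B, q1, hRtP q1 hq1, r, hrP,
            hord, (hRtfact q1 hq1).2.2 bm0 hbm0B, hRtr q1 hq1,
            Or.inr ⟨hbm0y, hbp0y, hq1high bp0 hbp0B⟩⟩
        have hBpsub : Bp ⊆ B := Finset.filter_subset _ _
        have hBmsub : Bm ⊆ B := Finset.filter_subset _ _
        have hBpy : ∀ x ∈ Bp, r.2 < x.2 := fun x hx => (Finset.mem_filter.1 hx).2
        have hBmy : ∀ x ∈ Bm, x.2 < r.2 := fun x hx => (Finset.mem_filter.1 hx).2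
        rcases hmix with hlow | hhigh
        · -- all of Rt below B
          have hord : ∀ b1 ∈ Bm, ∀ b2 ∈ Bp, b2.1 < b1.1 := by
            intro b1 hb1 b2 hb2
            have hb1B := hBmsub hb1
            have hb2B := hBpsub hb2
            have hb12 : b1 ≠ b2 := by
              intro he
              have ha1 := hBmy b1 hb1
              have ha2 := hBpy b2 hb2
              rw [he] at ha1
              omega
            have hne12 : b1.1 ≠ b2.1 := (hgen b1 (hBP hb1B) b2 (hBP hb2B) hb12).1
            by_contra hcc
            have h1 : b1.1 < b2.1 := by omega
            exact hq ⟨b1, hBP hb1B, b2, hBP hb2B, q0, hRtP q0 hq0, r, hrP,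
              h1, (hRtfact q0 hq0).2.2 b2 hb2B, hRtr q0 hq0,
              Or.inl ⟨hlow q0 hq0 b1 hb1B, hBmy b1 hb1, hBpy b2 hb2⟩⟩
          by_cases h2p : 2 ≤ Bp.card
          · refine ⟨Bp, ⟨hBpsub.trans hBP, ?_⟩, h2p, fun he => ?_⟩
            · intro q hqP hqBp
              by_cases hqr : q = r
              · subst hqr
                constructor
                · rintro ⟨p, hp, p', hp', h1', h2'⟩
                  exact absurd (hBxr p' (hBpsub hp')) (by omega)
                · rintro ⟨p, hp, p', hp', h1', h2'⟩
                  exact absurd (hBpy p hp) (by omega)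
              · have hqP' : q ∈ P' := Finset.mem_erase.2 ⟨hqr, hqP⟩
                by_cases hqB : q ∈ B
                · have hqBm : q ∈ Bm := (hBcover q hqB).resolve_left hqBp
                  constructor
                  · rintro ⟨p, hp, p', hp', h1', h2'⟩
                    exact absurd (hord q hqBm p' hp') (by omega)
                  · rintro ⟨p, hp, p', hp', h1', h2'⟩
                    have := hBpy p hp
                    have := hBmy q hqBm
                    omega
                · have hfree := hB.2 q hqP' hqB
                  constructor
                  · rintro ⟨p, hp, p', hp', h1', h2'⟩
                    exact hfree.1 ⟨p, hBpsub hp, p', hBpsub hp', h1', h2'⟩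
                  · rintro ⟨p, hp, p', hp', h1', h2'⟩
                    exact hfree.2 ⟨p, hBpsub hp, p', hBpsub hp', h1', h2'⟩
            · have : bm0 ∈ Bp := by rw [he]; exact hBP hbm0B
              have := hBpy bm0 this
              omega
          by_cases h2m : 2 ≤ Bm.card
          · refine ⟨Bm, ⟨hBmsub.trans hBP, ?_⟩, h2m, fun he => ?_⟩
            · intro q hqP hqBm
              by_cases hqr : q = r
              · subst hqr
                constructor
                · rintro ⟨p, hp, p', hp', h1', h2'⟩
                  exact absurd (hBxr p' (hBmsub hp')) (by omega)
                · rintro ⟨p, hp, p', hp', h1', h2'⟩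
                  exact absurd (hBmy p' hp') (by omega)
              · have hqP' : q ∈ P' := Finset.mem_erase.2 ⟨hqr, hqP⟩
                by_cases hqB : q ∈ B
                · have hqBp : q ∈ Bp := (hBcover q hqB).resolve_right hqBm
                  constructor
                  · rintro ⟨p, hp, p', hp', h1', h2'⟩
                    exact absurd (hord p hp q hqBp) (by omega)
                  · rintro ⟨p, hp, p', hp', h1', h2'⟩
                    have := hBmy p' hp'
                    have := hBpy q hqBp
                    omega
                · have hfree := hB.2 q hqP' hqB
                  constructor
                  · rintro ⟨p, hp, p', hp', h1', h2'⟩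
                    exact hfree.1 ⟨p, hBmsub hp, p', hBmsub hp', h1', h2'⟩
                  · rintro ⟨p, hp, p', hp', h1', h2'⟩
                    exact hfree.2 ⟨p, hBmsub hp, p', hBmsub hp', h1', h2'⟩
            · have : bp0 ∈ Bm := by rw [he]; exact hBP hbp0B
              have := hBmy bp0 this
              omega
          · -- |Bp| = |Bm| = 1
            push_neg at h2p h2m
            have huniqp : ∀ x ∈ Bp, x = bp0 := by
              intro x hx
              exact Finset.card_le_one.1 (by omega) x hx bp0 hbp0p
            have huniqm : ∀ x ∈ Bm, x = bm0 := by
              intro x hx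
              exact Finset.card_le_one.1 (by omega) x hx bm0 hbm0m
            have hBmem : ∀ x ∈ B, x = bp0 ∨ x = bm0 := by
              intro x hx
              rcases hBcover x hx with h | h
              · exact Or.inl (huniqp x h)
              · exact Or.inr (huniqm x h)
            have hordp : bp0.1 < bm0.1 := hord bm0 hbm0m bp0 hbp0p
            have hlefts : ∀ ℓ ∈ P', ℓ ∉ B → ℓ ∉ Rt →
                (ℓ.1 < bp0.1 ∧ ℓ.1 < bm0.1) ∧
                ((ℓ.2 < bm0.2 ∧ ℓ.2 < bp0.2) ∨ (bp0.2 < ℓ.2 ∧ bm0.2 < ℓ.2)) := by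
              intro ℓ hℓP' hℓB hℓRt
              have hfree := hB.2 ℓ hℓP' hℓB
              have hdist1 : ∀ x ∈ B, x.1 ≠ ℓ.1 := by
                intro x hx
                exact (hgen x (hBP hx) ℓ (hP'sub hℓP') (fun he => hℓB (he ▸ hx))).1
              have hdist2 : ∀ x ∈ B, x.2 ≠ ℓ.2 := by
                intro x hx
                exact (hgen x (hBP hx) ℓ (hP'sub hℓP') (fun he => hℓB (he ▸ hx))).2
              constructor
              · rcases not_straddles_cases hBne' hdist1 hfree.1 with h | h
                · exact ⟨h bp0 hbp0B, h bm0 hbm0B⟩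
                · exfalso
                  apply hℓRt
                  rw [hRtdef]
                  exact Finset.mem_filter.2 ⟨hℓP', hℓB, h⟩
              · rcases not_straddles_cases hBne' hdist2 hfree.2 with h | h
                · exact Or.inl ⟨h bm0 hbm0B, h bp0 hbp0B⟩
                · exact Or.inr ⟨h bp0 hbp0B, h bm0 hbm0B⟩
            have hLQ : ∀ ℓ ∈ P', ℓ ∉ B → ℓ ∉ Rt → ℓ.2 < bm0.2 →
                ∀ q ∈ Rt, ℓ.2 < q.2 := by
              intro ℓ hℓP' hℓB hℓRt hℓy qq hqq
              have hℓq : ℓ ≠ qq := fun he => hℓRt (he ▸ hqq)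
              have hne : ℓ.2 ≠ qq.2 := (hgen ℓ (hP'sub hℓP') qq (hRtP qq hqq) hℓq).2
              by_contra hcc
              have h1 : qq.2 < ℓ.2 := by omega
              exact hq ⟨ℓ, hP'sub hℓP', bp0, hBP hbp0B, qq, hRtP qq hqq, r, hrP,
                (hlefts ℓ hℓP' hℓB hℓRt).1.1, (hRtfact qq hqq).2.2 bp0 hbp0B,
                hRtr qq hqq, Or.inl ⟨h1, by omega, hbp0y⟩⟩
            refine ⟨insert r (insert bm0 Rt),
              ⟨?_, ?_⟩, ?_, fun he => ?_⟩
            · refine Finset.insert_subset hrP (Finset.insert_subset (hBP hbm0B) ?_)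
              intro x hx
              exact hRtP x hx
            · intro q hqP hqF
              have hqr : q ≠ r := fun he => hqF (he ▸ Finset.mem_insert_self _ _)
              have hqbm : q ≠ bm0 := fun he => hqF (by
                rw [he]; exact Finset.mem_insert_of_mem (Finset.mem_insert_self _ _))
              have hqRt : q ∉ Rt := fun hc => hqF
                (Finset.mem_insert_of_mem (Finset.mem_insert_of_mem hc))
              have hqP' : q ∈ P' := Finset.mem_erase.2 ⟨hqr, hqP⟩
              have hFmem : ∀ x, x ∈ insert r (insert bm0 Rt) →
                  x = r ∨ x = bm0 ∨ x ∈ Rt := by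
                intro x hx
                rcases Finset.mem_insert.1 hx with rfl | hx
                · exact Or.inl rfl
                · rcases Finset.mem_insert.1 hx with rfl | hx
                  · exact Or.inr (Or.inl rfl)
                  · exact Or.inr (Or.inr hx)
              by_cases hqB : q ∈ B
              · have hqbp : q = bp0 := (hBmem q hqB).resolve_right hqbm
                have e1 : q.1 = bp0.1 := by rw [hqbp]
                have e2 : q.2 = bp0.2 := by rw [hqbp]
                constructor
                · rintro ⟨p, hp, p', hp', h1', h2'⟩
                  rcases hFmem p hp with rfl | rfl | hp2
                  · have := hBxr bp0 hbp0B
                    omega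
                  · omega
                  · have := (hRtfact p hp2).2.2 bp0 hbp0B
                    omega
                · rintro ⟨p, hp, p', hp', h1', h2'⟩
                  rcases hFmem p' hp' with rfl | rfl | hp2
                  · omega
                  · have := hbm0y
                    omega
                  · have := hlow p' hp2 bp0 hbp0B
                    omega
              · have hlf := hlefts q hqP' hqB hqRt
                constructor
                · rintro ⟨p, hp, p', hp', h1', h2'⟩
                  rcases hFmem p hp with rfl | rfl | hp2
                  · have := hxmax q hqP hqr
                    omega
                  · have := hlf.1.2
                    omega
                  · have := (hRtfact p hp2).2.2 bm0 hbm0B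
                    have := hlf.1.2
                    omega
                · rintro ⟨p, hp, p', hp', h1', h2'⟩
                  rcases hlf.2 with ⟨hy1, hy2⟩ | ⟨hy1, hy2⟩
                  · -- q below everything : no point of F below q
                    rcases hFmem p hp with rfl | rfl | hp2
                    · omega
                    · omega
                    · have := hLQ q hqP' hqB hqRt hy1 p hp2
                      omega
                  · -- q above : no point of F above q
                    rcases hFmem p' hp' with rfl | rfl | hp2
                    · omega
                    · omega
                    · have := hlow p' hp2 bm0 hbm0B
                      omega
            · have hrbm : r ≠ bm0 := fun he => hrB (he ▸ hbm0B)
              have h1 : bm0 ∈ insert r (insert bm0 Rt) :=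
                Finset.mem_insert_of_mem (Finset.mem_insert_self _ _)
              have h2 : r ∈ insert r (insert bm0 Rt) := Finset.mem_insert_self _ _
              exact Finset.one_lt_card_iff.2 ⟨r, bm0, h2, h1, hrbm⟩
            · have : bp0 ∈ insert r (insert bm0 Rt) := by rw [he]; exact hBP hbp0B
              rcases Finset.mem_insert.1 this with he' | this
              · exact hrB (he' ▸ hbp0B)
              · rcases Finset.mem_insert.1 this with he' | this
                · exact absurd he' hbmbp.symm
                · exact (hRtfact bp0 this).2.1 hbp0B
        · -- all of Rt above B (mirror)
          have hord : ∀ b1 ∈ Bm, ∀ b2 ∈ Bp, b1.1 < b2.1 := by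
            intro b1 hb1 b2 hb2
            have hb1B := hBmsub hb1
            have hb2B := hBpsub hb2
            have hb12 : b1 ≠ b2 := by
              intro he
              have ha1 := hBmy b1 hb1
              have ha2 := hBpy b2 hb2
              rw [he] at ha1
              omega
            have hne12 : b1.1 ≠ b2.1 := (hgen b1 (hBP hb1B) b2 (hBP hb2B) hb12).1
            by_contra hcc
            have h1 : b2.1 < b1.1 := by omega
            exact hq ⟨b2, hBP hb2B, b1, hBP hb1B, q0, hRtP q0 hq0, r, hrP,
              h1, (hRtfact q0 hq0).2.2 b1 hb1B, hRtr q0 hq0,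
              Or.inr ⟨hBmy b1 hb1, hBpy b2 hb2, hhigh q0 hq0 b2 hb2B⟩⟩
          by_cases h2p : 2 ≤ Bp.card
          · refine ⟨Bp, ⟨hBpsub.trans hBP, ?_⟩, h2p, fun he => ?_⟩
            · intro q hqP hqBp
              by_cases hqr : q = r
              · subst hqr
                constructor
                · rintro ⟨p, hp, p', hp', h1', h2'⟩
                  exact absurd (hBxr p' (hBpsub hp')) (by omega)
                · rintro ⟨p, hp, p', hp', h1', h2'⟩
                  exact absurd (hBpy p hp) (by omega)
              · have hqP' : q ∈ P' := Finset.mem_erase.2 ⟨hqr, hqP⟩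
                by_cases hqB : q ∈ B
                · have hqBm : q ∈ Bm := (hBcover q hqB).resolve_left hqBp
                  constructor
                  · rintro ⟨p, hp, p', hp', h1', h2'⟩
                    exact absurd (hord q hqBm p hp) (by omega)
                  · rintro ⟨p, hp, p', hp', h1', h2'⟩
                    have := hBpy p hp
                    have := hBmy q hqBm
                    omega
                · have hfree := hB.2 q hqP' hqB
                  constructor
                  · rintro ⟨p, hp, p', hp', h1', h2'⟩
                    exact hfree.1 ⟨p, hBpsub hp, p', hBpsub hp', h1', h2'⟩
                  · rintro ⟨p, hp, p', hp', h1', h2'⟩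
                    exact hfree.2 ⟨p, hBpsub hp, p', hBpsub hp', h1', h2'⟩
            · have : bm0 ∈ Bp := by rw [he]; exact hBP hbm0B
              have := hBpy bm0 this
              omega
          by_cases h2m : 2 ≤ Bm.card
          · refine ⟨Bm, ⟨hBmsub.trans hBP, ?_⟩, h2m, fun he => ?_⟩
            · intro q hqP hqBm
              by_cases hqr : q = r
              · subst hqr
                constructor
                · rintro ⟨p, hp, p', hp', h1', h2'⟩
                  exact absurd (hBxr p' (hBmsub hp')) (by omega)
                · rintro ⟨p, hp, p', hp', h1', h2'⟩
                  exact absurd (hBmy p' hp') (by omega)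
              · have hqP' : q ∈ P' := Finset.mem_erase.2 ⟨hqr, hqP⟩
                by_cases hqB : q ∈ B
                · have hqBp : q ∈ Bp := (hBcover q hqB).resolve_right hqBm
                  constructor
                  · rintro ⟨p, hp, p', hp', h1', h2'⟩
                    exact absurd (hord p' hp' q hqBp) (by omega)
                  · rintro ⟨p, hp, p', hp', h1', h2'⟩
                    have := hBmy p' hp'
                    have := hBpy q hqBp
                    omega
                · have hfree := hB.2 q hqP' hqB
                  constructor
                  · rintro ⟨p, hp, p', hp', h1', h2'⟩
                    exact hfree.1 ⟨p, hBmsub hp, p', hBmsub hp', h1', h2'⟩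
                  · rintro ⟨p, hp, p', hp', h1', h2'⟩
                    exact hfree.2 ⟨p, hBmsub hp, p', hBmsub hp', h1', h2'⟩
            · have : bp0 ∈ Bm := by rw [he]; exact hBP hbp0B
              have := hBmy bp0 this
              omega
          · -- |Bp| = |Bm| = 1
            push_neg at h2p h2m
            have huniqp : ∀ x ∈ Bp, x = bp0 := by
              intro x hx
              exact Finset.card_le_one.1 (by omega) x hx bp0 hbp0p
            have huniqm : ∀ x ∈ Bm, x = bm0 := by
              intro x hx
              exact Finset.card_le_one.1 (by omega) x hx bm0 hbm0m
            have hBmem : ∀ x ∈ B, x = bp0 ∨ x = bm0 := by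
              intro x hx
              rcases hBcover x hx with h | h
              · exact Or.inl (huniqp x h)
              · exact Or.inr (huniqm x h)
            have hordp : bm0.1 < bp0.1 := hord bm0 hbm0m bp0 hbp0p
            have hlefts : ∀ ℓ ∈ P', ℓ ∉ B → ℓ ∉ Rt →
                (ℓ.1 < bp0.1 ∧ ℓ.1 < bm0.1) ∧
                ((ℓ.2 < bm0.2 ∧ ℓ.2 < bp0.2) ∨ (bp0.2 < ℓ.2 ∧ bm0.2 < ℓ.2)) := by
              intro ℓ hℓP' hℓB hℓRt
              have hfree := hB.2 ℓ hℓP' hℓB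
              have hdist1 : ∀ x ∈ B, x.1 ≠ ℓ.1 := by
                intro x hx
                exact (hgen x (hBP hx) ℓ (hP'sub hℓP') (fun he => hℓB (he ▸ hx))).1
              have hdist2 : ∀ x ∈ B, x.2 ≠ ℓ.2 := by
                intro x hx
                exact (hgen x (hBP hx) ℓ (hP'sub hℓP') (fun he => hℓB (he ▸ hx))).2
              constructor
              · rcases not_straddles_cases hBne' hdist1 hfree.1 with h | h
                · exact ⟨h bp0 hbp0B, h bm0 hbm0B⟩
                · exfalso
                  apply hℓRt
                  rw [hRtdef]
                  exact Finset.mem_filter.2 ⟨hℓP', hℓB, h⟩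
              · rcases not_straddles_cases hBne' hdist2 hfree.2 with h | h
                · exact Or.inl ⟨h bm0 hbm0B, h bp0 hbp0B⟩
                · exact Or.inr ⟨h bp0 hbp0B, h bm0 hbm0B⟩
            have hLQ : ∀ ℓ ∈ P', ℓ ∉ B → ℓ ∉ Rt → bp0.2 < ℓ.2 →
                ∀ q ∈ Rt, q.2 < ℓ.2 := by
              intro ℓ hℓP' hℓB hℓRt hℓy qq hqq
              have hℓq : ℓ ≠ qq := fun he => hℓRt (he ▸ hqq)
              have hne : ℓ.2 ≠ qq.2 := (hgen ℓ (hP'sub hℓP') qq (hRtP qq hqq) hℓq).2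
              by_contra hcc
              have h1 : ℓ.2 < qq.2 := by omega
              exact hq ⟨ℓ, hP'sub hℓP', bm0, hBP hbm0B, qq, hRtP qq hqq, r, hrP,
                (hlefts ℓ hℓP' hℓB hℓRt).1.2, (hRtfact qq hqq).2.2 bm0 hbm0B,
                hRtr qq hqq, Or.inr ⟨hbm0y, by omega, h1⟩⟩
            refine ⟨insert r (insert bp0 Rt),
              ⟨?_, ?_⟩, ?_, fun he => ?_⟩
            · refine Finset.insert_subset hrP (Finset.insert_subset (hBP hbp0B) ?_)
              intro x hx
              exact hRtP x hx
            · intro q hqP hqF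
              have hqr : q ≠ r := fun he => hqF (he ▸ Finset.mem_insert_self _ _)
              have hqbp : q ≠ bp0 := fun he => hqF (by
                rw [he]; exact Finset.mem_insert_of_mem (Finset.mem_insert_self _ _))
              have hqRt : q ∉ Rt := fun hc => hqF
                (Finset.mem_insert_of_mem (Finset.mem_insert_of_mem hc))
              have hqP' : q ∈ P' := Finset.mem_erase.2 ⟨hqr, hqP⟩
              have hFmem : ∀ x, x ∈ insert r (insert bp0 Rt) →
                  x = r ∨ x = bp0 ∨ x ∈ Rt := by
                intro x hx
                rcases Finset.mem_insert.1 hx with rfl | hx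
                · exact Or.inl rfl
                · rcases Finset.mem_insert.1 hx with rfl | hx
                  · exact Or.inr (Or.inl rfl)
                  · exact Or.inr (Or.inr hx)
              by_cases hqB : q ∈ B
              · have hqbm : q = bm0 := (hBmem q hqB).resolve_left hqbp
                have e1 : q.1 = bm0.1 := by rw [hqbm]
                have e2 : q.2 = bm0.2 := by rw [hqbm]
                constructor
                · rintro ⟨p, hp, p', hp', h1', h2'⟩
                  rcases hFmem p hp with rfl | rfl | hp2
                  · have := hBxr bm0 hbm0B
                    omega
                  · omega
                  · have := (hRtfact p hp2).2.2 bm0 hbm0B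
                    omega
                · rintro ⟨p, hp, p', hp', h1', h2'⟩
                  rcases hFmem p hp with rfl | rfl | hp2
                  · have := hbm0y
                    omega
                  · have := hbm0y
                    have := hbp0y
                    omega
                  · have := hhigh p hp2 bm0 hbm0B
                    omega
              · have hlf := hlefts q hqP' hqB hqRt
                constructor
                · rintro ⟨p, hp, p', hp', h1', h2'⟩
                  rcases hFmem p hp with rfl | rfl | hp2
                  · have := hxmax q hqP hqr
                    omega
                  · have := hlf.1.1
                    omega
                  · have := (hRtfact p hp2).2.2 bp0 hbp0B
                    have := hlf.1.1
                    omega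
                · rintro ⟨p, hp, p', hp', h1', h2'⟩
                  rcases hlf.2 with ⟨hy1, hy2⟩ | ⟨hy1, hy2⟩
                  · -- q below everything : no point of F below q
                    rcases hFmem p hp with rfl | rfl | hp2
                    · omega
                    · omega
                    · have := hhigh p hp2 bm0 hbm0B
                      omega
                  · -- q above : no point of F above q
                    rcases hFmem p' hp' with rfl | rfl | hp2
                    · omega
                    · omega
                    · have := hLQ q hqP' hqB hqRt hy1 p' hp2
                      omega
            · have hrbp : r ≠ bp0 := fun he => hrB (he ▸ hbp0B)
              have h1 : bp0 ∈ insert r (insert bp0 Rt) :=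
                Finset.mem_insert_of_mem (Finset.mem_insert_self _ _)
              have h2 : r ∈ insert r (insert bp0 Rt) := Finset.mem_insert_self _ _
              exact Finset.one_lt_card_iff.2 ⟨r, bp0, h2, h1, hrbp⟩
            · have : bm0 ∈ insert r (insert bp0 Rt) := by rw [he]; exact hBP hbm0B
              rcases Finset.mem_insert.1 this with he' | this
              · exact hrB (he' ▸ hbm0B)
              · rcases Finset.mem_insert.1 this with he' | this
                · exact absurd he' hbmbp
                · exact (hRtfact bm0 this).2.1 hbm0B


lemma l4 {P : Finset Pt} (hgen : CGen P) (hP : CSimple P) (h4 : 4 ≤ P.card) :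
    ∃ Q, Q ⊆ P ∧ Q.card = 4 ∧ CSimple Q := by
  have hquad : HasQuad P := by
    by_contra hq
    obtain ⟨B, hB, h2, hne⟩ := lsep P.card P le_rfl hgen (by omega) hq
    rcases hP _ hB with h | h
    · omega
    · exact hne h
  obtain ⟨p1, hm1, p2, hm2, p3, hm3, p4, hm4, hx12, hx23, hx34, hpat⟩ := hquad
  set Q : Finset Pt := {p1, p2, p3, p4} with hQdef
  have hQP : Q ⊆ P := by
    intro x hx
    rw [hQdef] at hx
    rcases Finset.mem_insert.1 hx with rfl | hx
    · exact hm1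
    rcases Finset.mem_insert.1 hx with rfl | hx
    · exact hm2
    rcases Finset.mem_insert.1 hx with rfl | hx
    · exact hm3
    rw [Finset.mem_singleton.1 hx]; exact hm4
  have hp1Q : p1 ∈ Q := by rw [hQdef]; simp
  have hp2Q : p2 ∈ Q := by rw [hQdef]; simp
  have hp3Q : p3 ∈ Q := by rw [hQdef]; simp
  have hp4Q : p4 ∈ Q := by rw [hQdef]; simp
  have hQmem : ∀ x ∈ Q, x = p1 ∨ x = p2 ∨ x = p3 ∨ x = p4 := by
    intro x hx
    rw [hQdef] at hx
    rcases Finset.mem_insert.1 hx with rfl | hx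
    · exact Or.inl rfl
    rcases Finset.mem_insert.1 hx with rfl | hx
    · exact Or.inr (Or.inl rfl)
    rcases Finset.mem_insert.1 hx with rfl | hx
    · exact Or.inr (Or.inr (Or.inl rfl))
    rw [Finset.mem_singleton.1 hx]
    exact Or.inr (Or.inr (Or.inr rfl))
  have hQcard : Q.card = 4 := by
    rw [hQdef]
    rw [Finset.card_insert_of_notMem (by
        simp only [Finset.mem_insert, Finset.mem_singleton]
        push_neg
        refine ⟨fun he => ?_, fun he => ?_, fun he => ?_⟩ <;>
          (rw [he] at hx12; omega)),
      Finset.card_insert_of_notMem (by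
        simp only [Finset.mem_insert, Finset.mem_singleton]
        push_neg
        refine ⟨fun he => ?_, fun he => ?_⟩ <;>
          (rw [he] at hx23; omega)),
      Finset.card_insert_of_notMem (by
        simp only [Finset.mem_singleton]
        intro he
        rw [he] at hx34; omega),
      Finset.card_singleton]
  refine ⟨Q, hQP, hQcard, ?_⟩
  intro B hB
  by_contra hcon
  push_neg at hcon
  obtain ⟨hc2, hBQ⟩ := hcon
  have hc2 : 2 ≤ B.card := by omega
  have hBsub : B ⊆ Q := hB.1
  have hBmem : ∀ x ∈ B, x = p1 ∨ x = p2 ∨ x = p3 ∨ x = p4 :=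
    fun x hx => hQmem x (hBsub hx)
  by_cases b1 : p1 ∈ B <;> by_cases b2 : p2 ∈ B <;>
    by_cases b3 : p3 ∈ B <;> by_cases b4 : p4 ∈ B
  -- case TTTT : B = Q
  · exact hBQ (Finset.Subset.antisymm hBsub (by
      intro x hx
      rcases hQmem x hx with rfl | rfl | rfl | rfl <;> assumption))
  -- TTTF : p4 out, p1 p2 p3 in : snd violation
  · have hfree := hB.2 p4 hp4Q b4
    rcases hpat with ⟨hA1, hA2, hA3⟩ | ⟨hB1, hB2, hB3⟩
    · exact hfree.2 ⟨p1, b1, p2, b2, hA2, hA3⟩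
    · exact hfree.2 ⟨p2, b2, p1, b1, hB1, hB2⟩
  -- TTFT : p3 out : fst violation (p2, p4)
  · have hfree := hB.2 p3 hp3Q b3
    exact hfree.1 ⟨p2, b2, p4, b4, hx23, hx34⟩
  -- TTFF : p1 p2 in, p3 p4 out : p4 snd
  · have hfree := hB.2 p4 hp4Q b4
    rcases hpat with ⟨hA1, hA2, hA3⟩ | ⟨hB1, hB2, hB3⟩
    · exact hfree.2 ⟨p1, b1, p2, b2, hA2, hA3⟩
    · exact hfree.2 ⟨p2, b2, p1, b1, hB1, hB2⟩
  -- TFTT : p2 out : fst (p1, p3)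
  · have hfree := hB.2 p2 hp2Q b2
    exact hfree.1 ⟨p1, b1, p3, b3, hx12, hx23⟩
  -- TFTF : p1 p3 in : p2 fst (p1, p3)
  · have hfree := hB.2 p2 hp2Q b2
    exact hfree.1 ⟨p1, b1, p3, b3, hx12, hx23⟩
  -- TFFT : p1 p4 in : p2 fst (p1, p4)
  · have hfree := hB.2 p2 hp2Q b2
    exact hfree.1 ⟨p1, b1, p4, b4, hx12, by omega⟩
  -- TFFF : card ≤ 1
  · have : B.card ≤ 1 := Finset.card_le_one.2 (by
      intro x hx y hy
      have h1 := hBmem x hx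
      have h2 := hBmem y hy
      rcases h1 with rfl | rfl | rfl | rfl <;> rcases h2 with rfl | rfl | rfl | rfl <;>
        first | rfl | (exfalso; first
          | exact b2 hx | exact b3 hx | exact b4 hx
          | exact b2 hy | exact b3 hy | exact b4 hy))
    omega
  -- FTTT : p1 out : snd
  · have hfree := hB.2 p1 hp1Q b1
    rcases hpat with ⟨hA1, hA2, hA3⟩ | ⟨hB1, hB2, hB3⟩
    · exact hfree.2 ⟨p3, b3, p4, b4, hA1, hA2⟩
    · exact hfree.2 ⟨p4, b4, p3, b3, hB2, hB3⟩
  -- FTTF : p2 p3 in : p4 snd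
  · have hfree := hB.2 p4 hp4Q b4
    rcases hpat with ⟨hA1, hA2, hA3⟩ | ⟨hB1, hB2, hB3⟩
    · exact hfree.2 ⟨p3, b3, p2, b2, by omega, hA3⟩
    · exact hfree.2 ⟨p2, b2, p3, b3, hB1, by omega⟩
  -- FTFT : p2 p4 in : p3 fst
  · have hfree := hB.2 p3 hp3Q b3
    exact hfree.1 ⟨p2, b2, p4, b4, hx23, hx34⟩
  -- FTFF : card
  · have : B.card ≤ 1 := Finset.card_le_one.2 (by
      intro x hx y hy
      have h1 := hBmem x hx
      have h2 := hBmem y hy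
      rcases h1 with rfl | rfl | rfl | rfl <;> rcases h2 with rfl | rfl | rfl | rfl <;>
        first | rfl | (exfalso; first
          | exact b1 hx | exact b3 hx | exact b4 hx
          | exact b1 hy | exact b3 hy | exact b4 hy))
    omega
  -- FFTT : p3 p4 in : p1 snd
  · have hfree := hB.2 p1 hp1Q b1
    rcases hpat with ⟨hA1, hA2, hA3⟩ | ⟨hB1, hB2, hB3⟩
    · exact hfree.2 ⟨p3, b3, p4, b4, hA1, hA2⟩
    · exact hfree.2 ⟨p4, b4, p3, b3, hB2, hB3⟩
  -- FFTF : card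
  · have : B.card ≤ 1 := Finset.card_le_one.2 (by
      intro x hx y hy
      have h1 := hBmem x hx
      have h2 := hBmem y hy
      rcases h1 with rfl | rfl | rfl | rfl <;> rcases h2 with rfl | rfl | rfl | rfl <;>
        first | rfl | (exfalso; first
          | exact b1 hx | exact b2 hx | exact b4 hx
          | exact b1 hy | exact b2 hy | exact b4 hy))
    omega
  -- FFFT : card
  · have : B.card ≤ 1 := Finset.card_le_one.2 (by
      intro x hx y hy
      have h1 := hBmem x hx
      have h2 := hBmem y hy
      rcases h1 with rfl | rfl | rfl | rfl <;> rcases h2 with rfl | rfl | rfl | rfl <;>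
        first | rfl | (exfalso; first
          | exact b1 hx | exact b2 hx | exact b3 hx
          | exact b1 hy | exact b2 hy | exact b3 hy))
    omega
  -- FFFF : card
  · have : B.card ≤ 1 := Finset.card_le_one.2 (by
      intro x hx y hy
      have h1 := hBmem x hx
      exfalso
      rcases h1 with rfl | rfl | rfl | rfl
      exacts [b1 hx, b2 hx, b3 hx, b4 hx])
    omega

lemma reach {P : Finset Pt} (hgen : CGen P) (hP : CSimple P) :
    ∀ t, 4 ≤ t → t ≤ P.card → ∃ Q, Q ⊆ P ∧ CSimple Q ∧
      (Q.card = t ∨ Q.card = t + 1) := by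
  intro t
  induction t with
  | zero => intro h; omega
  | succ s IH =>
    intro h4 hle
    by_cases hs : s + 1 = 4
    · obtain ⟨Q, hQP, hQc, hQs⟩ := l4 hgen hP (by omega)
      exact ⟨Q, hQP, hQs, Or.inl (by omega)⟩
    · have h4s : 4 ≤ s := by omega
      obtain ⟨Q, hQP, hQs, hQc⟩ := IH h4s (by omega)
      rcases hQc with hc | hc
      · -- grow by one step
        obtain ⟨Q', hQQ', hQ'P, hQ's, hc'⟩ := grow hgen hP hQP hQs (by omega) (by omega)
        exact ⟨Q', hQ'P, hQ's, by omega⟩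
      · exact ⟨Q, hQP, hQs, Or.inl (by omega)⟩

/-- positions/values as points -/
noncomputable def pPts (l : ℕ) (σ : ℕ → ℕ) : Finset Pt :=
  (Finset.Icc 1 l).image fun i : ℕ => ((i : ℤ), (σ i : ℤ))

lemma mem_pPts {l : ℕ} {σ : ℕ → ℕ} {p : Pt} :
    p ∈ pPts l σ ↔ ∃ i : ℕ, 1 ≤ i ∧ i ≤ l ∧ p = ((i : ℤ), (σ i : ℤ)) := by
  unfold pPts
  simp only [Finset.mem_image, Finset.mem_Icc]
  constructor
  · rintro ⟨i, ⟨h1, h2⟩, rfl⟩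
    exact ⟨i, h1, h2, rfl⟩
  · rintro ⟨i, h1, h2, rfl⟩
    exact ⟨i, ⟨h1, h2⟩, rfl⟩

lemma pPts_inj (l : ℕ) (σ : ℕ → ℕ) : Set.InjOn (fun i : ℕ => ((i : ℤ), (σ i : ℤ)))
    (Finset.Icc 1 l) := by
  intro i _ j _ h
  have : (i : ℤ) = (j : ℤ) := congrArg Prod.fst h
  exact_mod_cast this

lemma pPts_card (l : ℕ) (σ : ℕ → ℕ) : (pPts l σ).card = l := by
  unfold pPts
  rw [Finset.card_image_of_injOn (pPts_inj l σ)]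
  simp

lemma permInj {l : ℕ} {σ : ℕ → ℕ} (hperm : IsPermOn l σ)
    {i j : ℕ} (hi1 : 1 ≤ i) (hil : i ≤ l) (hj1 : 1 ≤ j) (hjl : j ≤ l)
    (h : σ i = σ j) : i = j :=
  hperm.injOn (Set.mem_Icc.2 ⟨hi1, hil⟩) (Set.mem_Icc.2 ⟨hj1, hjl⟩) h

lemma permMem {l : ℕ} {σ : ℕ → ℕ} (hperm : IsPermOn l σ)
    {i : ℕ} (hi1 : 1 ≤ i) (hil : i ≤ l) : 1 ≤ σ i ∧ σ i ≤ l := by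
  have := hperm.mapsTo (Set.mem_Icc.2 ⟨hi1, hil⟩)
  exact Set.mem_Icc.1 this

lemma pPts_gen {l : ℕ} {σ : ℕ → ℕ} (hperm : IsPermOn l σ) : CGen (pPts l σ) := by
  intro p hp q hq hpq
  obtain ⟨i, hi1, hil, rfl⟩ := mem_pPts.1 hp
  obtain ⟨j, hj1, hjl, rfl⟩ := mem_pPts.1 hq
  have hij : i ≠ j := fun he => hpq (by rw [he])
  constructor
  · simp only [ne_eq, Int.natCast_inj]
    exact hij
  · simp only [ne_eq, Int.natCast_inj]
    exact fun he => hij (permInj hperm hi1 hil hj1 hjl he)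

lemma pPts_simple {l : ℕ} {σ : ℕ → ℕ} (hperm : IsPermOn l σ)
    (hsimple : IsSimplePerm l σ) : CSimple (pPts l σ) := by
  intro B hB
  by_contra hcon
  push_neg at hcon
  obtain ⟨hc2, hBne⟩ := hcon
  have hc2 : 2 ≤ B.card := by omega
  have hBsub : B ⊆ pPts l σ := hB.1
  set posB : Finset ℕ := (Finset.Icc 1 l).filter
    (fun i : ℕ => ((i : ℤ), (σ i : ℤ)) ∈ B) with hposdef
  have hposmem : ∀ i, i ∈ posB ↔ (1 ≤ i ∧ i ≤ l ∧ ((i : ℤ), (σ i : ℤ)) ∈ B) := by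
    intro i
    rw [hposdef, Finset.mem_filter, Finset.mem_Icc]
    tauto
  have hBdecode : ∀ p ∈ B, ∃ i ∈ posB, p = ((i : ℤ), (σ i : ℤ)) := by
    intro p hp
    obtain ⟨i, hi1, hil, rfl⟩ := mem_pPts.1 (hBsub hp)
    exact ⟨i, (hposmem i).2 ⟨hi1, hil, hp⟩, rfl⟩
  have hBimage : B = posB.image (fun i : ℕ => ((i : ℤ), (σ i : ℤ))) := by
    apply Finset.Subset.antisymm
    · intro p hp
      obtain ⟨i, hi, rfl⟩ := hBdecode p hp
      exact Finset.mem_image_of_mem _ hi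
    · intro p hp
      obtain ⟨i, hi, rfl⟩ := Finset.mem_image.1 hp
      exact ((hposmem i).1 hi).2.2
  have hposne : posB.Nonempty := by
    rcases B.eq_empty_or_nonempty with he | ⟨p, hp⟩
    · rw [he] at hc2; simp at hc2
    · obtain ⟨i, hi, _⟩ := hBdecode p hp
      exact ⟨i, hi⟩
  set a := posB.min' hposne with hadef
  set b := posB.max' hposne with hbdef
  have haposB : a ∈ posB := posB.min'_mem hposne
  have hbposB : b ∈ posB := posB.max'_mem hposne
  have ha1 : 1 ≤ a := ((hposmem a).1 haposB).1
  have hbl : b ≤ l := ((hposmem b).1 hbposB).2.1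
  have hab : a ≤ b := posB.min'_le b hbposB
  have hintv : ∀ i, a ≤ i → i ≤ b → i ∈ posB := by
    intro i hai hib
    by_contra hc
    have hia : i ≠ a := fun he => hc (he ▸ haposB)
    have hib' : i ≠ b := fun he => hc (he ▸ hbposB)
    have hi1 : 1 ≤ i := by omega
    have hil : i ≤ l := by
      have := ((hposmem b).1 hbposB).2.1
      omega
    have hqpts : ((i : ℤ), (σ i : ℤ)) ∈ pPts l σ := mem_pPts.2 ⟨i, hi1, hil, rfl⟩
    have hqB : ((i : ℤ), (σ i : ℤ)) ∉ B := by
      intro hqB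
      exact hc ((hposmem i).2 ⟨hi1, hil, hqB⟩)
    apply (hB.2 _ hqpts hqB).1
    refine ⟨((a : ℤ), (σ a : ℤ)), ((hposmem a).1 haposB).2.2,
      ((b : ℤ), (σ b : ℤ)), ((hposmem b).1 hbposB).2.2, ?_, ?_⟩
    · show (a : ℤ) < (i : ℤ)
      have : a < i := by omega
      exact_mod_cast this
    · show (i : ℤ) < (b : ℤ)
      have : i < b := by omega
      exact_mod_cast this
  have hposIcc : posB = Finset.Icc a b := by
    apply Finset.Subset.antisymm
    · intro i hi
      rw [Finset.mem_Icc]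
      exact ⟨posB.min'_le i hi, posB.le_max' i hi⟩
    · intro i hi
      rw [Finset.mem_Icc] at hi
      exact hintv i hi.1 hi.2
  have hcardB : B.card = b - a + 1 := by
    rw [hBimage, Finset.card_image_of_injOn, hposIcc, Nat.card_Icc]
    · omega
    · intro i hi j hj h
      have : (i : ℤ) = (j : ℤ) := congrArg Prod.fst h
      exact_mod_cast this
  have haltb : a < b := by
    by_contra hc
    have : a = b := by omega
    rw [hcardB] at hc2
    omega
  -- values
  set vals : Finset ℕ := posB.image σ with hvalsdef
  have hvalsne : vals.Nonempty := ⟨σ a, Finset.mem_image_of_mem σ haposB⟩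
  set cmin := vals.min' hvalsne with hcmindef
  set cmax := vals.max' hvalsne with hcmaxdef
  obtain ⟨imin, himin, himin'⟩ := Finset.mem_image.1 (vals.min'_mem hvalsne)
  obtain ⟨imax, himax, himax'⟩ := Finset.mem_image.1 (vals.max'_mem hvalsne)
  rw [← hcmindef] at himin'
  rw [← hcmaxdef] at himax'
  have hvalbound : ∀ i ∈ posB, 1 ≤ σ i ∧ σ i ≤ l := by
    intro i hi
    exact permMem hperm ((hposmem i).1 hi).1 ((hposmem i).1 hi).2.1
  have hcminl : 1 ≤ cmin ∧ cmin ≤ l := by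
    rw [← himin']; exact hvalbound imin himin
  have hcmaxl : 1 ≤ cmax ∧ cmax ≤ l := by
    rw [← himax']; exact hvalbound imax himax
  have hyintv : ∀ w, cmin ≤ w → w ≤ cmax → w ∈ vals := by
    intro w hw1 hw2
    by_cases hwv : w ∈ vals
    · exact hwv
    · exfalso
      have hw1' : cmin < w := by
        rcases Nat.lt_or_ge cmin w with h | h
        · exact h
        · have he : w = cmin := by omega
          rw [he] at hwv
          exact (hwv (vals.min'_mem hvalsne)).elim
      have hw2' : w < cmax := by
        rcases Nat.lt_or_ge w cmax with h | h
        · exact h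
        · have he : w = cmax := by omega
          rw [he] at hwv
          exact (hwv (vals.max'_mem hvalsne)).elim
      have hwl : 1 ≤ w ∧ w ≤ l := by omega
      obtain ⟨j, hj, hjw⟩ := hperm.surjOn (Set.mem_Icc.2 hwl)
      rw [Set.mem_Icc] at hj
      have hjpos : j ∉ posB := by
        intro hc
        apply hwv
        rw [hvalsdef]
        rw [← hjw]
        exact Finset.mem_image_of_mem σ hc
      have hqpts : ((j : ℤ), (σ j : ℤ)) ∈ pPts l σ := mem_pPts.2 ⟨j, hj.1, hj.2, rfl⟩
      have hqB : ((j : ℤ), (σ j : ℤ)) ∉ B := by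
        intro hqB
        exact hjpos ((hposmem j).2 ⟨hj.1, hj.2, hqB⟩)
      apply (hB.2 _ hqpts hqB).2
      refine ⟨((imin : ℤ), (σ imin : ℤ)), ((hposmem imin).1 himin).2.2,
        ((imax : ℤ), (σ imax : ℤ)), ((hposmem imax).1 himax).2.2, ?_, ?_⟩
      · show (σ imin : ℤ) < (σ j : ℤ)
        have : σ imin < σ j := by rw [himin', hjw]; omega
        exact_mod_cast this
      · show (σ j : ℤ) < (σ imax : ℤ)
        have : σ j < σ imax := by rw [himax', hjw]; omega
        exact_mod_cast this
  have hvalsIcc : vals = Finset.Icc cmin cmax := by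
    apply Finset.Subset.antisymm
    · intro w hw
      rw [Finset.mem_Icc]
      exact ⟨vals.min'_le w hw, vals.le_max' w hw⟩
    · intro w hw
      rw [Finset.mem_Icc] at hw
      exact hyintv w hw.1 hw.2
  have hvalscard : vals.card = b - a + 1 := by
    rw [hvalsdef, Finset.card_image_of_injOn, hposIcc, Nat.card_Icc]
    · omega
    · intro i hi j hj h
      exact permInj hperm ((hposmem i).1 hi).1 ((hposmem i).1 hi).2.1
        ((hposmem j).1 hj).1 ((hposmem j).1 hj).2.1 h
  have hcmax_eq : cmax = cmin + (b - a) := by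
    have hmm : cmin ≤ cmax := by
      rw [hcmindef, hcmaxdef]
      exact vals.min'_le _ (vals.max'_mem hvalsne)
    have h1 : vals.card = cmax - cmin + 1 := by
      rw [hvalsIcc, Nat.card_Icc]
      omega
    omega
  have hblock : IsBlockOf l σ a b := by
    refine ⟨ha1, hab, hbl, cmin, ?_⟩
    ext w
    constructor
    · rintro ⟨i, hi, rfl⟩
      rw [Set.mem_Icc] at hi
      have : σ i ∈ vals := Finset.mem_image_of_mem σ (hintv i hi.1 hi.2)
      rw [hvalsIcc, Finset.mem_Icc] at this
      rw [Set.mem_Icc]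
      omega
    · intro hw
      rw [Set.mem_Icc] at hw
      have : w ∈ vals := by
        rw [hvalsIcc, Finset.mem_Icc]
        omega
      rw [hvalsdef] at this
      obtain ⟨i, hi, hiw⟩ := Finset.mem_image.1 this
      have : i ∈ Finset.Icc a b := hposIcc ▸ hi
      rw [Finset.mem_Icc] at this
      exact ⟨i, Set.mem_Icc.2 this, hiw⟩
  rcases hsimple a b hblock with he | ⟨he1, he2⟩
  · omega
  · apply hBne
    rw [hBimage]
    unfold pPts
    rw [hposIcc, he1, he2]

namespace Rank

noncomputable def rankIn (s : Finset ℤ) (x : ℤ) : ℕ := (s.filter (· ≤ x)).card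

lemma rankIn_mono {s : Finset ℤ} {x y : ℤ} (h : x ≤ y) : rankIn s x ≤ rankIn s y := by
  apply Finset.card_le_card
  intro a ha
  rw [Finset.mem_filter] at ha ⊢
  exact ⟨ha.1, le_trans ha.2 h⟩

lemma rankIn_strict {s : Finset ℤ} {x y : ℤ} (hy : y ∈ s) (h : x < y) :
    rankIn s x < rankIn s y := by
  apply Finset.card_lt_card
  rw [Finset.ssubset_iff_of_subset (by
    intro a ha
    rw [Finset.mem_filter] at ha ⊢
    exact ⟨ha.1, by omega⟩)]
  exact ⟨y, Finset.mem_filter.2 ⟨hy, le_refl _⟩, by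
    rw [Finset.mem_filter]
    push_neg
    intro _
    omega⟩

lemma rankIn_lt_iff {s : Finset ℤ} {x y : ℤ} (hx : x ∈ s) (hy : y ∈ s) :
    rankIn s x < rankIn s y ↔ x < y := by
  constructor
  · intro h
    by_contra hc
    push_neg at hc
    have := rankIn_mono (s := s) hc
    omega
  · exact rankIn_strict hy

lemma rankIn_ge_one {s : Finset ℤ} {x : ℤ} (hx : x ∈ s) : 1 ≤ rankIn s x := by
  have : x ∈ s.filter (· ≤ x) := Finset.mem_filter.2 ⟨hx, le_refl _⟩
  have := Finset.card_pos.2 ⟨x, this⟩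
  unfold rankIn
  omega

lemma rankIn_le_card {s : Finset ℤ} {x : ℤ} : rankIn s x ≤ s.card :=
  Finset.card_le_card (Finset.filter_subset _ _)

lemma rankIn_injOn {s : Finset ℤ} {x y : ℤ} (hx : x ∈ s) (hy : y ∈ s)
    (h : rankIn s x = rankIn s y) : x = y := by
  by_contra hc
  rcases lt_or_gt_of_ne hc with h' | h'
  · have := rankIn_strict hy h'
    omega
  · have := rankIn_strict hx h'
    omega

lemma rankIn_surj {s : Finset ℤ} {j : ℕ} (h1 : 1 ≤ j) (h2 : j ≤ s.card) :
    ∃ x ∈ s, rankIn s x = j := by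
  have himg : s.image (rankIn s) = Finset.Icc 1 s.card := by
    apply Finset.eq_of_subset_of_card_le
    · intro w hw
      obtain ⟨x, hx, rfl⟩ := Finset.mem_image.1 hw
      rw [Finset.mem_Icc]
      exact ⟨rankIn_ge_one hx, rankIn_le_card⟩
    · rw [Nat.card_Icc]
      have : (s.image (rankIn s)).card = s.card :=
        Finset.card_image_of_injOn (fun x hx y hy h => rankIn_injOn hx hy h)
      omega
  have : j ∈ s.image (rankIn s) := by
    rw [himg, Finset.mem_Icc]
    exact ⟨h1, h2⟩
  obtain ⟨x, hx, hxj⟩ := Finset.mem_image.1 this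
  exact ⟨x, hx, hxj⟩

end Rank

open Rank

lemma contains_trans {n l m : ℕ} {X σ τ : ℕ → ℕ}
    (h1 : Contains n X l σ) (h2 : Contains l σ m τ) : Contains n X m τ := by
  obtain ⟨f, hf1, hf2, hf3⟩ := h1
  obtain ⟨g, hg1, hg2, hg3⟩ := h2
  refine ⟨f ∘ g, fun i hi => hf1 (hg1 hi), ?_, ?_⟩
  · intro i hi j hj hij
    exact hf2 (hg1 hi) (hg1 hj) (hg2 hi hj hij)
  · intro i hi j hj
    rw [hg3 i hi j hj]
    exact hf3 (g i) (hg1 hi) (g j) (hg1 hj)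

/-- Pattern extraction from a subset of the point set. -/
lemma extract {l : ℕ} {σ : ℕ → ℕ} (hperm : IsPermOn l σ) {Q : Finset Pt}
    (hQ : Q ⊆ pPts l σ) :
    ∃ τ : ℕ → ℕ, IsPermOn Q.card τ ∧ (CSimple Q → IsSimplePerm Q.card τ) ∧
      Contains l σ Q.card τ := by
  classical
  set m := Q.card with hmdef
  have hgenQ : CGen Q := (pPts_gen hperm).mono hQ
  set xs := Q.image Prod.fst with hxsdef
  set ys := Q.image Prod.snd with hysdef
  have hinj1 : ∀ p ∈ Q, ∀ q ∈ Q, p.1 = q.1 → p = q := by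
    intro p hp q hq h
    by_contra hc
    exact (hgenQ p hp q hq hc).1 h
  have hinj2 : ∀ p ∈ Q, ∀ q ∈ Q, p.2 = q.2 → p = q := by
    intro p hp q hq h
    by_contra hc
    exact (hgenQ p hp q hq hc).2 h
  have hxscard : xs.card = m := by
    rw [hxsdef, Finset.card_image_of_injOn (fun p hp q hq h => hinj1 p hp q hq h)]
  have hyscard : ys.card = m := by
    rw [hysdef, Finset.card_image_of_injOn (fun p hp q hq h => hinj2 p hp q hq h)]
  have hmemxs : ∀ p ∈ Q, p.1 ∈ xs := fun p hp => by
    rw [hxsdef]; exact Finset.mem_image_of_mem _ hp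
  have hmemys : ∀ p ∈ Q, p.2 ∈ ys := fun p hp => by
    rw [hysdef]; exact Finset.mem_image_of_mem _ hp
  have hptex : ∀ i : ℕ, 1 ≤ i → i ≤ m → ∃ p, p ∈ Q ∧ rankIn xs p.1 = i := by
    intro i h1 h2
    obtain ⟨x, hx, hxr⟩ := rankIn_surj (s := xs) h1 (by omega)
    rw [hxsdef] at hx
    obtain ⟨p, hp, rfl⟩ := Finset.mem_image.1 hx
    exact ⟨p, hp, hxr⟩
  have hptuniq : ∀ p ∈ Q, ∀ q ∈ Q, rankIn xs p.1 = rankIn xs q.1 → p = q := by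
    intro p hp q hq h
    exact hinj1 p hp q hq (rankIn_injOn (hmemxs p hp) (hmemxs q hq) h)
  set pt : ℕ → Pt := fun i =>
    if h : ∃ p, p ∈ Q ∧ rankIn xs p.1 = i then h.choose else ((0 : ℤ), (0 : ℤ))
    with hptdef
  have hptQ : ∀ i : ℕ, 1 ≤ i → i ≤ m → pt i ∈ Q ∧ rankIn xs (pt i).1 = i := by
    intro i h1 h2
    have h := hptex i h1 h2
    rw [hptdef]
    simp only [dif_pos h]
    exact h.choose_spec
  have hptP : ∀ p ∈ Q, pt (rankIn xs p.1) = p := by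
    intro p hp
    have h1 : 1 ≤ rankIn xs p.1 := rankIn_ge_one (hmemxs p hp)
    have h2 : rankIn xs p.1 ≤ m := by
      have := rankIn_le_card (s := xs) (x := p.1)
      omega
    have := hptQ _ h1 h2
    exact hptuniq _ this.1 p hp this.2
  set τ : ℕ → ℕ := fun i => rankIn ys (pt i).2 with hτdef
  have hτrange : ∀ i : ℕ, 1 ≤ i → i ≤ m → 1 ≤ τ i ∧ τ i ≤ m := by
    intro i h1 h2
    have he : τ i = rankIn ys (pt i).2 := rfl
    constructor
    · rw [he]
      exact rankIn_ge_one (hmemys _ (hptQ i h1 h2).1)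
    · have := rankIn_le_card (s := ys) (x := (pt i).2)
      omega
  have hτiff : ∀ i, 1 ≤ i → i ≤ m → ∀ j, 1 ≤ j → j ≤ m →
      (τ i < τ j ↔ (pt i).2 < (pt j).2) := by
    intro i hi1 hi2 j hj1 hj2
    exact rankIn_lt_iff (hmemys _ (hptQ i hi1 hi2).1) (hmemys _ (hptQ j hj1 hj2).1)
  have hptmono : ∀ i, 1 ≤ i → i ≤ m → ∀ j, 1 ≤ j → j ≤ m → i < j →
      (pt i).1 < (pt j).1 := by
    intro i hi1 hi2 j hj1 hj2 hij
    have h1 := (hptQ i hi1 hi2).2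
    have h2 := (hptQ j hj1 hj2).2
    rw [← rankIn_lt_iff (hmemxs _ (hptQ i hi1 hi2).1) (hmemxs _ (hptQ j hj1 hj2).1)]
    omega
  have hperm' : IsPermOn m τ := by
    refine ⟨?_, ?_, ?_⟩
    · intro i hi
      rw [Set.mem_Icc] at hi ⊢
      exact hτrange i hi.1 hi.2
    · intro i hi j hj h
      rw [Set.mem_Icc] at hi hj
      have hpi := hptQ i hi.1 hi.2
      have hpj := hptQ j hj.1 hj.2
      have h' : rankIn ys (pt i).2 = rankIn ys (pt j).2 := h
      have : (pt i).2 = (pt j).2 :=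
        rankIn_injOn (hmemys _ hpi.1) (hmemys _ hpj.1) h'
      have : pt i = pt j := hinj2 _ hpi.1 _ hpj.1 this
      rw [← hpi.2, ← hpj.2, this]
    · intro w hw
      rw [Set.mem_Icc] at hw
      obtain ⟨y, hy, hyr⟩ := rankIn_surj (s := ys) hw.1 (by omega)
      rw [hysdef] at hy
      obtain ⟨p, hp, rfl⟩ := Finset.mem_image.1 hy
      have h1 : 1 ≤ rankIn xs p.1 := rankIn_ge_one (hmemxs p hp)
      have h2 : rankIn xs p.1 ≤ m := by
        have := rankIn_le_card (s := xs) (x := p.1)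
        omega
      refine ⟨rankIn xs p.1, Set.mem_Icc.2 ⟨h1, h2⟩, ?_⟩
      have he : τ (rankIn xs p.1) = rankIn ys (pt (rankIn xs p.1)).2 := rfl
      rw [he, hptP p hp]
      exact hyr
  have hcontains : Contains l σ m τ := by
    have hdecode : ∀ i, 1 ≤ i → i ≤ m → ∃ pos : ℕ, 1 ≤ pos ∧ pos ≤ l ∧
        pt i = ((pos : ℤ), (σ pos : ℤ)) := by
      intro i h1 h2
      exact mem_pPts.1 (hQ (hptQ i h1 h2).1)
    refine ⟨fun i => (pt i).1.toNat, ?_, ?_, ?_⟩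
    · intro i hi
      rw [Set.mem_Icc] at hi
      obtain ⟨pos, hp1, hp2, hpe⟩ := hdecode i hi.1 hi.2
      show (pt i).1.toNat ∈ Set.Icc 1 l
      rw [Set.mem_Icc, hpe]
      simp
      omega
    · intro i hi j hj hij
      rw [Set.mem_Icc] at hi hj
      have hmono := hptmono i hi.1 hi.2 j hj.1 hj.2 hij
      obtain ⟨pi, hpi1, _, hpie⟩ := hdecode i hi.1 hi.2
      obtain ⟨pj, hpj1, _, hpje⟩ := hdecode j hj.1 hj.2
      show (pt i).1.toNat < (pt j).1.toNat
      rw [hpie, hpje] at hmono ⊢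
      simp at hmono ⊢
      omega
    · intro i hi j hj
      rw [Set.mem_Icc] at hi hj
      obtain ⟨pi, hpi1, _, hpie⟩ := hdecode i hi.1 hi.2
      obtain ⟨pj, hpj1, _, hpje⟩ := hdecode j hj.1 hj.2
      show τ i < τ j ↔ σ (pt i).1.toNat < σ (pt j).1.toNat
      rw [hτiff i hi.1 hi.2 j hj.1 hj.2, hpie, hpje]
      simp
  refine ⟨τ, hperm', ?_, hcontains⟩
  -- simplicity
  intro hQsimple
  intro a b hblock
  obtain ⟨ha1, hab, hbm, c, himg⟩ := hblock
  by_cases haeb : a = b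
  · exact Or.inl haeb
  set B : Finset Pt := Q.filter (fun p => a ≤ rankIn xs p.1 ∧ rankIn xs p.1 ≤ b)
    with hBdef
  have hBQ : B ⊆ Q := Finset.filter_subset _ _
  have hBmem : ∀ p, p ∈ B ↔ p ∈ Q ∧ a ≤ rankIn xs p.1 ∧ rankIn xs p.1 ≤ b := by
    intro p
    rw [hBdef, Finset.mem_filter]
  have hτval : ∀ p ∈ Q, τ (rankIn xs p.1) = rankIn ys p.2 := by
    intro p hp
    have he : τ (rankIn xs p.1) = rankIn ys (pt (rankIn xs p.1)).2 := rfl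
    rw [he, hptP p hp]
  have hτimg : ∀ i, a ≤ i → i ≤ b → τ i ∈ Set.Icc c (c + (b - a)) := by
    intro i h1 h2
    rw [← himg]
    exact ⟨i, Set.mem_Icc.2 ⟨h1, h2⟩, rfl⟩
  have hblockB : CBlock Q B := by
    refine ⟨hBQ, ?_⟩
    intro q hq hqB
    have hiq1 : 1 ≤ rankIn xs q.1 := rankIn_ge_one (hmemxs q hq)
    have hiq2 : rankIn xs q.1 ≤ m := by
      have := rankIn_le_card (s := xs) (x := q.1)
      omega
    have hiqout : ¬ (a ≤ rankIn xs q.1 ∧ rankIn xs q.1 ≤ b) := by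
      intro hc
      exact hqB ((hBmem q).2 ⟨hq, hc⟩)
    constructor
    · rintro ⟨p, hp, p', hp', h1', h2'⟩
      have hpm := (hBmem p).1 hp
      have hpm' := (hBmem p').1 hp'
      have r1 : rankIn xs p.1 < rankIn xs q.1 :=
        (rankIn_lt_iff (hmemxs p hpm.1) (hmemxs q hq)).2 h1'
      have r2 : rankIn xs q.1 < rankIn xs p'.1 :=
        (rankIn_lt_iff (hmemxs q hq) (hmemxs p' hpm'.1)).2 h2'
      have := hpm.2
      have := hpm'.2
      omega
    · rintro ⟨p, hp, p', hp', h1', h2'⟩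
      have hpm := (hBmem p).1 hp
      have hpm' := (hBmem p').1 hp'
      have r1 : rankIn ys p.2 < rankIn ys q.2 :=
        (rankIn_lt_iff (hmemys p hpm.1) (hmemys q hq)).2 h1'
      have r2 : rankIn ys q.2 < rankIn ys p'.2 :=
        (rankIn_lt_iff (hmemys q hq) (hmemys p' hpm'.1)).2 h2'
      have hv1 := hτimg _ hpm.2.1 hpm.2.2
      have hv2 := hτimg _ hpm'.2.1 hpm'.2.2
      rw [hτval p hpm.1] at hv1
      rw [hτval p' hpm'.1] at hv2
      rw [Set.mem_Icc] at hv1 hv2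
      have hjq : rankIn ys q.2 ∈ Set.Icc c (c + (b - a)) := by
        rw [Set.mem_Icc]
        omega
      rw [← himg] at hjq
      obtain ⟨i, hi, hiq⟩ := hjq
      rw [Set.mem_Icc] at hi
      have hi1 : 1 ≤ i := by omega
      have hi2 : i ≤ m := by omega
      have hpti := hptQ i hi1 hi2
      have : rankIn ys (pt i).2 = rankIn ys q.2 := by
        rw [← hiq]
      have : (pt i).2 = q.2 := rankIn_injOn (hmemys _ hpti.1) (hmemys q hq) this
      have hpq : pt i = q := hinj2 _ hpti.1 q hq this
      apply hiqout
      rw [← hpq, hpti.2]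
      exact hi
  rcases hQsimple _ hblockB with hc | hc
  · exfalso
    -- B contains at least 2 points: the ones with ranks a and b
    have hpa := hptQ a (by omega) (by omega)
    have hpb := hptQ b (by omega) (by omega)
    have hpaB : pt a ∈ B := (hBmem _).2 ⟨hpa.1, by omega, by omega⟩
    have hpbB : pt b ∈ B := (hBmem _).2 ⟨hpb.1, by omega, by omega⟩
    have : pt a ≠ pt b := by
      intro he
      have := hpa.2
      rw [he, hpb.2] at this
      omega
    have := Finset.one_lt_card_iff.2 ⟨pt a, pt b, hpaB, hpbB, this⟩
    omega
  · -- B = Q : then a = 1 and b = m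
    right
    have : ∀ i, 1 ≤ i → i ≤ m → a ≤ i ∧ i ≤ b := by
      intro i h1 h2
      have hpti := hptQ i h1 h2
      have : pt i ∈ B := by rw [hc]; exact hpti.1
      have := (hBmem _).1 this
      rw [hpti.2] at this
      exact this.2
    have h1 := this 1 le_rfl (by omega)
    have h2 := this m (by omega) le_rfl
    omega
  -- (end extract)
end STCore

/-- For every permutation `X ∈ S_n` and integer `k ≥ 2`: `X` avoids every
simple permutation of length at least `k+1` iff `X` avoids every simple permutation of
length exactly `k+1` and every simple permutation of length exactly `k+2`. -/
theorem avoids_simple_ge_iff_two_lengths (n k : ℕ) (hn : 1 ≤ n) (hk : 2 ≤ k)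
    (X : ℕ → ℕ) (hX : IsPermOn n X) :
    (∀ l : ℕ, k + 1 ≤ l → ∀ σ : ℕ → ℕ, IsPermOn l σ → IsSimplePerm l σ → Avoids n X l σ) ↔
      ((∀ σ : ℕ → ℕ, IsPermOn (k + 1) σ → IsSimplePerm (k + 1) σ → Avoids n X (k + 1) σ) ∧
       (∀ σ : ℕ → ℕ, IsPermOn (k + 2) σ → IsSimplePerm (k + 2) σ → Avoids n X (k + 2) σ)) := by
  constructor
  · intro h
    exact ⟨h (k + 1) le_rfl, h (k + 2) (by omega)⟩
  · rintro ⟨h1, h2⟩ l hl σ hσp hσs hcont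
    rcases Nat.lt_or_ge l (k + 3) with hl3 | hl3
    · have : l = k + 1 ∨ l = k + 2 := by omega
      rcases this with rfl | rfl
      · exact h1 σ hσp hσs hcont
      · exact h2 σ hσp hσs hcont
    · have hgen := STCore.pPts_gen hσp
      have hsimp := STCore.pPts_simple hσp hσs
      have hcard : (STCore.pPts l σ).card = l := STCore.pPts_card l σ
      by_cases hk2 : k = 2
      · obtain ⟨Q, hQP, hQc, hQs⟩ := STCore.l4 hgen hsimp (by omega)
        obtain ⟨τ, hτp, hτs, hτc⟩ := STCore.extract hσp hQP
        have hC : Contains n X Q.card τ := STCore.contains_trans hcont hτc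
        have hS := hτs hQs
        have e : Q.card = k + 2 := by omega
        rw [e] at hτp hS hC
        exact h2 τ hτp hS hC
      · obtain ⟨Q, hQP, hQs, hQc⟩ := STCore.reach hgen hsimp (k + 1)
          (by omega) (by omega)
        obtain ⟨τ, hτp, hτs, hτc⟩ := STCore.extract hσp hQP
        have hC : Contains n X Q.card τ := STCore.contains_trans hcont hτc
        have hS := hτs hQs
        rcases hQc with e | e
        · rw [e] at hτp hS hC
          exact h1 τ hτp hS hC
        · rw [e] at hτp hS hC
          exact h2 τ hτp hS hC
end

section
/- There exists a constant C such that for every k ≥ 2, every n ≥ 1, and every k-decomposable permutation X ∈ S_n (viewed as the point set {(X(t), t) : t ∈ [n]}), the optimum cost satisfies OPT(X) ≤ C · n · log₂(k+1). -/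
open scoped Classical

namespace KD

lemma inRect_comm {α β : Type*} [LinearOrder α] [LinearOrder β] (p q r : α × β) :
    InRect p q r ↔ InRect q p r := by
  unfold InRect
  rw [min_comm q.1, max_comm q.1, min_comm q.2, max_comm q.2]

def bpath (lo hi c : ℕ) : Finset ℕ :=
  if h : hi ≤ lo then {lo}
  else if c = (lo+hi)/2 then {(lo+hi)/2}
  else if c < (lo+hi)/2 then insert ((lo+hi)/2) (bpath lo ((lo+hi)/2 - 1) c)
  else insert ((lo+hi)/2) (bpath ((lo+hi)/2 + 1) hi c)
termination_by hi - lo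
decreasing_by all_goals omega

lemma bpath_eq_base {lo hi c : ℕ} (h : hi ≤ lo) : bpath lo hi c = {lo} := by
  rw [bpath]; simp [h]

lemma bpath_eq_mid {lo hi c : ℕ} (h : ¬ hi ≤ lo) (he : c = (lo+hi)/2) :
    bpath lo hi c = {(lo+hi)/2} := by
  rw [bpath]; simp [h, he]

lemma bpath_eq_left {lo hi c : ℕ} (h : ¬ hi ≤ lo) (hlt : c < (lo+hi)/2) :
    bpath lo hi c = insert ((lo+hi)/2) (bpath lo ((lo+hi)/2 - 1) c) := by
  rw [bpath, dif_neg h, if_neg (by omega : ¬ c = (lo+hi)/2), if_pos hlt]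

lemma bpath_eq_right {lo hi c : ℕ} (h : ¬ hi ≤ lo) (hgt : (lo+hi)/2 < c) :
    bpath lo hi c = insert ((lo+hi)/2) (bpath ((lo+hi)/2 + 1) hi c) := by
  rw [bpath, dif_neg h, if_neg (by omega : ¬ c = (lo+hi)/2), if_neg (by omega : ¬ c < (lo+hi)/2)]

lemma bpath_range : ∀ lo hi c, lo ≤ c → c ≤ hi → ∀ y ∈ bpath lo hi c, lo ≤ y ∧ y ≤ hi := by
  intro lo hi c
  induction lo, hi using bpath.induct (c := c) with
  | case1 lo hi h =>
      intro h1 h2 y hy; rw [bpath_eq_base h] at hy; simp at hy; omega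
  | case2 lo hi h he =>
      subst he
      intro h1 h2 y hy; rw [bpath_eq_mid h rfl] at hy; simp at hy; omega
  | case3 lo hi h he hlt ih =>
      intro h1 h2 y hy; rw [bpath_eq_left h hlt] at hy
      rcases Finset.mem_insert.mp hy with rfl | hy
      · omega
      · have := ih h1 (by omega) y hy; omega
  | case4 lo hi h he hlt ih =>
      intro h1 h2 y hy; rw [bpath_eq_right h (by omega)] at hy
      rcases Finset.mem_insert.mp hy with rfl | hy
      · omega
      · have := ih (by omega) h2 y hy; omega

lemma bpath_self : ∀ lo hi c, lo ≤ c → c ≤ hi → c ∈ bpath lo hi c := by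
  intro lo hi c
  induction lo, hi using bpath.induct (c := c) with
  | case1 lo hi h => intro h1 h2; rw [bpath_eq_base h]; simp; omega
  | case2 lo hi h he => subst he; intro h1 h2; rw [bpath_eq_mid h rfl]; simp
  | case3 lo hi h he hlt ih =>
      intro h1 h2; rw [bpath_eq_left h hlt]
      exact Finset.mem_insert_of_mem (ih h1 (by omega))
  | case4 lo hi h he hlt ih =>
      intro h1 h2; rw [bpath_eq_right h (by omega)]
      exact Finset.mem_insert_of_mem (ih (by omega) h2)

lemma bpath_mid_mem (lo hi c : ℕ) (h : ¬ hi ≤ lo) : (lo+hi)/2 ∈ bpath lo hi c := by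
  by_cases he : c = (lo+hi)/2
  · rw [bpath_eq_mid h he]; simp
  · by_cases hlt : c < (lo+hi)/2
    · rw [bpath_eq_left h hlt]; exact Finset.mem_insert_self _ _
    · rw [bpath_eq_right h (by omega)]; exact Finset.mem_insert_self _ _

lemma bpath_trans : ∀ lo hi c, lo ≤ c → c ≤ hi →
    ∀ y ∈ bpath lo hi c, bpath lo hi y ⊆ bpath lo hi c := by
  intro lo hi c
  induction lo, hi using bpath.induct (c := c) with
  | case1 lo hi h =>
      intro h1 h2 y hy
      rw [bpath_eq_base h] at hy; simp at hy; subst hy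
      rw [bpath_eq_base h, bpath_eq_base h]
  | case2 lo hi h he =>
      subst he
      intro h1 h2 y hy
      rw [bpath_eq_mid h rfl] at hy; simp at hy; subst hy
      rw [bpath_eq_mid h rfl]
  | case3 lo hi h he hlt ih =>
      intro h1 h2 y hy
      rw [bpath_eq_left h hlt] at hy
      rcases Finset.mem_insert.mp hy with rfl | hy
      · rw [bpath_eq_mid h rfl, bpath_eq_left h hlt]
        intro z hz; simp at hz; subst hz; exact Finset.mem_insert_self _ _
      · have hyr := bpath_range lo ((lo+hi)/2 - 1) c h1 (by omega) y hy
        have hsub := ih h1 (by omega) y hy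
        rw [bpath_eq_left h (by omega), bpath_eq_left h hlt]
        intro z hz
        rcases Finset.mem_insert.mp hz with rfl | hz
        · exact Finset.mem_insert_self _ _
        · exact Finset.mem_insert_of_mem (hsub hz)
  | case4 lo hi h he hlt ih =>
      intro h1 h2 y hy
      rw [bpath_eq_right h (by omega)] at hy
      rcases Finset.mem_insert.mp hy with rfl | hy
      · rw [bpath_eq_mid h rfl, bpath_eq_right h (by omega)]
        intro z hz; simp at hz; subst hz; exact Finset.mem_insert_self _ _
      · have hyr := bpath_range ((lo+hi)/2 + 1) hi c (by omega) h2 y hy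
        have hsub := ih (by omega) h2 y hy
        rw [bpath_eq_right h (by omega : (lo+hi)/2 < y), bpath_eq_right h (by omega)]
        intro z hz
        rcases Finset.mem_insert.mp hz with rfl | hz
        · exact Finset.mem_insert_self _ _
        · exact Finset.mem_insert_of_mem (hsub hz)

lemma bpath_lca : ∀ d lo hi y z, hi - lo ≤ d → lo ≤ y → y ≤ hi → lo ≤ z → z ≤ hi →
    ∃ w, w ∈ bpath lo hi y ∧ w ∈ bpath lo hi z ∧ min y z ≤ w ∧ w ≤ max y z := by
  intro d
  induction d with
  | zero =>
      intro lo hi y z hd h1 h2 h3 h4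
      have : y = z := by omega
      subst this
      exact ⟨y, bpath_self _ _ _ h1 h2, bpath_self _ _ _ h1 h2, by omega, by omega⟩
  | succ d ih =>
      intro lo hi y z hd h1 h2 h3 h4
      by_cases h : hi ≤ lo
      · have : y = z := by omega
        subst this
        exact ⟨y, bpath_self _ _ _ h1 h2, bpath_self _ _ _ h1 h2, by omega, by omega⟩
      · by_cases hy' : y < (lo+hi)/2
        · by_cases hz' : z < (lo+hi)/2
          · obtain ⟨w, hw1, hw2, hw3, hw4⟩ :=
              ih lo ((lo+hi)/2 - 1) y z (by omega) h1 (by omega) h3 (by omega)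
            refine ⟨w, ?_, ?_, hw3, hw4⟩
            · rw [bpath_eq_left h hy']; exact Finset.mem_insert_of_mem hw1
            · rw [bpath_eq_left h hz']; exact Finset.mem_insert_of_mem hw2
          · exact ⟨(lo+hi)/2, bpath_mid_mem _ _ _ h, bpath_mid_mem _ _ _ h, by omega, by omega⟩
        · by_cases hz' : z < (lo+hi)/2
          · exact ⟨(lo+hi)/2, bpath_mid_mem _ _ _ h, bpath_mid_mem _ _ _ h, by omega, by omega⟩
          · by_cases hy2 : y = (lo+hi)/2
            · exact ⟨(lo+hi)/2, bpath_mid_mem _ _ _ h, bpath_mid_mem _ _ _ h, by omega, by omega⟩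
            · by_cases hz2 : z = (lo+hi)/2
              · exact ⟨(lo+hi)/2, bpath_mid_mem _ _ _ h, bpath_mid_mem _ _ _ h, by omega, by omega⟩
              · obtain ⟨w, hw1, hw2, hw3, hw4⟩ :=
                  ih ((lo+hi)/2 + 1) hi y z (by omega) (by omega) h2 (by omega) h4
                refine ⟨w, ?_, ?_, hw3, hw4⟩
                · rw [bpath_eq_right h (by omega)]; exact Finset.mem_insert_of_mem hw1
                · rw [bpath_eq_right h (by omega)]; exact Finset.mem_insert_of_mem hw2

lemma bpath_card : ∀ lo hi c, (bpath lo hi c).card ≤ Nat.log 2 (hi - lo + 1) + 1 := by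
  intro lo hi c
  induction lo, hi using bpath.induct (c := c) with
  | case1 lo hi h => rw [bpath_eq_base h]; simp
  | case2 lo hi h he => subst he; rw [bpath_eq_mid h rfl]; simp
  | case3 lo hi h he hlt ih =>
      rw [bpath_eq_left h hlt]
      have hc := Finset.card_insert_le ((lo+hi)/2) (bpath lo ((lo+hi)/2 - 1) c)
      have key : Nat.log 2 ((lo+hi)/2 - 1 - lo + 1) + 1 ≤ Nat.log 2 (hi - lo + 1) := by
        by_cases h0 : (lo+hi)/2 ≤ lo
        · have h2' : 0 < Nat.log 2 (hi - lo + 1) := Nat.log_pos (by norm_num) (by omega)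
          have h3' : Nat.log 2 ((lo+hi)/2 - 1 - lo + 1) = 0 := by
            rcases (by omega : (lo+hi)/2 - 1 - lo + 1 = 0 ∨ (lo+hi)/2 - 1 - lo + 1 = 1) with h' | h' <;>
              simp [h']
          omega
        · have hne : (lo+hi)/2 - 1 - lo + 1 ≠ 0 := by omega
          calc Nat.log 2 ((lo+hi)/2 - 1 - lo + 1) + 1
              = Nat.log 2 (((lo+hi)/2 - 1 - lo + 1) * 2) := (Nat.log_mul_base (by norm_num) hne).symm
            _ ≤ Nat.log 2 (hi - lo + 1) := Nat.log_mono_right (by omega)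
      omega
  | case4 lo hi h he hlt ih =>
      rw [bpath_eq_right h (by omega)]
      have hc := Finset.card_insert_le ((lo+hi)/2) (bpath ((lo+hi)/2 + 1) hi c)
      have key : Nat.log 2 (hi - ((lo+hi)/2 + 1) + 1) + 1 ≤ Nat.log 2 (hi - lo + 1) := by
        have hne : hi - ((lo+hi)/2 + 1) + 1 ≠ 0 := by omega
        calc Nat.log 2 (hi - ((lo+hi)/2 + 1) + 1) + 1
            = Nat.log 2 ((hi - ((lo+hi)/2 + 1) + 1) * 2) := (Nat.log_mul_base (by norm_num) hne).symm
          _ ≤ Nat.log 2 (hi - lo + 1) := Nat.log_mono_right (by omega)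
      omega


lemma satisfied_translate (Y : Finset (ℤ × ℤ)) (dx dy : ℤ) (h : Satisfied Y) :
    Satisfied (Y.image fun p => (p.1 + dx, p.2 + dy)) := by
  intro p hp q hq hx hy
  simp only [Finset.mem_image] at hp hq
  obtain ⟨p0, hp0, rfl⟩ := hp
  obtain ⟨q0, hq0, rfl⟩ := hq
  simp only at hx hy
  have hx0 : p0.1 ≠ q0.1 := fun h' => hx (by rw [h'])
  have hy0 : p0.2 ≠ q0.2 := fun h' => hy (by rw [h'])
  obtain ⟨r, hr, hrp, hrq, hrect⟩ := h p0 hp0 q0 hq0 hx0 hy0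
  refine ⟨(r.1 + dx, r.2 + dy), Finset.mem_image_of_mem _ hr, ?_, ?_, ?_⟩
  · intro h'
    apply hrp
    have h1 : r.1 + dx = p0.1 + dx := congrArg Prod.fst h'
    have h2 : r.2 + dy = p0.2 + dy := congrArg Prod.snd h'
    exact Prod.ext (by omega) (by omega)
  · intro h'
    apply hrq
    have h1 : r.1 + dx = q0.1 + dx := congrArg Prod.fst h'
    have h2 : r.2 + dy = q0.2 + dy := congrArg Prod.snd h'
    exact Prod.ext (by omega) (by omega)
  · obtain ⟨ha, hb, hc, hd⟩ := hrect
    refine ⟨?_, ?_, ?_, ?_⟩ <;> simp only [min_def, max_def] at * <;>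
      split_ifs at * <;> omega

lemma skel_exists (m : ℕ) (hm : 1 ≤ m) (σ : ℕ → ℕ)
    (hσ : ∀ b, 1 ≤ b → b ≤ m → 1 ≤ σ b ∧ σ b ≤ m) :
    ∃ W : Finset (ℕ × ℕ),
      (∀ w ∈ W, 1 ≤ w.1 ∧ w.1 ≤ m ∧ 1 ≤ w.2 ∧ w.2 ≤ m) ∧
      Satisfied W ∧
      (∀ b, 1 ≤ b → b ≤ m → (σ b, b) ∈ W) ∧
      ((1,1) ∈ W ∧ (1,m) ∈ W ∧ (m,1) ∈ W ∧ (m,m) ∈ W) ∧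
      W.card ≤ 3 * m * (Nat.log 2 m + 1) := by
  classical
  set R : ℕ → Finset ℕ := fun b => bpath 1 m (σ b) ∪ bpath 1 m 1 ∪ bpath 1 m m with hR
  set W : Finset (ℕ × ℕ) :=
    (Finset.Icc 1 m).biUnion (fun b => (R b).image (fun y => (y, b))) with hW
  have hRrange : ∀ b, 1 ≤ b → b ≤ m → ∀ y ∈ R b, 1 ≤ y ∧ y ≤ m := by
    intro b hb1 hb2 y hy
    rw [hR] at hy
    simp only [Finset.mem_union] at hy
    rcases hy with (hy | hy) | hy
    · exact bpath_range 1 m (σ b) (hσ b hb1 hb2).1 (hσ b hb1 hb2).2 y hy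
    · exact bpath_range 1 m 1 le_rfl hm y hy
    · exact bpath_range 1 m m hm le_rfl y hy
  have hRclosed : ∀ b, 1 ≤ b → b ≤ m → ∀ y ∈ R b, bpath 1 m y ⊆ R b := by
    intro b hb1 hb2 y hy
    rw [hR] at hy ⊢
    simp only [Finset.mem_union] at hy
    rcases hy with (hy | hy) | hy
    · intro z hz
      simp only [Finset.mem_union]
      exact Or.inl (Or.inl (bpath_trans 1 m (σ b) (hσ b hb1 hb2).1 (hσ b hb1 hb2).2 y hy hz))
    · intro z hz
      simp only [Finset.mem_union]
      exact Or.inl (Or.inr (bpath_trans 1 m 1 le_rfl hm y hy hz))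
    · intro z hz
      simp only [Finset.mem_union]
      exact Or.inr (bpath_trans 1 m m hm le_rfl y hy hz)
  have hmem : ∀ p : ℕ × ℕ, p ∈ W ↔ (1 ≤ p.2 ∧ p.2 ≤ m ∧ p.1 ∈ R p.2) := by
    intro p
    rw [hW]
    simp only [Finset.mem_biUnion, Finset.mem_Icc, Finset.mem_image]
    constructor
    · rintro ⟨b, ⟨hb1, hb2⟩, y, hy, rfl⟩
      exact ⟨hb1, hb2, hy⟩
    · rintro ⟨h1, h2, h3⟩
      exact ⟨p.2, ⟨h1, h2⟩, p.1, h3, rfl⟩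
  refine ⟨W, ?_, ?_, ?_, ?_, ?_⟩
  · intro w hw
    rw [hmem] at hw
    have := hRrange w.2 hw.1 hw.2.1 w.1 hw.2.2
    exact ⟨this.1, this.2, hw.1, hw.2.1⟩
  · intro p hp q hq hx hy
    rw [hmem] at hp hq
    obtain ⟨hp1, hp2, hp3⟩ := hp
    obtain ⟨hq1, hq2, hq3⟩ := hq
    have hpr := hRrange p.2 hp1 hp2 p.1 hp3
    have hqr := hRrange q.2 hq1 hq2 q.1 hq3
    obtain ⟨w, hw1, hw2, hw3, hw4⟩ :=
      bpath_lca m 1 m p.1 q.1 (by omega) hpr.1 hpr.2 hqr.1 hqr.2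
    by_cases hwp : w = p.1
    · -- use (p.1, q.2)
      refine ⟨(p.1, q.2), ?_, ?_, ?_, ?_⟩
      · rw [hmem]
        exact ⟨hq1, hq2, hRclosed q.2 hq1 hq2 q.1 hq3 (hwp ▸ hw2)⟩
      · intro h'; rw [Prod.ext_iff] at h'; exact hy h'.2.symm
      · intro h'; rw [Prod.ext_iff] at h'; exact hx h'.1
      · exact ⟨by simp, by simp, by simp, by simp⟩
    · by_cases hwq : w = q.1
      · refine ⟨(q.1, p.2), ?_, ?_, ?_, ?_⟩
        · rw [hmem]
          exact ⟨hp1, hp2, hRclosed p.2 hp1 hp2 p.1 hp3 (hwq ▸ hw1)⟩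
        · intro h'; rw [Prod.ext_iff] at h'; exact hx h'.1.symm
        · intro h'; rw [Prod.ext_iff] at h'; exact hy h'.2
        · exact ⟨by simp, by simp, by simp, by simp⟩
      · refine ⟨(w, p.2), ?_, ?_, ?_, ?_⟩
        · rw [hmem]
          exact ⟨hp1, hp2, hRclosed p.2 hp1 hp2 p.1 hp3 hw1⟩
        · intro h'; rw [Prod.ext_iff] at h'; exact hwp h'.1
        · intro h'; rw [Prod.ext_iff] at h'; exact hy h'.2
        · exact ⟨by simpa using hw3, by simpa using hw4, by simp, by simp⟩
  · intro b hb1 hb2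
    rw [hmem]
    refine ⟨hb1, hb2, ?_⟩
    rw [hR]
    simp only [Finset.mem_union]
    exact Or.inl (Or.inl (bpath_self 1 m (σ b) (hσ b hb1 hb2).1 (hσ b hb1 hb2).2))
  · have hmem1 : ∀ y, 1 ≤ y → y ≤ m → (y ∈ bpath 1 m 1 ∨ y ∈ bpath 1 m m) → ∀ b, 1 ≤ b → b ≤ m → (y, b) ∈ W := by
      intro y hy1 hy2 hy b hb1 hb2
      rw [hmem]
      refine ⟨hb1, hb2, ?_⟩
      rw [hR]
      simp only [Finset.mem_union]
      rcases hy with hy | hy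
      · exact Or.inl (Or.inr hy)
      · exact Or.inr hy
    refine ⟨?_, ?_, ?_, ?_⟩
    · exact hmem1 1 le_rfl hm (Or.inl (bpath_self 1 m 1 le_rfl hm)) 1 le_rfl hm
    · exact hmem1 1 le_rfl hm (Or.inl (bpath_self 1 m 1 le_rfl hm)) m hm le_rfl
    · exact hmem1 m hm le_rfl (Or.inr (bpath_self 1 m m hm le_rfl)) 1 le_rfl hm
    · exact hmem1 m hm le_rfl (Or.inr (bpath_self 1 m m hm le_rfl)) m hm le_rfl
  · rw [hW]
    calc ((Finset.Icc 1 m).biUnion (fun b => (R b).image (fun y => (y, b)))).card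
        ≤ ∑ b ∈ Finset.Icc 1 m, ((R b).image (fun y => (y, b))).card :=
          Finset.card_biUnion_le
      _ ≤ ∑ b ∈ Finset.Icc 1 m, (3 * (Nat.log 2 m + 1)) := by
          apply Finset.sum_le_sum
          intro b _
          calc ((R b).image (fun y => (y, b))).card ≤ (R b).card := Finset.card_image_le
            _ ≤ (bpath 1 m (σ b) ∪ bpath 1 m 1).card + (bpath 1 m m).card := by
                rw [hR]; exact Finset.card_union_le _ _
            _ ≤ (bpath 1 m (σ b)).card + (bpath 1 m 1).card + (bpath 1 m m).card := by
                have := Finset.card_union_le (bpath 1 m (σ b)) (bpath 1 m 1)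
                omega
            _ ≤ 3 * (Nat.log 2 m + 1) := by
                have e : m - 1 + 1 = m := by omega
                have h1 := bpath_card 1 m (σ b)
                have h2 := bpath_card 1 m 1
                have h3 := bpath_card 1 m m
                rw [e] at h1 h2 h3
                omega
      _ = (m - 1 + 1) * (3 * (Nat.log 2 m + 1)) := by
          rw [Finset.sum_const, Nat.card_Icc, smul_eq_mul]
          congr 1
          omega
      _ ≤ 3 * m * (Nat.log 2 m + 1) := by
          have e : m - 1 + 1 = m := by omega
          rw [e]; ring_nf; omega


lemma pick_lt (m : ℕ) (A B : ℕ → ℤ)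
    (hAB : ∀ a, 1 ≤ a → a ≤ m → A a ≤ B a)
    (hsep : ∀ a a', 1 ≤ a → a < a' → a' ≤ m → B a < A a')
    (a a' a'' : ℕ) (x x' : ℤ)
    (ha : 1 ≤ a) (ham' : a' ≤ m) (ha'' : 1 ≤ a'') (ham'' : a'' ≤ m)
    (hlt : a < a') (h1 : a ≤ a'') (h2 : a'' ≤ a')
    (hx1 : A a ≤ x) (hx2 : x ≤ B a) (hx'1 : A a' ≤ x') (hx'2 : x' ≤ B a') :
    ∃ ξ : ℤ, (ξ = A a'' ∨ ξ = B a'') ∧ min x x' ≤ ξ ∧ ξ ≤ max x x' := by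
  by_cases e1 : a'' = a
  · subst e1
    have := hsep a'' a' ha'' hlt ham'
    exact ⟨B a'', Or.inr rfl, by omega, by omega⟩
  · by_cases e2 : a'' = a'
    · subst e2
      have := hsep a a'' ha hlt ham''
      exact ⟨A a'', Or.inl rfl, by omega, by omega⟩
    · have g1 := hsep a a'' ha (by omega) ham''
      have g2 := hsep a'' a' ha'' (by omega) ham'
      have g3 := hAB a'' ha'' ham''
      exact ⟨A a'', Or.inl rfl, by omega, by omega⟩

lemma pick (m : ℕ) (A B : ℕ → ℤ)
    (hAB : ∀ a, 1 ≤ a → a ≤ m → A a ≤ B a)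
    (hsep : ∀ a a', 1 ≤ a → a < a' → a' ≤ m → B a < A a')
    (a a' a'' : ℕ) (x x' : ℤ)
    (ha : 1 ≤ a) (ham : a ≤ m) (ha' : 1 ≤ a') (ham' : a' ≤ m) (ha'' : 1 ≤ a'') (ham'' : a'' ≤ m)
    (hne : a ≠ a') (h1 : min a a' ≤ a'') (h2 : a'' ≤ max a a')
    (hx1 : A a ≤ x) (hx2 : x ≤ B a) (hx'1 : A a' ≤ x') (hx'2 : x' ≤ B a') :
    ∃ ξ : ℤ, (ξ = A a'' ∨ ξ = B a'') ∧ min x x' ≤ ξ ∧ ξ ≤ max x x' := by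
  rcases Nat.lt_or_ge a a' with hlt | hge
  · exact pick_lt m A B hAB hsep a a' a'' x x' ha ham' ha'' ham'' hlt (by omega) (by omega)
      hx1 hx2 hx'1 hx'2
  · have hlt : a' < a := by omega
    obtain ⟨ξ, hξ, hξ1, hξ2⟩ := pick_lt m A B hAB hsep a' a a'' x' x ha' ham ha'' ham'' hlt
      (by omega) (by omega) hx'1 hx'2 hx1 hx2
    exact ⟨ξ, hξ, by omega, by omega⟩

lemma glue
    (m : ℕ) (hm : 1 ≤ m)
    (A B G D : ℕ → ℤ) (σ : ℕ → ℕ)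
    (W : Finset (ℕ × ℕ)) (F : ℕ → Finset (ℤ × ℤ))
    (hAB : ∀ a, 1 ≤ a → a ≤ m → A a ≤ B a)
    (hsep : ∀ a a', 1 ≤ a → a < a' → a' ≤ m → B a < A a')
    (hGD : ∀ b, 1 ≤ b → b ≤ m → G b ≤ D b)
    (htsep : ∀ b b', 1 ≤ b → b < b' → b' ≤ m → D b < G b')
    (hσr : ∀ b, 1 ≤ b → b ≤ m → 1 ≤ σ b ∧ σ b ≤ m)
    (hσinj : ∀ b b', 1 ≤ b → b ≤ m → 1 ≤ b' → b' ≤ m → σ b = σ b' → b = b')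
    (hWbox : ∀ w ∈ W, 1 ≤ w.1 ∧ w.1 ≤ m ∧ 1 ≤ w.2 ∧ w.2 ≤ m)
    (hWsat : Satisfied W)
    (hWskel : ∀ b, 1 ≤ b → b ≤ m → (σ b, b) ∈ W)
    (hWc1 : ((1,1) : ℕ × ℕ) ∈ W) (hWc2 : ((1,m) : ℕ × ℕ) ∈ W)
    (hWc3 : ((m,1) : ℕ × ℕ) ∈ W) (hWc4 : ((m,m) : ℕ × ℕ) ∈ W)
    (hFbox : ∀ b, 1 ≤ b → b ≤ m → ∀ p ∈ F b,
        A (σ b) ≤ p.1 ∧ p.1 ≤ B (σ b) ∧ G b ≤ p.2 ∧ p.2 ≤ D b)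
    (hFsat : ∀ b, 1 ≤ b → b ≤ m → Satisfied (F b))
    (hFcorner : ∀ b, 1 ≤ b → b ≤ m → ∀ x y : ℤ,
        (x = A (σ b) ∨ x = B (σ b)) → (y = G b ∨ y = D b) → (x, y) ∈ F b) :
    ∃ U : Finset (ℤ × ℤ),
      (∀ b, 1 ≤ b → b ≤ m → F b ⊆ U) ∧
      Satisfied U ∧
      (∀ p ∈ U, A 1 ≤ p.1 ∧ p.1 ≤ B m ∧ G 1 ≤ p.2 ∧ p.2 ≤ D m) ∧
      (∀ x y : ℤ, (x = A 1 ∨ x = B m) → (y = G 1 ∨ y = D m) → (x, y) ∈ U) ∧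
      U.card ≤ (∑ b ∈ Finset.Icc 1 m, (F b).card) + 4 * W.card := by
  classical
  set E : ℕ × ℕ → Finset (ℤ × ℤ) :=
    fun w => {(A w.1, G w.2), (A w.1, D w.2), (B w.1, G w.2), (B w.1, D w.2)} with hE
  set U : Finset (ℤ × ℤ) := (Finset.Icc 1 m).biUnion F ∪ W.biUnion E with hU
  have hEintro : ∀ w : ℕ × ℕ, ∀ x y : ℤ,
      (x = A w.1 ∨ x = B w.1) → (y = G w.2 ∨ y = D w.2) → (x, y) ∈ E w := by
    intro w x y h1 h2
    rcases h1 with rfl | rfl <;> rcases h2 with rfl | rfl <;> simp [hE]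
  have hEelim : ∀ w : ℕ × ℕ, ∀ r ∈ E w,
      (r.1 = A w.1 ∨ r.1 = B w.1) ∧ (r.2 = G w.2 ∨ r.2 = D w.2) := by
    intro w r hr
    simp only [hE, Finset.mem_insert, Finset.mem_singleton] at hr
    rcases hr with rfl | rfl | rfl | rfl <;> simp
  have hEsubU : ∀ w ∈ W, E w ⊆ U := by
    intro w hw
    rw [hU]
    intro r hr
    exact Finset.mem_union_right _ (Finset.mem_biUnion.mpr ⟨w, hw, hr⟩)
  have hFsubU : ∀ b, 1 ≤ b → b ≤ m → F b ⊆ U := by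
    intro b h1 h2
    rw [hU]
    intro r hr
    exact Finset.mem_union_left _
      (Finset.mem_biUnion.mpr ⟨b, Finset.mem_Icc.mpr ⟨h1, h2⟩, hr⟩)
  have hsep' : ∀ a a', 1 ≤ a → a ≤ m → 1 ≤ a' → a' ≤ m → a ≠ a' →
      ∀ x x' : ℤ, A a ≤ x → x ≤ B a → A a' ≤ x' → x' ≤ B a' → x ≠ x' := by
    intro a a' h1 h2 h3 h4 hne x x' k1 k2 k3 k4
    rcases Nat.lt_or_ge a a' with hlt | hge
    · have := hsep a a' h1 hlt h4; omega
    · have := hsep a' a h3 (by omega) h2; omega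
  have htsep' : ∀ b b', 1 ≤ b → b ≤ m → 1 ≤ b' → b' ≤ m → b ≠ b' →
      ∀ y y' : ℤ, G b ≤ y → y ≤ D b → G b' ≤ y' → y' ≤ D b' → y ≠ y' := by
    intro b b' h1 h2 h3 h4 hne y y' k1 k2 k3 k4
    rcases Nat.lt_or_ge b b' with hlt | hge
    · have := htsep b b' h1 hlt h4; omega
    · have := htsep b' b h3 (by omega) h2; omega
  have hcell : ∀ r ∈ U, ∃ a b : ℕ, 1 ≤ a ∧ a ≤ m ∧ 1 ≤ b ∧ b ≤ m ∧ (a, b) ∈ W ∧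
      A a ≤ r.1 ∧ r.1 ≤ B a ∧ G b ≤ r.2 ∧ r.2 ≤ D b ∧
      (((r.1 = A a ∨ r.1 = B a) ∧ (r.2 = G b ∨ r.2 = D b)) ∨ (a = σ b ∧ r ∈ F b)) := by
    intro r hr
    rw [hU] at hr
    rcases Finset.mem_union.mp hr with hr | hr
    · obtain ⟨b, hb, hrb⟩ := Finset.mem_biUnion.mp hr
      rw [Finset.mem_Icc] at hb
      obtain ⟨k1, k2, k3, k4⟩ := hFbox b hb.1 hb.2 r hrb
      exact ⟨σ b, b, (hσr b hb.1 hb.2).1, (hσr b hb.1 hb.2).2, hb.1, hb.2,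
        hWskel b hb.1 hb.2, k1, k2, k3, k4, Or.inr ⟨rfl, hrb⟩⟩
    · obtain ⟨w, hw, hrw⟩ := Finset.mem_biUnion.mp hr
      obtain ⟨k1, k2, k3, k4⟩ := hWbox w hw
      obtain ⟨c1, c2⟩ := hEelim w r hrw
      have hab := hAB w.1 k1 k2
      have hgd := hGD w.2 k3 k4
      refine ⟨w.1, w.2, k1, k2, k3, k4, by rwa [Prod.mk.eta], ?_, ?_, ?_, ?_, Or.inl ⟨c1, c2⟩⟩ <;>
        omega
  refine ⟨U, hFsubU, ?_, ?_, ?_, ?_⟩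
  · -- Satisfied U
    intro p hp q hq hx hy
    obtain ⟨a, b, ha1, ha2, hb1, hb2, hWab, pc1, pc2, pc3, pc4, pform⟩ := hcell p hp
    obtain ⟨a', b', ha'1, ha'2, hb'1, hb'2, hWab', qc1, qc2, qc3, qc4, qform⟩ := hcell q hq
    obtain ⟨px, py⟩ := p
    obtain ⟨qx, qy⟩ := q
    simp only at hx hy pc1 pc2 pc3 pc4 qc1 qc2 qc3 qc4 pform qform
    by_cases hab : a = a'
    · subst hab
      by_cases hbb : b = b'
      · subst hbb
        -- same cell
        rcases pform with ⟨pco1, pco2⟩ | ⟨hpa, hpF⟩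
        · rcases qform with ⟨qco1, qco2⟩ | ⟨hqa, hqF⟩
          · -- both corners
            refine ⟨(px, qy), hEsubU (a, b) hWab (hEintro (a, b) px qy pco1 qco2),
              ?_, ?_, by omega, by omega, by omega, by omega⟩
            · intro h'; rw [Prod.mk.injEq] at h'; omega
            · intro h'; rw [Prod.mk.injEq] at h'; omega
          · -- p corner, q in F b
            have hpF : (px, py) ∈ F b := by
              subst hqa
              exact hFcorner b hb1 hb2 px py pco1 pco2
            obtain ⟨r, hr, hr1, hr2, hr3⟩ := hFsat b hb1 hb2 (px, py) hpF (qx, qy) hqF hx hy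
            exact ⟨r, hFsubU b hb1 hb2 hr, hr1, hr2, hr3⟩
        · rcases qform with ⟨qco1, qco2⟩ | ⟨hqa, hqF⟩
          · have hqF : (qx, qy) ∈ F b := by
              subst hpa
              exact hFcorner b hb1 hb2 qx qy qco1 qco2
            obtain ⟨r, hr, hr1, hr2, hr3⟩ := hFsat b hb1 hb2 (px, py) hpF (qx, qy) hqF hx hy
            exact ⟨r, hFsubU b hb1 hb2 hr, hr1, hr2, hr3⟩
          · obtain ⟨r, hr, hr1, hr2, hr3⟩ := hFsat b hb1 hb2 (px, py) hpF (qx, qy) hqF hx hy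
            exact ⟨r, hFsubU b hb1 hb2 hr, hr1, hr2, hr3⟩
      · -- a = a', b ≠ b' : case 2
        rcases pform with ⟨pco1, pco2⟩ | ⟨hpa, hpF⟩
        · rcases qform with ⟨qco1, qco2⟩ | ⟨hqa, hqF⟩
          · -- both corners
            refine ⟨(qx, py), hEsubU (a, b) hWab (hEintro (a, b) qx py qco1 pco2),
              ?_, ?_, by omega, by omega, by omega, by omega⟩
            · intro h'; rw [Prod.mk.injEq] at h'; omega
            · intro h'; rw [Prod.mk.injEq] at h'; omega
          · -- p corner, q ∈ F b' with a = σ b'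
            rcases Nat.lt_or_ge b b' with hlt | hge
            · have hw := htsep b b' hb1 hlt hb'2
              refine ⟨(px, G b'), hFsubU b' hb'1 hb'2
                (hFcorner b' hb'1 hb'2 px (G b') (hqa ▸ pco1) (Or.inl rfl)),
                ?_, ?_, by omega, by omega, by omega, by omega⟩
              · intro h'; rw [Prod.mk.injEq] at h'; omega
              · intro h'; rw [Prod.mk.injEq] at h'; omega
            · have hlt : b' < b := by omega
              have hw := htsep b' b hb'1 hlt hb2
              refine ⟨(px, D b'), hFsubU b' hb'1 hb'2
                (hFcorner b' hb'1 hb'2 px (D b') (hqa ▸ pco1) (Or.inr rfl)),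
                ?_, ?_, by omega, by omega, by omega, by omega⟩
              · intro h'; rw [Prod.mk.injEq] at h'; omega
              · intro h'; rw [Prod.mk.injEq] at h'; omega
        · rcases qform with ⟨qco1, qco2⟩ | ⟨hqa, hqF⟩
          · -- p ∈ F b with a = σ b, q corner
            rcases Nat.lt_or_ge b b' with hlt | hge
            · have hw := htsep b b' hb1 hlt hb'2
              refine ⟨(qx, D b), hFsubU b hb1 hb2
                (hFcorner b hb1 hb2 qx (D b) (hpa ▸ qco1) (Or.inr rfl)),
                ?_, ?_, by omega, by omega, by omega, by omega⟩
              · intro h'; rw [Prod.mk.injEq] at h'; omega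
              · intro h'; rw [Prod.mk.injEq] at h'; omega
            · have hlt : b' < b := by omega
              have hw := htsep b' b hb'1 hlt hb2
              refine ⟨(qx, G b), hFsubU b hb1 hb2
                (hFcorner b hb1 hb2 qx (G b) (hpa ▸ qco1) (Or.inl rfl)),
                ?_, ?_, by omega, by omega, by omega, by omega⟩
              · intro h'; rw [Prod.mk.injEq] at h'; omega
              · intro h'; rw [Prod.mk.injEq] at h'; omega
          · -- both F : contradiction with σ injective
            exact absurd (hσinj b b' hb1 hb2 hb'1 hb'2 (hpa ▸ hqa ▸ rfl)) hbb
    · by_cases hbb : b = b'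
      · subst hbb
        -- b = b', a ≠ a' : case 3
        rcases pform with ⟨pco1, pco2⟩ | ⟨hpa, hpF⟩
        · rcases qform with ⟨qco1, qco2⟩ | ⟨hqa, hqF⟩
          · refine ⟨(px, qy), hEsubU (a, b) hWab (hEintro (a, b) px qy pco1 qco2),
              ?_, ?_, by omega, by omega, by omega, by omega⟩
            · intro h'; rw [Prod.mk.injEq] at h'; omega
            · intro h'; rw [Prod.mk.injEq] at h'; omega
          · -- p corner, q ∈ F b with a' = σ b
            rcases Nat.lt_or_ge a a' with hlt | hge
            · have hw := hsep a a' ha1 hlt ha'2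
              refine ⟨(A a', py), hFsubU b hb1 hb2
                (hFcorner b hb1 hb2 (A a') py (hqa ▸ Or.inl rfl) pco2),
                ?_, ?_, by omega, by omega, by omega, by omega⟩
              · intro h'; rw [Prod.mk.injEq] at h'; omega
              · intro h'; rw [Prod.mk.injEq] at h'; omega
            · have hlt : a' < a := by omega
              have hw := hsep a' a ha'1 hlt ha2
              refine ⟨(B a', py), hFsubU b hb1 hb2
                (hFcorner b hb1 hb2 (B a') py (hqa ▸ Or.inr rfl) pco2),
                ?_, ?_, by omega, by omega, by omega, by omega⟩
              · intro h'; rw [Prod.mk.injEq] at h'; omega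
              · intro h'; rw [Prod.mk.injEq] at h'; omega
        · rcases qform with ⟨qco1, qco2⟩ | ⟨hqa, hqF⟩
          · -- p ∈ F b with a = σ b, q corner
            rcases Nat.lt_or_ge a a' with hlt | hge
            · have hw := hsep a a' ha1 hlt ha'2
              refine ⟨(B a, qy), hFsubU b hb1 hb2
                (hFcorner b hb1 hb2 (B a) qy (hpa ▸ Or.inr rfl) qco2),
                ?_, ?_, by omega, by omega, by omega, by omega⟩
              · intro h'; rw [Prod.mk.injEq] at h'; omega
              · intro h'; rw [Prod.mk.injEq] at h'; omega
            · have hlt : a' < a := by omega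
              have hw := hsep a' a ha'1 hlt ha2
              refine ⟨(A a, qy), hFsubU b hb1 hb2
                (hFcorner b hb1 hb2 (A a) qy (hpa ▸ Or.inl rfl) qco2),
                ?_, ?_, by omega, by omega, by omega, by omega⟩
              · intro h'; rw [Prod.mk.injEq] at h'; omega
              · intro h'; rw [Prod.mk.injEq] at h'; omega
          · -- both F with same b: σ b = a and σ b = a'
            exact absurd (hpa ▸ hqa ▸ rfl : a = a') hab
      · -- a ≠ a', b ≠ b' : case 4, use satisfaction of W
        obtain ⟨w'', hw''W, hw''p, hw''q, hrect⟩ :=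
          hWsat (a, b) hWab (a', b') hWab' hab hbb
        obtain ⟨k1, k2, k3, k4⟩ := hWbox w'' hw''W
        obtain ⟨hr1, hr2, hr3, hr4⟩ := hrect
        simp only at hr1 hr2 hr3 hr4
        obtain ⟨ξ, hξ, hξ1, hξ2⟩ := pick m A B hAB hsep a a' w''.1 px qx
          ha1 ha2 ha'1 ha'2 k1 k2 hab hr1 hr2 pc1 pc2 qc1 qc2
        obtain ⟨τ, hτ, hτ1, hτ2⟩ := pick m G D hGD htsep b b' w''.2 py qy
          hb1 hb2 hb'1 hb'2 k3 k4 hbb hr3 hr4 pc3 pc4 qc3 qc4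
        have hξr : A w''.1 ≤ ξ ∧ ξ ≤ B w''.1 := by
          have := hAB w''.1 k1 k2; rcases hξ with rfl | rfl <;> omega
        have hτr : G w''.2 ≤ τ ∧ τ ≤ D w''.2 := by
          have := hGD w''.2 k3 k4; rcases hτ with rfl | rfl <;> omega
        refine ⟨(ξ, τ), hEsubU w'' hw''W (hEintro w'' ξ τ hξ hτ), ?_, ?_,
          hξ1, hξ2, hτ1, hτ2⟩
        · intro h'; rw [Prod.mk.injEq] at h'
          by_cases haa : w''.1 = a
          · have hbbne : w''.2 ≠ b := by
              intro hbeq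
              exact hw''p (by rw [Prod.ext_iff]; exact ⟨haa, hbeq⟩)
            exact htsep' w''.2 b k3 k4 hb1 hb2 hbbne τ py hτr.1 hτr.2 pc3 pc4 h'.2
          · exact hsep' w''.1 a k1 k2 ha1 ha2 haa ξ px hξr.1 hξr.2 pc1 pc2 h'.1
        · intro h'; rw [Prod.mk.injEq] at h'
          by_cases haa : w''.1 = a'
          · have hbbne : w''.2 ≠ b' := by
              intro hbeq
              exact hw''q (by rw [Prod.ext_iff]; exact ⟨haa, hbeq⟩)
            exact htsep' w''.2 b' k3 k4 hb'1 hb'2 hbbne τ qy hτr.1 hτr.2 qc3 qc4 h'.2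
          · exact hsep' w''.1 a' k1 k2 ha'1 ha'2 haa ξ qx hξr.1 hξr.2 qc1 qc2 h'.1
  · -- box
    intro p hp
    obtain ⟨a, b, ha1, ha2, hb1, hb2, _, pc1, pc2, pc3, pc4, _⟩ := hcell p hp
    have e1 : A 1 ≤ A a := by
      rcases Nat.lt_or_ge 1 a with hlt | hge
      · have := hsep 1 a le_rfl hlt ha2
        have := hAB 1 le_rfl (by omega)
        omega
      · have e : a = 1 := by omega
        rw [e]
    have e2 : B a ≤ B m := by
      rcases Nat.lt_or_ge a m with hlt | hge
      · have := hsep a m ha1 hlt le_rfl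
        have := hAB m hm le_rfl
        omega
      · have e : a = m := by omega
        rw [e]
    have e3 : G 1 ≤ G b := by
      rcases Nat.lt_or_ge 1 b with hlt | hge
      · have := htsep 1 b le_rfl hlt hb2
        have := hGD 1 le_rfl (by omega)
        omega
      · have e : b = 1 := by omega
        rw [e]
    have e4 : D b ≤ D m := by
      rcases Nat.lt_or_ge b m with hlt | hge
      · have := htsep b m hb1 hlt le_rfl
        have := hGD m hm le_rfl
        omega
      · have e : b = m := by omega
        rw [e]
    exact ⟨by omega, by omega, by omega, by omega⟩
  · -- corners
    intro x y h1 h2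
    rcases h1 with rfl | rfl <;> rcases h2 with rfl | rfl
    · exact hEsubU (1,1) hWc1 (hEintro (1,1) _ _ (Or.inl rfl) (Or.inl rfl))
    · exact hEsubU (1,m) hWc2 (hEintro (1,m) _ _ (Or.inl rfl) (Or.inr rfl))
    · exact hEsubU (m,1) hWc3 (hEintro (m,1) _ _ (Or.inr rfl) (Or.inl rfl))
    · exact hEsubU (m,m) hWc4 (hEintro (m,m) _ _ (Or.inr rfl) (Or.inr rfl))
  · -- card
    have hE4 : ∀ w : ℕ × ℕ, (E w).card ≤ 4 := by
      intro w
      simp only [hE]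
      have h1 := Finset.card_insert_le (A w.1, G w.2)
        ({(A w.1, D w.2), (B w.1, G w.2), (B w.1, D w.2)} : Finset (ℤ × ℤ))
      have h2 := Finset.card_insert_le (A w.1, D w.2)
        ({(B w.1, G w.2), (B w.1, D w.2)} : Finset (ℤ × ℤ))
      have h3 := Finset.card_insert_le (B w.1, G w.2)
        ({(B w.1, D w.2)} : Finset (ℤ × ℤ))
      simp only [Finset.card_singleton] at h3
      omega
    rw [hU]
    calc ((Finset.Icc 1 m).biUnion F ∪ W.biUnion E).card
        ≤ ((Finset.Icc 1 m).biUnion F).card + (W.biUnion E).card :=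
          Finset.card_union_le _ _
      _ ≤ (∑ b ∈ Finset.Icc 1 m, (F b).card) + (W.biUnion E).card := by
          have := Finset.card_biUnion_le (s := Finset.Icc 1 m) (t := F)
          omega
      _ ≤ (∑ b ∈ Finset.Icc 1 m, (F b).card) + ∑ w ∈ W, (E w).card := by
          have := Finset.card_biUnion_le (s := W) (t := E)
          omega
      _ ≤ (∑ b ∈ Finset.Icc 1 m, (F b).card) + ∑ w ∈ W, 4 :=
          Nat.add_le_add_left (Finset.sum_le_sum (fun w _ => hE4 w)) _
      _ = (∑ b ∈ Finset.Icc 1 m, (F b).card) + 4 * W.card := by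
          rw [Finset.sum_const, smul_eq_mul, Nat.mul_comm]




lemma isPermOn_blockRestrict {n : ℕ} {X : ℕ → ℕ} (hX : IsPermOn n X) {a b : ℕ}
    (hb : IsBlockOf n X a b) : IsPermOn (b - a + 1) (blockRestrict X a b) := by
  obtain ⟨h1, h2, h3, d, hd⟩ := hb
  have hsub : Set.Icc a b ⊆ Set.Icc 1 n := by
    intro t ht; simp only [Set.mem_Icc] at *; omega
  have hinf : sInf (X '' Set.Icc a b) = d := by
    rw [hd]; exact csInf_Icc (Nat.le_add_right _ _)
  have hval : ∀ t, a ≤ t → t ≤ b → d ≤ X t ∧ X t ≤ d + (b - a) := by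
    intro t ht1 ht2
    have : X t ∈ X '' Set.Icc a b := ⟨t, Set.mem_Icc.mpr ⟨ht1, ht2⟩, rfl⟩
    rw [hd] at this
    exact Set.mem_Icc.mp this
  constructor
  · -- MapsTo
    intro j hj
    simp only [Set.mem_Icc] at hj ⊢
    have ht : a ≤ a + j - 1 ∧ a + j - 1 ≤ b := by omega
    have := hval _ ht.1 ht.2
    simp only [blockRestrict, hinf]
    omega
  constructor
  · -- InjOn
    intro j hj j' hj' he
    simp only [Set.mem_Icc] at hj hj'
    simp only [blockRestrict, hinf] at he
    have ht : a ≤ a + j - 1 ∧ a + j - 1 ≤ b := by omega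
    have ht' : a ≤ a + j' - 1 ∧ a + j' - 1 ≤ b := by omega
    have hv := hval _ ht.1 ht.2
    have hv' := hval _ ht'.1 ht'.2
    have hXe : X (a + j - 1) = X (a + j' - 1) := by omega
    have := hX.injOn (hsub (Set.mem_Icc.mpr ht)) (hsub (Set.mem_Icc.mpr ht')) hXe
    omega
  · -- SurjOn
    intro y hy
    simp only [Set.mem_Icc] at hy
    have hymem : y + d - 1 ∈ Set.Icc d (d + (b - a)) := by
      simp only [Set.mem_Icc]; omega
    rw [← hd] at hymem
    obtain ⟨t, ht, hXt⟩ := hymem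
    simp only [Set.mem_Icc] at ht
    refine ⟨t - a + 1, Set.mem_Icc.mpr ⟨by omega, by omega⟩, ?_⟩
    simp only [blockRestrict, hinf]
    have he : a + (t - a + 1) - 1 = t := by omega
    rw [he, hXt]
    omega

theorem kdec_build (k : ℕ) (hk : 2 ≤ k) :
    ∀ n X, KDecomposable k n X → IsPermOn n X → 1 ≤ n →
    ∃ Y : Finset (ℤ × ℤ),
      permPoints n X ⊆ Y ∧
      (∀ p ∈ Y, 1 ≤ p.1 ∧ p.1 ≤ (n : ℤ) ∧ 1 ≤ p.2 ∧ p.2 ≤ (n : ℤ)) ∧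
      (∀ x y : ℤ, (x = 1 ∨ x = (n : ℤ)) → (y = 1 ∨ y = (n : ℤ)) → (x, y) ∈ Y) ∧
      Satisfied Y ∧
      Y.card ≤ 25 * (Nat.log 2 k + 1) * (n - 1) + 1 := by
  intro n X hdec
  induction hdec with
  | base X =>
      intro hX hn
      have hX1 : X 1 = 1 := by
        have := hX.mapsTo (Set.mem_Icc.mpr ⟨le_rfl, le_rfl⟩)
        simp only [Set.mem_Icc] at this
        omega
      refine ⟨{((1:ℤ), (1:ℤ))}, ?_, ?_, ?_, ?_, ?_⟩
      · intro p hp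
        simp only [permPoints, Finset.mem_image, Finset.mem_Icc] at hp
        obtain ⟨t, ht, rfl⟩ := hp
        have : t = 1 := by omega
        subst this
        simp [hX1]
      · intro p hp
        simp only [Finset.mem_singleton] at hp
        subst hp
        norm_num
      · intro x y h1 h2
        simp only [Nat.cast_one] at h1 h2
        rcases h1 with rfl | rfl <;> rcases h2 with rfl | rfl <;> simp
      · intro p hp q hq hx hy
        simp only [Finset.mem_singleton] at hp hq
        exact absurd (hp.trans hq.symm ▸ rfl : p.1 = q.1) hx
      · simp
  | step n X m c hm2 hmk hc0 hcm hmono hblocks hrec IH =>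
      intro hX hn
      have hm : 1 ≤ m := by omega
      -- monotonicity of c
      have hmono' : ∀ j, j ≤ m → ∀ i, i ≤ j → c i ≤ c j := by
        intro j
        induction j with
        | zero =>
            intro _ i hi
            have h0 : i = 0 := by omega
            subst h0
            exact le_rfl
        | succ j ihj =>
            intro hj i hi
            rcases Nat.lt_or_ge i (j+1) with hlt | hge
            · have h1 := ihj (by omega) i (by omega)
              have h2 := hmono j (by omega)
              omega
            · have : i = j + 1 := by omega
              rw [this]
      have hgrow : ∀ j, j ≤ m → c 0 + j ≤ c j := by
        intro j
        induction j with
        | zero => simp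
        | succ j ihj => intro hj; have := hmono j (by omega); have := ihj (by omega); omega
      have hmn : m ≤ n := by have := hgrow m le_rfl; omega
      set len : ℕ → ℕ := fun i => c (i+1) - c i with hlen_def
      set u : ℕ → ℕ := fun i => sInf (X '' Set.Icc (c i) (c (i+1) - 1)) with hu_def
      have hlen1 : ∀ i < m, 1 ≤ len i := by
        intro i hi; have := hmono i hi; simp only [hlen_def]; omega
      have hbb : ∀ i < m, 1 ≤ c i ∧ c i ≤ c (i+1) - 1 ∧ c (i+1) - 1 ≤ n := by
        intro i hi
        obtain ⟨h1, h2, h3, _⟩ := hblocks i hi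
        exact ⟨h1, h2, h3⟩
      have hsubT : ∀ i < m, Set.Icc (c i) (c (i+1) - 1) ⊆ Set.Icc 1 n := by
        intro i hi t ht
        have := hbb i hi
        simp only [Set.mem_Icc] at *
        omega
      have himg : ∀ i < m, X '' Set.Icc (c i) (c (i+1) - 1) = Set.Icc (u i) (u i + (len i - 1)) := by
        intro i hi
        obtain ⟨h1, h2, h3, d, hd⟩ := hblocks i hi
        have hui : u i = d := by
          simp only [hu_def]; rw [hd]; exact csInf_Icc (Nat.le_add_right _ _)
        have hcc := hmono i hi
        have he : c (i+1) - 1 - c i = len i - 1 := by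
          simp only [hlen_def]; omega
        rw [hd, hui, he]
      have hval : ∀ i < m, ∀ t, c i ≤ t → t ≤ c (i+1) - 1 →
          u i ≤ X t ∧ X t ≤ u i + (len i - 1) := by
        intro i hi t h1 h2
        have : X t ∈ X '' Set.Icc (c i) (c (i+1) - 1) := ⟨t, Set.mem_Icc.mpr ⟨h1, h2⟩, rfl⟩
        rw [himg i hi] at this
        exact Set.mem_Icc.mp this
      have himgsub : ∀ i < m, Set.Icc (u i) (u i + (len i - 1)) ⊆ Set.Icc 1 n := by
        intro i hi
        rw [← himg i hi]
        intro y ⟨t, ht, hXt⟩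
        exact hXt ▸ hX.mapsTo (hsubT i hi ht)
      have hu1 : ∀ i < m, 1 ≤ u i ∧ u i + (len i - 1) ≤ n := by
        intro i hi
        have l := himgsub i hi (Set.left_mem_Icc.mpr (Nat.le_add_right _ _))
        have r := himgsub i hi (Set.right_mem_Icc.mpr (Nat.le_add_right _ _))
        simp only [Set.mem_Icc] at l r
        omega
      have hdisj : ∀ i j, i < m → j < m → i ≠ j → ∀ y,
          y ∈ Set.Icc (u i) (u i + (len i - 1)) → y ∈ Set.Icc (u j) (u j + (len j - 1)) → False := by
        intro i j hi hj hij y hyi hyj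
        rw [← himg i hi] at hyi
        rw [← himg j hj] at hyj
        obtain ⟨t1, ht1, hXt1⟩ := hyi
        obtain ⟨t2, ht2, hXt2⟩ := hyj
        have he : X t1 = X t2 := by rw [hXt1, hXt2]
        have := hX.injOn (hsubT i hi ht1) (hsubT j hj ht2) he
        simp only [Set.mem_Icc] at ht1 ht2
        rcases Nat.lt_or_ge i j with hlt | hge
        · have := hmono' j (by omega) (i+1) (by omega)
          have := hmono i hi
          omega
        · have hlt : j < i := by omega
          have := hmono' i (by omega) (j+1) (by omega)
          have := hmono j hj
          omega
      have hune : ∀ i j, i < m → j < m → i ≠ j → u i ≠ u j := by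
        intro i j hi hj hij he
        exact hdisj i j hi hj hij (u i)
          (Set.left_mem_Icc.mpr (Nat.le_add_right _ _))
          (he ▸ Set.left_mem_Icc.mpr (Nat.le_add_right _ _) : u i ∈ _)
      have hulb : ∀ i j, i < m → j < m → u i < u j → u i + (len i - 1) < u j := by
        intro i j hi hj hij
        by_contra hcon
        exact hdisj i j hi hj (by intro he; subst he; omega) (u j)
          (Set.mem_Icc.mpr ⟨by omega, by omega⟩)
          (Set.left_mem_Icc.mpr (Nat.le_add_right _ _))
      -- ranks
      set ρ : ℕ → ℕ := fun i => 1 + ((Finset.range m).filter (fun j => u j < u i)).card with hρ_def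
      have hρ1 : ∀ i < m, 1 ≤ ρ i ∧ ρ i ≤ m := by
        intro i hi
        have hsub : (Finset.range m).filter (fun j => u j < u i) ⊆ (Finset.range m).erase i := by
          intro j hj
          rw [Finset.mem_filter] at hj
          rw [Finset.mem_erase]
          exact ⟨by intro he; subst he; omega, hj.1⟩
        have := Finset.card_le_card hsub
        rw [Finset.card_erase_of_mem (Finset.mem_range.mpr hi), Finset.card_range] at this
        simp only [hρ_def]
        omega
      have hρmono : ∀ i j, i < m → j < m → u i < u j → ρ i < ρ j := by
        intro i j hi hj hij
        have hsub : (Finset.range m).filter (fun l => u l < u i) ⊆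
            (Finset.range m).filter (fun l => u l < u j) := by
          intro l hl
          rw [Finset.mem_filter] at *
          exact ⟨hl.1, by omega⟩
        have hssub : (Finset.range m).filter (fun l => u l < u i) ⊂
            (Finset.range m).filter (fun l => u l < u j) := by
          refine ⟨hsub, fun hback => ?_⟩
          have := hback (Finset.mem_filter.mpr ⟨Finset.mem_range.mpr hi, hij⟩)
          rw [Finset.mem_filter] at this
          omega
        have := Finset.card_lt_card hssub
        simp only [hρ_def]
        omega
      have hρinj : ∀ i j, i < m → j < m → ρ i = ρ j → i = j := by
        intro i j hi hj he
        by_contra hne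
        rcases Nat.lt_or_ge (u i) (u j) with hlt | hge
        · have := hρmono i j hi hj hlt; omega
        · have : u j < u i := by have := hune i j hi hj hne; omega
          have := hρmono j i hj hi this; omega
      have hρsurj : ∀ v, 1 ≤ v → v ≤ m → ∃ i, i < m ∧ ρ i = v := by
        intro v h1 h2
        have hinj : Set.InjOn ρ (Finset.range m) := by
          intro i hi j hj
          exact hρinj i j (Finset.mem_range.mp hi) (Finset.mem_range.mp hj)
        have hsub : (Finset.range m).image ρ ⊆ Finset.Icc 1 m := by
          intro v' hv'
          rw [Finset.mem_image] at hv'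
          obtain ⟨i, hi, rfl⟩ := hv'
          rw [Finset.mem_Icc]
          exact hρ1 i (Finset.mem_range.mp hi)
        have hcard : ((Finset.range m).image ρ).card = m := by
          rw [Finset.card_image_of_injOn hinj, Finset.card_range]
        have heq : (Finset.range m).image ρ = Finset.Icc 1 m := by
          apply Finset.eq_of_subset_of_card_le hsub
          rw [hcard, Nat.card_Icc]
          omega
        have : v ∈ (Finset.range m).image ρ := by
          rw [heq, Finset.mem_Icc]; exact ⟨h1, h2⟩
        rw [Finset.mem_image] at this
        obtain ⟨i, hi, he⟩ := this
        exact ⟨i, Finset.mem_range.mp hi, he⟩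
      set inv : ℕ → ℕ := fun v => if h : ∃ i, i < m ∧ ρ i = v then h.choose else 0 with hinv_def
      have hinv : ∀ v, 1 ≤ v → v ≤ m → inv v < m ∧ ρ (inv v) = v := by
        intro v h1 h2
        have hex : ∃ i, i < m ∧ ρ i = v := hρsurj v h1 h2
        simp only [hinv_def, dif_pos hex]
        exact hex.choose_spec
      have hinvρ : ∀ i, i < m → inv (ρ i) = i := by
        intro i hi
        have h := hinv (ρ i) (hρ1 i hi).1 (hρ1 i hi).2
        exact hρinj _ _ h.1 hi h.2
      -- the coordinate families
      set A : ℕ → ℤ := fun v => (u (inv v) : ℤ) with hA_def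
      set B : ℕ → ℤ := fun v => (u (inv v) : ℤ) + ((len (inv v) : ℤ) - 1) with hB_def
      set G : ℕ → ℤ := fun b => (c (b-1) : ℤ) with hG_def
      set D : ℕ → ℤ := fun b => (c b : ℤ) - 1 with hD_def
      set σ : ℕ → ℕ := fun b => ρ (b - 1) with hσ_def
      -- recursive sets
      have HY : ∀ i, ∃ Y : Finset (ℤ × ℤ), i < m →
          (permPoints (len i) (blockRestrict X (c i) (c (i+1) - 1)) ⊆ Y ∧
          (∀ p ∈ Y, 1 ≤ p.1 ∧ p.1 ≤ (len i : ℤ) ∧ 1 ≤ p.2 ∧ p.2 ≤ (len i : ℤ)) ∧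
          (∀ x y : ℤ, (x = 1 ∨ x = (len i : ℤ)) → (y = 1 ∨ y = (len i : ℤ)) → (x, y) ∈ Y) ∧
          Satisfied Y ∧
          Y.card ≤ 25 * (Nat.log 2 k + 1) * (len i - 1) + 1) := by
        intro i
        by_cases hi : i < m
        · have hperm : IsPermOn (len i) (blockRestrict X (c i) (c (i+1) - 1)) := by
            have := isPermOn_blockRestrict hX (hblocks i hi)
            have he : c (i+1) - 1 - c i + 1 = len i := by
              have := hmono i hi; simp only [hlen_def]; omega
            rwa [he] at this
          obtain ⟨Y, hY⟩ := IH i hi hperm (hlen1 i hi)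
          exact ⟨Y, fun _ => hY⟩
        · exact ⟨∅, fun h => absurd h hi⟩
      choose Ys hYs using HY
      set F : ℕ → Finset (ℤ × ℤ) := fun b =>
        (Ys (b-1)).image (fun p => (p.1 + ((u (b-1) : ℤ) - 1), p.2 + ((c (b-1) : ℤ) - 1)))
        with hF_def
      -- skeleton
      have hσr : ∀ b, 1 ≤ b → b ≤ m → 1 ≤ σ b ∧ σ b ≤ m := by
        intro b h1 h2
        simp only [hσ_def]
        exact hρ1 (b-1) (by omega)
      obtain ⟨W, hWbox, hWsat, hWskel, ⟨hWc1, hWc2, hWc3, hWc4⟩, hWcard⟩ :=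
        skel_exists m hm σ hσr
      -- glue hypotheses
      have hAB : ∀ a, 1 ≤ a → a ≤ m → A a ≤ B a := by
        intro a h1 h2
        have := hlen1 (inv a) (hinv a h1 h2).1
        simp only [hA_def, hB_def]
        omega
      have huord : ∀ a a', 1 ≤ a → a < a' → a' ≤ m → u (inv a) < u (inv a') := by
        intro a a' h1 h2 h3
        have hi := hinv a h1 (by omega)
        have hi' := hinv a' (by omega) h3
        rcases Nat.lt_or_ge (u (inv a)) (u (inv a')) with hlt | hge
        · exact hlt
        · exfalso
          rcases Nat.eq_or_lt_of_le hge with he | hlt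
          · have := hune (inv a) (inv a') hi.1 hi'.1 (by intro hc; rw [hc] at hi; omega)
            omega
          · have := hρmono (inv a') (inv a) hi'.1 hi.1 hlt
            omega
      have hsep : ∀ a a', 1 ≤ a → a < a' → a' ≤ m → B a < A a' := by
        intro a a' h1 h2 h3
        have hord := huord a a' h1 h2 h3
        have := hulb (inv a) (inv a') (hinv a h1 (by omega)).1 (hinv a' (by omega) h3).1 hord
        have := hlen1 (inv a) (hinv a h1 (by omega)).1
        simp only [hA_def, hB_def]
        omega
      have hGD : ∀ b, 1 ≤ b → b ≤ m → G b ≤ D b := by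
        intro b h1 h2
        have := hmono (b-1) (by omega)
        simp only [hG_def, hD_def]
        have he : b - 1 + 1 = b := by omega
        rw [he] at this
        omega
      have htsep : ∀ b b', 1 ≤ b → b < b' → b' ≤ m → D b < G b' := by
        intro b b' h1 h2 h3
        have := hmono' (b'-1) (by omega) b (by omega)
        simp only [hG_def, hD_def]
        omega
      have hσinj : ∀ b b', 1 ≤ b → b ≤ m → 1 ≤ b' → b' ≤ m → σ b = σ b' → b = b' := by
        intro b b' h1 h2 h3 h4 he
        simp only [hσ_def] at he
        have := hρinj (b-1) (b'-1) (by omega) (by omega) he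
        omega
      have hAσ : ∀ b, 1 ≤ b → b ≤ m → A (σ b) = (u (b-1) : ℤ) := by
        intro b h1 h2
        simp only [hA_def, hσ_def]
        rw [hinvρ (b-1) (by omega)]
      have hBσ : ∀ b, 1 ≤ b → b ≤ m → B (σ b) = (u (b-1) : ℤ) + ((len (b-1) : ℤ) - 1) := by
        intro b h1 h2
        simp only [hB_def, hσ_def]
        rw [hinvρ (b-1) (by omega)]
      have hFbox : ∀ b, 1 ≤ b → b ≤ m → ∀ p ∈ F b,
          A (σ b) ≤ p.1 ∧ p.1 ≤ B (σ b) ∧ G b ≤ p.2 ∧ p.2 ≤ D b := by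
        intro b h1 h2 p hp
        simp only [hF_def, Finset.mem_image] at hp
        obtain ⟨p0, hp0, rfl⟩ := hp
        have hbox := (hYs (b-1) (by omega)).2.1 p0 hp0
        rw [hAσ b h1 h2, hBσ b h1 h2]
        simp only [hG_def, hD_def]
        have hcc := hmono (b-1) (by omega)
        have he : b - 1 + 1 = b := by omega
        rw [he] at hcc
        have hlb := hlen1 (b-1) (by omega)
        have hlen_e : (len (b-1) : ℤ) = (c b : ℤ) - (c (b-1) : ℤ) := by
          simp only [hlen_def]
          rw [he]
          omega
        refine ⟨?_, ?_, ?_, ?_⟩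
        · have := hbox.1
          omega
        · have := hbox.2.1
          omega
        · have := hbox.2.2.1
          omega
        · have := hbox.2.2.2
          omega
      have hFsat : ∀ b, 1 ≤ b → b ≤ m → Satisfied (F b) := by
        intro b h1 h2
        exact satisfied_translate _ _ _ (hYs (b-1) (by omega)).2.2.2.1
      have hFcorner : ∀ b, 1 ≤ b → b ≤ m → ∀ x y : ℤ,
          (x = A (σ b) ∨ x = B (σ b)) → (y = G b ∨ y = D b) → (x, y) ∈ F b := by
        intro b h1 h2 x y hx hy
        have hcor := (hYs (b-1) (by omega)).2.2.1
        have hcc := hmono (b-1) (by omega)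
        have he : b - 1 + 1 = b := by omega
        rw [he] at hcc
        have hlb := hlen1 (b-1) (by omega)
        set x0 : ℤ := if x = A (σ b) then 1 else (len (b-1) : ℤ) with hx0
        set y0 : ℤ := if y = G b then 1 else (len (b-1) : ℤ) with hy0
        have hx0or : x0 = 1 ∨ x0 = (len (b-1) : ℤ) := by
          simp only [hx0]; split_ifs <;> simp
        have hy0or : y0 = 1 ∨ y0 = (len (b-1) : ℤ) := by
          simp only [hy0]; split_ifs <;> simp
        have hmem := hcor x0 y0 hx0or hy0or
        simp only [hF_def, Finset.mem_image]
        refine ⟨(x0, y0), hmem, ?_⟩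
        rw [Prod.mk.injEq]
        have hA' := hAσ b h1 h2
        have hB' := hBσ b h1 h2
        have hlen_e : (len (b-1) : ℤ) = (c b : ℤ) - (c (b-1) : ℤ) := by
          simp only [hlen_def]
          rw [he]
          omega
        constructor
        · simp only [hx0]
          split_ifs with hcase
          · rw [hcase, hA']; ring
          · rcases hx with hx | hx
            · exact absurd hx hcase
            · rw [hx, hB']; ring
        · simp only [hy0]
          split_ifs with hcase
          · rw [hcase]; simp only [hG_def]; ring
          · rcases hy with hy | hy
            · exact absurd hy hcase
            · rw [hy]; simp only [hD_def]; omega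
      obtain ⟨U, hFsubU, hUsat, hUbox, hUcorners, hUcard⟩ :=
        glue m hm A B G D σ W F hAB hsep hGD htsep hσr hσinj hWbox hWsat hWskel
          hWc1 hWc2 hWc3 hWc4 hFbox hFsat hFcorner
      -- boundary values
      have hfind : ∀ t, 1 ≤ t → t ≤ n → ∃ i, i < m ∧ c i ≤ t ∧ t ≤ c (i+1) - 1 := by
        intro t h1 h2
        have haux : ∀ j, j ≤ m → t < c j → ∃ i, i < j ∧ c i ≤ t ∧ t < c (i+1) := by
          intro j
          induction j with
          | zero => intro _ hlt; rw [hc0] at hlt; omega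
          | succ j ihj =>
              intro hj hlt
              rcases Nat.lt_or_ge t (c j) with hlt2 | hge2
              · obtain ⟨i, hi1, hi2, hi3⟩ := ihj (by omega) hlt2
                exact ⟨i, by omega, hi2, hi3⟩
              · exact ⟨j, by omega, hge2, hlt⟩
        obtain ⟨i, hi1, hi2, hi3⟩ := haux m le_rfl (by omega)
        exact ⟨i, hi1, hi2, by omega⟩
      have hA1 : A 1 = 1 := by
        obtain ⟨t, ht, hXt⟩ := hX.surjOn (Set.mem_Icc.mpr ⟨le_rfl, hn⟩ : (1:ℕ) ∈ Set.Icc 1 n)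
        simp only [Set.mem_Icc] at ht
        obtain ⟨i, hi, hi2, hi3⟩ := hfind t ht.1 ht.2
        have hv := hval i hi t hi2 hi3
        rw [hXt] at hv
        have hui : u i = 1 := by
          have := (hu1 i hi).1; omega
        have hinv1 := hinv 1 le_rfl hm
        have : ¬ u i < u (inv 1) := by
          intro hlt
          have hmem : i ∈ (Finset.range m).filter (fun j => u j < u (inv 1)) :=
            Finset.mem_filter.mpr ⟨Finset.mem_range.mpr hi, hlt⟩
          have := Finset.card_pos.mpr ⟨i, hmem⟩
          have h2 := hinv1.2
          simp only [hρ_def] at h2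
          omega
        have hge1 := (hu1 (inv 1) hinv1.1).1
        simp only [hA_def]
        omega
      have hBm : B m = (n : ℤ) := by
        obtain ⟨t, ht, hXt⟩ := hX.surjOn (Set.mem_Icc.mpr ⟨hn, le_rfl⟩ : n ∈ Set.Icc 1 n)
        simp only [Set.mem_Icc] at ht
        obtain ⟨i, hi, hi2, hi3⟩ := hfind t ht.1 ht.2
        have hv := hval i hi t hi2 hi3
        rw [hXt] at hv
        have htop : u i + (len i - 1) = n := by
          have := (hu1 i hi).2; omega
        have hρi : ρ i = m := by
          have hsub : (Finset.range m).erase i ⊆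
              (Finset.range m).filter (fun j => u j < u i) := by
            intro j hj
            rw [Finset.mem_erase] at hj
            rw [Finset.mem_filter]
            refine ⟨hj.2, ?_⟩
            by_contra hcon
            have hne := hune i j hi (Finset.mem_range.mp hj.2) (fun he => hj.1 he.symm)
            have hlt : u i < u j := by omega
            have := hulb i j hi (Finset.mem_range.mp hj.2) hlt
            have := (hu1 j (Finset.mem_range.mp hj.2)).2
            have := hlen1 j (Finset.mem_range.mp hj.2)
            omega
          have hc1 := Finset.card_le_card hsub
          rw [Finset.card_erase_of_mem (Finset.mem_range.mpr hi), Finset.card_range] at hc1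
          have := hρ1 i hi
          simp only [hρ_def] at *
          omega
        have hinvm : inv m = i := by
          have h := hinv m hm le_rfl
          exact hρinj _ _ h.1 hi (h.2.trans hρi.symm)
        simp only [hB_def]
        rw [hinvm]
        have := hlen1 i hi
        omega
      have hG1 : G 1 = 1 := by
        simp only [hG_def]
        norm_num [hc0]
      have hDm : D m = (n : ℤ) := by
        simp only [hD_def]
        rw [hcm]
        push_cast
        ring
      -- assemble
      refine ⟨U, ?_, ?_, ?_, hUsat, ?_⟩
      · -- permPoints ⊆ U
        intro p hp
        simp only [permPoints, Finset.mem_image, Finset.mem_Icc] at hp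
        obtain ⟨t, ht, rfl⟩ := hp
        obtain ⟨i, hi, hi2, hi3⟩ := hfind t ht.1 ht.2
        have hv := hval i hi t hi2 hi3
        apply hFsubU (i+1) (by omega) (by omega)
        simp only [hF_def, Finset.mem_image]
        have hb1 : i + 1 - 1 = i := by omega
        rw [hb1]
        refine ⟨((↑(X t + 1 - u i) : ℤ), (↑(t - c i + 1) : ℤ)), ?_, ?_⟩
        · apply (hYs i hi).1
          simp only [permPoints, Finset.mem_image, Finset.mem_Icc]
          refine ⟨t - c i + 1, ⟨by omega, by simp only [hlen_def]; omega⟩, ?_⟩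
          rw [Prod.mk.injEq]
          constructor
          · simp only [blockRestrict]
            have husInf : sInf (X '' Set.Icc (c i) (c (i+1) - 1)) = u i := by
              simp only [hu_def]
            have he : c i + (t - c i + 1) - 1 = t := by omega
            rw [he, husInf]
          · rfl
        · rw [Prod.mk.injEq]
          constructor
          · simp only; omega
          · simp only; omega
      · -- box
        intro p hp
        have := hUbox p hp
        rw [hA1, hBm, hG1, hDm] at this
        exact this
      · -- corners
        intro x y h1 h2
        apply hUcorners
        · rw [hA1, hBm]; exact h1
        · rw [hG1, hDm]; exact h2
      · -- cardinality
        set L : ℕ := Nat.log 2 k + 1 with hL_def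
        have hLm : Nat.log 2 m + 1 ≤ L := by
          simp only [hL_def]
          have := Nat.log_mono_right (b := 2) hmk
          omega
        have hL1 : 1 ≤ L := by simp only [hL_def]; omega
        have hFb : ∀ b, 1 ≤ b → b ≤ m → (F b).card ≤ 25 * L * (len (b-1) - 1) + 1 := by
          intro b h1 h2
          calc (F b).card ≤ (Ys (b-1)).card := Finset.card_image_le
            _ ≤ 25 * L * (len (b-1) - 1) + 1 := (hYs (b-1) (by omega)).2.2.2.2
        have hsum1 : ∑ b ∈ Finset.Icc 1 m, (F b).card ≤
            ∑ b ∈ Finset.Icc 1 m, (25 * L * (len (b-1) - 1) + 1) :=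
          Finset.sum_le_sum (fun b hb => by
            rw [Finset.mem_Icc] at hb
            exact hFb b hb.1 hb.2)
        have hsum2 : ∑ b ∈ Finset.Icc 1 m, (25 * L * (len (b-1) - 1) + 1) =
            ∑ i ∈ Finset.range m, (25 * L * (len i - 1) + 1) := by
          rw [← Finset.Ico_add_one_right_eq_Icc, Finset.sum_Ico_eq_sum_range]
          have e1 : m + 1 - 1 = m := by omega
          rw [e1]
          apply Finset.sum_congr rfl
          intro i _
          have e2 : 1 + i - 1 = i := by omega
          rw [e2]
        have htel : ∀ j, j ≤ m → ∑ i ∈ Finset.range j, len i = c j - c 0 := by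
          intro j
          induction j with
          | zero => simp
          | succ j ihj =>
              intro hj
              rw [Finset.sum_range_succ, ihj (by omega)]
              have h1 := hmono j (by omega)
              have h2 := hmono' j (by omega) 0 (by omega)
              simp only [hlen_def]
              omega
        have hsumlen : ∑ i ∈ Finset.range m, len i = n := by
          rw [htel m le_rfl, hcm, hc0]
          omega
        have hsumlen1 : ∑ i ∈ Finset.range m, (len i - 1) = n - m := by
          have he : ∀ i ∈ Finset.range m, len i - 1 + 1 = len i := by
            intro i hi
            have := hlen1 i (Finset.mem_range.mp hi)
            omega
          have h2 : ∑ i ∈ Finset.range m, (len i - 1 + 1) = ∑ i ∈ Finset.range m, len i :=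
            Finset.sum_congr rfl he
          rw [Finset.sum_add_distrib, Finset.sum_const, Finset.card_range, smul_eq_mul,
            mul_one] at h2
          omega
        have hsum3 : ∑ i ∈ Finset.range m, (25 * L * (len i - 1) + 1) =
            25 * L * (n - m) + m := by
          rw [Finset.sum_add_distrib, ← Finset.mul_sum, hsumlen1, Finset.sum_const,
            Finset.card_range, smul_eq_mul, mul_one]
        have hWc : 4 * W.card ≤ 12 * m * (Nat.log 2 m + 1) := by
          calc 4 * W.card ≤ 4 * (3 * m * (Nat.log 2 m + 1)) := Nat.mul_le_mul_left 4 hWcard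
            _ = 12 * m * (Nat.log 2 m + 1) := by ring
        have key : ∀ Q P R S : ℕ, R ≤ 24 * P → m ≤ P + 1 → S ≤ R →
            Q + m + S ≤ Q + 25 * P + 1 := by
          intro Q P R S h1 h2 h3
          omega
        have h12 : 12 * m * (Nat.log 2 m + 1) ≤ 24 * ((m-1) * L) := by
          calc 12 * m * (Nat.log 2 m + 1) ≤ 12 * m * L := Nat.mul_le_mul_left _ hLm
            _ ≤ (24 * (m-1)) * L := Nat.mul_le_mul_right L (by omega)
            _ = 24 * ((m-1) * L) := by ring
        have hm1 : m ≤ (m-1) * L + 1 := by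
          have h0 : (m-1) * 1 ≤ (m-1) * L := Nat.mul_le_mul_left _ hL1
          omega
        calc U.card ≤ (∑ b ∈ Finset.Icc 1 m, (F b).card) + 4 * W.card := hUcard
          _ ≤ (25 * L * (n - m) + m) + 4 * W.card :=
              Nat.add_le_add_right (hsum1.trans (le_of_eq (hsum2.trans hsum3))) _
          _ ≤ (25 * L * (n - m) + m) + 12 * m * (Nat.log 2 m + 1) :=
              Nat.add_le_add_left hWc _
          _ = 25 * L * (n - m) + m + 12 * m * (Nat.log 2 m + 1) := by ring
          _ ≤ 25 * L * (n - m) + 25 * ((m-1) * L) + 1 :=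
              key (25 * L * (n - m)) ((m-1) * L) (24 * ((m-1) * L))
                (12 * m * (Nat.log 2 m + 1)) le_rfl hm1 h12
          _ = 25 * L * (n - 1) + 1 := by
              have he : n - 1 = (n - m) + (m - 1) := by omega
              rw [he, Nat.mul_add]
              ring



end KD

/-- There is a constant `C` such that for every `k ≥ 2`, `n ≥ 1`, and every
`k`-decomposable permutation `X ∈ S_n`, `OPT(X) ≤ C · n · log₂(k+1)`. -/
theorem opt_kDecomposable_bound :
    ∃ C : ℝ, ∀ k : ℕ, 2 ≤ k → ∀ n : ℕ, 1 ≤ n → ∀ X : ℕ → ℕ, IsPermOn n X →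
      KDecomposable k n X →
      (OPT (permPoints n X) : ℝ) ≤ C * n * Real.logb 2 ((k : ℝ) + 1) := by
  refine ⟨52, ?_⟩
  intro k hk n hn X hperm hdec
  obtain ⟨Y, hsub, _, _, hsat, hcard⟩ := KD.kdec_build k hk n X hdec hperm hn
  have hOPT : OPT (permPoints n X) ≤ Y.card := Nat.sInf_le ⟨Y, hsub, hsat, rfl⟩
  set L : ℕ := Nat.log 2 k + 1 with hL_def
  have hL1 : 1 ≤ L := by omega
  have key : ∀ P Q : ℕ, Q ≤ 25 * P → 1 ≤ P → Q + 1 ≤ 25 * P + P := by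
    intro P Q h1 h2; omega
  have h1 : OPT (permPoints n X) ≤ 26 * L * n := by
    have hstep : 25 * L * (n - 1) + 1 ≤ 26 * L * n := by
      have e2 : 25 * L * (n - 1) ≤ 25 * (L * n) := by
        calc 25 * L * (n - 1) = 25 * (L * (n - 1)) := by ring
          _ ≤ 25 * (L * n) := Nat.mul_le_mul_left _ (Nat.mul_le_mul_left _ (by omega))
      have h3 : 1 ≤ L * n := Nat.one_le_iff_ne_zero.mpr (by positivity)
      calc 25 * L * (n - 1) + 1 ≤ 25 * (L * n) + L * n := key (L * n) _ e2 h3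
        _ = 26 * L * n := by ring
    exact hOPT.trans (hcard.trans hstep)
  have hcast : (OPT (permPoints n X) : ℝ) ≤ 26 * (L : ℝ) * (n : ℝ) := by
    have := h1
    exact_mod_cast this
  have hlogb1 : (1 : ℝ) ≤ Real.logb 2 ((k : ℝ) + 1) := by
    have h2 : Real.logb 2 2 = 1 := Real.logb_self_eq_one (by norm_num)
    rw [← h2]
    apply Real.logb_le_logb_of_le (by norm_num) (by norm_num)
    have : (2 : ℝ) ≤ (k : ℝ) := by exact_mod_cast hk
    linarith
  have hlog2 : ((Nat.log 2 k : ℕ) : ℝ) ≤ Real.logb 2 ((k : ℝ) + 1) := by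
    have hpow : ((2 : ℕ) ^ (Nat.log 2 k) : ℕ) ≤ k := Nat.pow_log_le_self 2 (by omega)
    have hpowR : (2 : ℝ) ^ (Nat.log 2 k) ≤ (k : ℝ) := by exact_mod_cast hpow
    have he : ((Nat.log 2 k : ℕ) : ℝ) = Real.logb 2 ((2 : ℝ) ^ (Nat.log 2 k)) := by
      rw [Real.logb_pow, Real.logb_self_eq_one (by norm_num)]
      ring
    rw [he]
    apply Real.logb_le_logb_of_le (by norm_num) (by positivity)
    linarith
  have hLlog : (L : ℝ) ≤ 2 * Real.logb 2 ((k : ℝ) + 1) := by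
    have : (L : ℝ) = ((Nat.log 2 k : ℕ) : ℝ) + 1 := by
      rw [hL_def]; push_cast; ring
    rw [this]
    linarith
  have hn0 : (0 : ℝ) ≤ (n : ℝ) := by positivity
  calc (OPT (permPoints n X) : ℝ) ≤ 26 * (L : ℝ) * (n : ℝ) := hcast
    _ ≤ 26 * (2 * Real.logb 2 ((k : ℝ) + 1)) * (n : ℝ) := by
        apply mul_le_mul_of_nonneg_right _ hn0
        apply mul_le_mul_of_nonneg_left hLlog (by norm_num)
    _ = 52 * (n : ℝ) * Real.logb 2 ((k : ℝ) + 1) := by ring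
end
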